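/- arXiv:math/0701725 — 3 statements merged into one kernel-verified Lean document; each statement's English description precedes it below -/
import Mathlib

section
/- Let X be a δ-hyperbolic geodesic metric space and let H be a collection of C-quasiconvex, D-separated subsets of X (i.e. each H ∈ H is C-quasiconvex and any two distinct members are at distance at least D > 0 from each other). Then the electric space X_el obtained by coning off each H ∈ H (attaching H × [0,1] with H × {1} collapsed to a point, each edge of length 1/2) is Δ-hyperbolic, where Δ depends only on δ, C, D. -/
open Metric Set

/-- The Gromov product of `x` and `y` with respect to the basepoint `o`. -/
noncomputable def gromovProd {X : Type*} [MetricSpace X] (o x y : X) : ℝ :=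
  (dist o x + dist o y - dist x y) / 2

/-- `X` is δ-hyperbolic in the sense of Gromov (four-point condition). -/
def DeltaHyperbolic (X : Type*) [MetricSpace X] (δ : ℝ) : Prop :=
  ∀ o x y z : X, min (gromovProd o x y) (gromovProd o y z) ≤ gromovProd o x z + δ

/-- `X` is a geodesic metric space. -/
def GeodesicSpace (X : Type*) [MetricSpace X] : Prop :=
  ∀ x y : X, ∃ f : ℝ → X, f 0 = x ∧ f (dist x y) = y ∧
    ∀ s ∈ Icc (0:ℝ) (dist x y), ∀ t ∈ Icc (0:ℝ) (dist x y), dist (f s) (f t) = |s - t|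

/-- `r` is a (K,ε)-quasigeodesic on the parameter set `S`. -/
def QuasigeodesicOn {X : Type*} [MetricSpace X] (K ε : ℝ) (S : Set ℝ) (r : ℝ → X) : Prop :=
  ∀ s ∈ S, ∀ t ∈ S,
    (1/K) * |s - t| - ε ≤ dist (r s) (r t) ∧ dist (r s) (r t) ≤ K * |s - t| + ε


/-- A geodesic from `x` to `y`, parametrized by arc length on `[0, dist x y]`. -/
def IsGeodesicFrom {X : Type*} [MetricSpace X] (f : ℝ → X) (x y : X) : Prop :=
  f 0 = x ∧ f (dist x y) = y ∧
  ∀ s ∈ Icc (0:ℝ) (dist x y), ∀ t ∈ Icc (0:ℝ) (dist x y), dist (f s) (f t) = |s - t|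

/-- `A` is a `C`-quasiconvex subset: geodesics between points of `A` stay within
(hyperbolic) distance `C` of `A`. -/
def QuasiconvexSubset {X : Type*} [MetricSpace X] (C : ℝ) (A : Set X) : Prop :=
  ∀ x ∈ A, ∀ y ∈ A, ∀ f : ℝ → X, IsGeodesicFrom f x y →
    ∀ t ∈ Icc (0:ℝ) (dist x y), infDist (f t) A ≤ C

/-- The members of `𝓗` are pairwise `D`-separated. -/
def SeparatedFamily {X : Type*} [MetricSpace X] (D : ℝ) (𝓗 : Set (Set X)) : Prop :=
  ∀ A ∈ 𝓗, ∀ B ∈ 𝓗, A ≠ B → ∀ a ∈ A, ∀ b ∈ B, D ≤ dist a b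

open Classical in
/-- Cost of one step of a chain in the electric (coned-off) space: travel inside an
electrocuted set is free up to the bounded cone diameter 1, otherwise pay the distance. -/
noncomputable def stepCost {X : Type*} [MetricSpace X] (𝓗 : Set (Set X)) (x y : X) : ℝ :=
  if ∃ A ∈ 𝓗, x ∈ A ∧ y ∈ A then min 1 (dist x y) else dist x y

/-- The electric (coned-off) pseudo-metric obtained by electrocuting each member of `𝓗`:
the infimum of chain costs. -/
noncomputable def elDist {X : Type*} [MetricSpace X] (𝓗 : Set (Set X)) (x y : X) : ℝ :=
  sInf {d : ℝ | ∃ n : ℕ, ∃ c : ℕ → X, c 0 = x ∧ c n = y ∧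
    d = ∑ i ∈ Finset.range n, stepCost 𝓗 (c i) (c (i + 1))}

/-- The Gromov product in the electric pseudo-metric. -/
noncomputable def elGromovProd {X : Type*} [MetricSpace X] (𝓗 : Set (Set X)) (o x y : X) : ℝ :=
  (elDist 𝓗 o x + elDist 𝓗 o y - elDist 𝓗 x y) / 2

/-- The electric space is Δ-hyperbolic (four-point condition for `elDist`). -/
def ElDeltaHyperbolic (X : Type*) [MetricSpace X] (𝓗 : Set (Set X)) (Δ : ℝ) : Prop :=
  ∀ o x y z : X,
    min (elGromovProd 𝓗 o x y) (elGromovProd 𝓗 o y z) ≤ elGromovProd 𝓗 o x z + Δ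

namespace ELProof
set_option linter.unusedSectionVars false

open Classical Finset

variable {X : Type*} [MetricSpace X] (𝓗 : Set (Set X))

/-! ### stepCost basics -/

lemma sc_nonneg (x y : X) : 0 ≤ stepCost 𝓗 x y := by
  unfold stepCost; split
  · exact le_min zero_le_one dist_nonneg
  · exact dist_nonneg

lemma sc_le_dist (x y : X) : stepCost 𝓗 x y ≤ dist x y := by
  unfold stepCost; split
  · exact min_le_right _ _
  · exact le_rfl

lemma sc_comm (x y : X) : stepCost 𝓗 x y = stepCost 𝓗 y x := by
  unfold stepCost
  have h : (∃ A ∈ 𝓗, x ∈ A ∧ y ∈ A) ↔ (∃ A ∈ 𝓗, y ∈ A ∧ x ∈ A) := by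
    constructor <;> rintro ⟨A, hA, h1, h2⟩ <;> exact ⟨A, hA, h2, h1⟩
  split_ifs with h1 h2 h2
  · rw [dist_comm]
  · exact absurd (h.mp h1) h2
  · exact absurd (h.mpr h2) h1
  · rw [dist_comm]

lemma sc_eq_dist_of_lt_one {x y : X} (h : stepCost 𝓗 x y < 1) :
    stepCost 𝓗 x y = dist x y := by
  unfold stepCost at *; split_ifs at h ⊢ with h1
  · rcases min_cases 1 (dist x y) with ⟨he, _⟩ | ⟨he, _⟩
    · rw [he] at h; linarith
    · exact he
  · rfl

lemma sc_cases (x y : X) : stepCost 𝓗 x y = dist x y ∨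
    (stepCost 𝓗 x y = 1 ∧ 1 ≤ dist x y ∧ ∃ A ∈ 𝓗, x ∈ A ∧ y ∈ A) := by
  unfold stepCost; split_ifs with h1
  · rcases min_cases 1 (dist x y) with ⟨he, hd⟩ | ⟨he, _⟩
    · exact Or.inr ⟨he, hd, h1⟩
    · exact Or.inl he
  · exact Or.inl rfl

lemma sc_le_one_of_mem {A : Set X} {x y : X} (hA : A ∈ 𝓗) (hx : x ∈ A) (hy : y ∈ A) :
    stepCost 𝓗 x y ≤ 1 := by
  unfold stepCost; split_ifs with h1
  · exact min_le_left _ _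
  · exact absurd ⟨A, hA, hx, hy⟩ h1

/-! ### cost of a chain given as a list -/

noncomputable def ccost : List X → ℝ
  | [] => 0
  | [_] => 0
  | a :: b :: t => stepCost 𝓗 a b + ccost (b :: t)

@[simp] lemma ccost_nil : ccost 𝓗 ([] : List X) = 0 := rfl
@[simp] lemma ccost_single (a : X) : ccost 𝓗 [a] = 0 := rfl
@[simp] lemma ccost_cons_cons (a b : X) (t : List X) :
    ccost 𝓗 (a :: b :: t) = stepCost 𝓗 a b + ccost 𝓗 (b :: t) := rfl

lemma ccost_nonneg : ∀ l : List X, 0 ≤ ccost 𝓗 l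
  | [] => le_rfl
  | [_] => le_rfl
  | _ :: b :: t => add_nonneg (sc_nonneg _ _ _) (ccost_nonneg (b :: t))

lemma ccost_cons (a : X) {l : List X} {b : X} (h : l.head? = some b) :
    ccost 𝓗 (a :: l) = stepCost 𝓗 a b + ccost 𝓗 l := by
  cases l with
  | nil => simp at h
  | cons c t => simp only [List.head?_cons, Option.some.injEq] at h; subst h; rfl

/-- master gluing lemma -/
lemma ccost_glue (l₁ : List X) (b : X) (l₂ : List X) :
    ccost 𝓗 (l₁ ++ b :: l₂) = ccost 𝓗 (l₁ ++ [b]) + ccost 𝓗 (b :: l₂) := by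
  induction l₁ with
  | nil => simp
  | cons a t ih =>
    cases t with
    | nil => simp
    | cons c t' =>
      simp only [List.cons_append, ccost_cons_cons] at *
      rw [ih]; ring

lemma ccost_snoc : ∀ {l : List X} {y : X}, l.getLast? = some y → ∀ z : X,
    ccost 𝓗 (l ++ [z]) = ccost 𝓗 l + stepCost 𝓗 y z := by
  intro l
  induction l with
  | nil => intro y h; simp at h
  | cons a t ih =>
    intro y h z
    cases t with
    | nil =>
      simp only [List.getLast?_singleton, Option.some.injEq] at h; subst h; simp
    | cons c t' =>
      rw [List.getLast?_cons_cons] at h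
      show stepCost 𝓗 a c + ccost 𝓗 ((c :: t') ++ [z]) = _
      rw [ih h z, ccost_cons_cons]; ring

lemma ccost_reverse : ∀ l : List X, ccost 𝓗 l.reverse = ccost 𝓗 l
  | [] => rfl
  | [_] => rfl
  | a :: b :: t => by
    rw [List.reverse_cons, ccost_snoc 𝓗 (by rw [List.getLast?_reverse]; rfl) a,
      ccost_reverse (b :: t), ccost_cons_cons, sc_comm, add_comm]

/-! ### chains -/

def IsChainL (x y : X) (l : List X) : Prop := l.head? = some x ∧ l.getLast? = some y

lemma IsChainL.ne_nil {x y : X} {l : List X} (h : IsChainL x y l) : l ≠ [] := by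
  rintro rfl; simp [IsChainL] at h

lemma isChainL_single (a : X) : IsChainL a a [a] := ⟨rfl, rfl⟩

lemma isChainL_pair (x y : X) : IsChainL x y [x, y] := ⟨rfl, rfl⟩

lemma IsChainL.reverse {x y : X} {l : List X} (h : IsChainL x y l) :
    IsChainL y x l.reverse :=
  ⟨by rw [List.head?_reverse]; exact h.2, by rw [List.getLast?_reverse]; exact h.1⟩

lemma IsChainL.mem_head {x y : X} {l : List X} (h : IsChainL x y l) : x ∈ l := by
  cases l with
  | nil => simp [IsChainL] at h
  | cons a t =>
    obtain ⟨h1, _⟩ := h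
    simp only [List.head?_cons, Option.some.injEq] at h1; subst h1; exact List.mem_cons_self

lemma IsChainL.mem_last {x y : X} {l : List X} (h : IsChainL x y l) : y ∈ l := by
  have := h.reverse.mem_head
  simpa using this

lemma IsChainL.tail_chain {x y b : X} {t : List X} (h : IsChainL x y (x :: b :: t)) :
    IsChainL b y (b :: t) := by
  refine ⟨rfl, ?_⟩
  rw [← List.getLast?_cons_cons (a := x)]
  exact h.2

lemma getLast?_some_split : ∀ {l : List X} {y : X}, l.getLast? = some y →
    ∃ p, l = p ++ [y] := by
  intro l
  induction l with
  | nil => intro y h; simp at h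
  | cons a t ih =>
    intro y h
    cases t with
    | nil =>
      simp only [List.getLast?_singleton, Option.some.injEq] at h; subst h
      exact ⟨[], rfl⟩
    | cons c t' =>
      rw [List.getLast?_cons_cons] at h
      obtain ⟨p, hp⟩ := ih h
      exact ⟨a :: p, by rw [List.cons_append, ← hp]⟩

/-! ### relation to elDist -/

lemma chain_of_fn : ∀ (n : ℕ) (c : ℕ → X), ∃ l : List X, IsChainL (c 0) (c n) l ∧
    ccost 𝓗 l = ∑ i ∈ Finset.range n, stepCost 𝓗 (c i) (c (i + 1)) := by
  intro n
  induction n with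
  | zero => intro c; exact ⟨[c 0], isChainL_single _, by simp⟩
  | succ n ih =>
    intro c
    obtain ⟨l, hl, hc⟩ := ih c
    refine ⟨l ++ [c (n + 1)], ⟨?_, by simp⟩, ?_⟩
    · rw [List.head?_append_of_ne_nil _ hl.ne_nil]
      exact hl.1
    · rw [ccost_snoc 𝓗 hl.2, hc, Finset.sum_range_succ]

lemma fn_of_chain {x y : X} : ∀ {l : List X}, IsChainL x y l →
    ∃ (n : ℕ) (c : ℕ → X), c 0 = x ∧ c n = y ∧
      ccost 𝓗 l = ∑ i ∈ Finset.range n, stepCost 𝓗 (c i) (c (i + 1)) := by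
  intro l
  induction l generalizing x with
  | nil => intro h; exact absurd rfl h.ne_nil
  | cons a t ih =>
    intro h
    have hx : a = x := by
      have := h.1; simp only [List.head?_cons, Option.some.injEq] at this; exact this
    cases t with
    | nil =>
      have hy : a = y := by
        have := h.2; simp only [List.getLast?_singleton, Option.some.injEq] at this
        exact this
      exact ⟨0, fun _ => a, hx, hy, by simp⟩
    | cons b t' =>
      have hch : IsChainL b y (b :: t') := ⟨rfl, by rw [← List.getLast?_cons_cons (a := a)]; exact h.2⟩
      obtain ⟨n, c, hc0, hcn, hsum⟩ := ih hch
      refine ⟨n + 1, fun i => if i = 0 then a else c (i - 1), hx, by simp [hcn], ?_⟩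
      rw [Finset.sum_range_succ']
      simp only [Nat.succ_ne_zero, if_false, Nat.add_sub_cancel, if_pos rfl]
      rw [ccost_cons_cons, hsum, hc0, add_comm]
      norm_num

/-- the defining set of `elDist` -/
def elSet (x y : X) : Set ℝ :=
  {d : ℝ | ∃ n : ℕ, ∃ c : ℕ → X, c 0 = x ∧ c n = y ∧
    d = ∑ i ∈ Finset.range n, stepCost 𝓗 (c i) (c (i + 1))}

lemma elDist_eq (x y : X) : elDist 𝓗 x y = sInf (elSet 𝓗 x y) := rfl

lemma elSet_nonneg {x y : X} {d : ℝ} (h : d ∈ elSet 𝓗 x y) : 0 ≤ d := by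
  obtain ⟨n, c, _, _, rfl⟩ := h
  exact Finset.sum_nonneg fun i _ => sc_nonneg 𝓗 _ _

lemma elSet_nonempty (x y : X) : (elSet 𝓗 x y).Nonempty := by
  refine ⟨_, 1, fun i => if i = 0 then x else y, rfl, rfl, rfl⟩

lemma elSet_bddBelow (x y : X) : BddBelow (elSet 𝓗 x y) :=
  ⟨0, fun _ h => elSet_nonneg 𝓗 h⟩

lemma elDist_nonneg (x y : X) : 0 ≤ elDist 𝓗 x y :=
  Real.sInf_nonneg fun _ h => elSet_nonneg 𝓗 h

lemma elDist_le_ccost {x y : X} {l : List X} (h : IsChainL x y l) :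
    elDist 𝓗 x y ≤ ccost 𝓗 l := by
  obtain ⟨n, c, hc0, hcn, hsum⟩ := fn_of_chain 𝓗 h
  exact csInf_le (elSet_bddBelow 𝓗 x y) ⟨n, c, hc0, hcn, hsum⟩

lemma exists_chain_lt {x y : X} {r : ℝ} (h : elDist 𝓗 x y < r) :
    ∃ l, IsChainL x y l ∧ ccost 𝓗 l < r := by
  obtain ⟨d, hd, hdr⟩ := exists_lt_of_csInf_lt (elSet_nonempty 𝓗 x y) h
  obtain ⟨n, c, hc0, hcn, rfl⟩ := hd
  obtain ⟨l, hl, hc⟩ := chain_of_fn 𝓗 n c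
  rw [hc0, hcn] at hl
  exact ⟨l, hl, by rw [hc]; exact hdr⟩

lemma elDist_le_sc (x y : X) : elDist 𝓗 x y ≤ stepCost 𝓗 x y := by
  have := elDist_le_ccost 𝓗 (isChainL_pair x y)
  simpa using this

lemma elDist_le_dist (x y : X) : elDist 𝓗 x y ≤ dist x y :=
  (elDist_le_sc 𝓗 x y).trans (sc_le_dist 𝓗 x y)

@[simp] lemma elDist_self (x : X) : elDist 𝓗 x x = 0 :=
  le_antisymm (by simpa using elDist_le_ccost 𝓗 (isChainL_single x)) (elDist_nonneg 𝓗 x x)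

lemma elDist_le_one_of_mem {A : Set X} {x y : X} (hA : A ∈ 𝓗) (hx : x ∈ A) (hy : y ∈ A) :
    elDist 𝓗 x y ≤ 1 :=
  (elDist_le_sc 𝓗 x y).trans (sc_le_one_of_mem 𝓗 hA hx hy)

lemma elDist_symm (x y : X) : elDist 𝓗 x y = elDist 𝓗 y x := by
  have key : ∀ a b : X, elDist 𝓗 a b ≤ elDist 𝓗 b a := by
    intro a b
    by_contra hcon
    push_neg at hcon
    obtain ⟨l, hl, hc⟩ := exists_chain_lt 𝓗 hcon
    have := elDist_le_ccost 𝓗 hl.reverse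
    rw [ccost_reverse] at this
    exact absurd (this.trans_lt hc) (lt_irrefl _)
  exact le_antisymm (key x y) (key y x)

/-! ### gluing chains and the triangle inequality -/

lemma glue_spec {x y z : X} {l₁ l₂ : List X} (h₁ : IsChainL x y l₁) (h₂ : IsChainL y z l₂) :
    IsChainL x z (l₁ ++ l₂.tail) ∧
    ccost 𝓗 (l₁ ++ l₂.tail) = ccost 𝓗 l₁ + ccost 𝓗 l₂ ∧
    (l₁ ++ l₂.tail).length + 1 = l₁.length + l₂.length ∧
    (∀ w ∈ l₁ ++ l₂.tail, w ∈ l₁ ∨ w ∈ l₂) := by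
  obtain ⟨t, rfl⟩ : ∃ t, l₂ = y :: t := by
    cases l₂ with
    | nil => exact absurd rfl h₂.ne_nil
    | cons c t =>
      have := h₂.1; simp only [List.head?_cons, Option.some.injEq] at this
      exact ⟨t, by rw [this]⟩
  obtain ⟨p, rfl⟩ := getLast?_some_split h₁.2
  refine ⟨⟨?_, ?_⟩, ?_, ?_, ?_⟩
  · rw [List.head?_append_of_ne_nil _ (by simp : p ++ [y] ≠ [])]
    exact h₁.1
  · show (p ++ [y] ++ (y :: t).tail).getLast? = some z
    rw [List.append_assoc]
    cases t with
    | nil => simpa using h₂.2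
    | cons c t' =>
      have he : [y] ++ (y :: c :: t').tail = y :: c :: t' := rfl
      rw [he, List.getLast?_append_of_ne_nil _ (by simp)]
      exact h₂.2
  · show ccost 𝓗 (p ++ [y] ++ t) = _
    rw [List.append_assoc]
    show ccost 𝓗 (p ++ y :: t) = _
    rw [ccost_glue]
  · simp; omega
  · intro w hw
    rcases List.mem_append.mp hw with hw | hw
    · exact Or.inl hw
    · exact Or.inr (List.mem_cons_of_mem _ hw)

lemma elDist_triangle (x y z : X) : elDist 𝓗 x z ≤ elDist 𝓗 x y + elDist 𝓗 y z := by
  by_contra hcon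
  push_neg at hcon
  set ε := (elDist 𝓗 x z - (elDist 𝓗 x y + elDist 𝓗 y z)) / 2 with hε
  have hε0 : 0 < ε := by simp [hε]; linarith
  obtain ⟨l₁, hl₁, hc₁⟩ := exists_chain_lt 𝓗 (show elDist 𝓗 x y < elDist 𝓗 x y + ε by linarith)
  obtain ⟨l₂, hl₂, hc₂⟩ := exists_chain_lt 𝓗 (show elDist 𝓗 y z < elDist 𝓗 y z + ε by linarith)
  obtain ⟨hch, hcost, -, -⟩ := glue_spec 𝓗 hl₁ hl₂
  have := elDist_le_ccost 𝓗 hch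
  rw [hcost] at this
  have : elDist 𝓗 x z < elDist 𝓗 x y + elDist 𝓗 y z + 2 * ε := by linarith
  simp only [hε] at this; linarith

lemma elDist_lipschitz (a b c : X) :
    |elDist 𝓗 a c - elDist 𝓗 b c| ≤ dist a b := by
  rw [abs_le]
  constructor
  · have h1 := elDist_triangle 𝓗 b a c
    have h2 := elDist_le_dist 𝓗 b a
    rw [dist_comm b a] at h2; linarith
  · have h1 := elDist_triangle 𝓗 a b c
    have h2 := elDist_le_dist 𝓗 a b
    linarith

/-! ### decomposition of a chain at a member -/

lemma mem_decomp {x y w : X} {l : List X} (hl : IsChainL x y l) (hw : w ∈ l) :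
    ∃ p s, l = p ++ w :: s ∧ IsChainL x w (p ++ [w]) ∧ IsChainL w y (w :: s) ∧
      ccost 𝓗 l = ccost 𝓗 (p ++ [w]) + ccost 𝓗 (w :: s) := by
  obtain ⟨p, s, rfl⟩ := List.append_of_mem hw
  refine ⟨p, s, rfl, ⟨?_, by simp⟩, ⟨rfl, ?_⟩, ?_⟩
  · have := hl.1
    cases p with
    | nil => simpa using this
    | cons a t =>
      rw [List.head?_append_of_ne_nil _ (by simp)]
      rw [List.cons_append, List.head?_cons] at this
      simpa using this
  · have := hl.2
    rwa [List.getLast?_append_of_ne_nil _ (by simp)] at this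
  · exact ccost_glue 𝓗 p w s

lemma elDist_head_le {x y w : X} {l : List X} (hl : IsChainL x y l) (hw : w ∈ l) :
    elDist 𝓗 x w ≤ ccost 𝓗 l ∧ elDist 𝓗 w y ≤ ccost 𝓗 l := by
  obtain ⟨p, s, -, h1, h2, hc⟩ := mem_decomp 𝓗 hl hw
  have a1 := elDist_le_ccost 𝓗 h1
  have a2 := elDist_le_ccost 𝓗 h2
  have b1 := ccost_nonneg 𝓗 (p ++ [w])
  have b2 := ccost_nonneg 𝓗 (w :: s)
  constructor <;> linarith

/-! ### steps at most one -/

def S1 (l : List X) : Prop := List.IsChain (fun a b => stepCost 𝓗 a b ≤ 1) l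

lemma S1_glue {x y z : X} {l₁ l₂ : List X} (h₁ : IsChainL x y l₁) (h₂ : IsChainL y z l₂)
    (s₁ : S1 𝓗 l₁) (s₂ : S1 𝓗 l₂) : S1 𝓗 (l₁ ++ l₂.tail) := by
  obtain ⟨t, rfl⟩ : ∃ t, l₂ = y :: t := by
    cases l₂ with
    | nil => exact absurd rfl h₂.ne_nil
    | cons c t =>
      have := h₂.1; simp only [List.head?_cons, Option.some.injEq] at this
      exact ⟨t, by rw [this]⟩
  rw [S1, List.isChain_append]
  rw [S1, List.isChain_cons] at s₂
  refine ⟨s₁, s₂.2, ?_⟩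
  intro a ha b hb
  rw [h₁.2, Option.mem_def, Option.some.injEq] at ha
  subst ha
  exact s₂.1 b hb

lemma S1_reverse {l : List X} (h : S1 𝓗 l) : S1 𝓗 l.reverse := by
  rw [S1, List.isChain_reverse]
  have : (flip fun a b => stepCost 𝓗 a b ≤ 1) = (fun a b : X => stepCost 𝓗 a b ≤ 1) := by
    funext a b
    simp only [flip]
    rw [sc_comm]
  rw [show (fun a b : X => stepCost 𝓗 b a ≤ 1) = flip (fun a b => stepCost 𝓗 a b ≤ 1) from rfl, this]; exact h

lemma elDist_step_le {l : List X} (h : S1 𝓗 l) {a b : X} {t : List X}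
    (he : l = a :: b :: t) : elDist 𝓗 a b ≤ 1 := by
  subst he
  rw [S1, List.isChain_cons_cons] at h
  exact (elDist_le_sc 𝓗 a b).trans h.1

/-! ### splitting long steps using geodesics -/

lemma exists_unit_chain (geo : GeodesicSpace X) (a b : X) :
    ∃ l, IsChainL a b l ∧ S1 𝓗 l ∧ ccost 𝓗 l ≤ dist a b := by
  by_cases hd : dist a b ≤ 1
  · exact ⟨[a, b], isChainL_pair a b, by
      rw [S1, List.isChain_cons_cons]
      exact ⟨(sc_le_dist 𝓗 a b).trans hd, List.isChain_singleton b⟩,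
      by simpa using sc_le_dist 𝓗 a b⟩
  push_neg at hd
  obtain ⟨f, hf0, hfd, hiso⟩ := geo a b
  set m : ℕ := ⌈dist a b⌉₊ with hm
  have hm1 : 1 ≤ m := by
    rw [hm]; exact Nat.one_le_ceil_iff.mpr (by linarith)
  have hmr : (0:ℝ) < m := by exact_mod_cast Nat.lt_of_lt_of_le Nat.zero_lt_one hm1
  set q : ℝ := dist a b / m with hq
  have hq0 : 0 ≤ q := div_nonneg dist_nonneg hmr.le
  have hq1 : q ≤ 1 := by
    rw [hq, div_le_one hmr]
    exact Nat.le_ceil _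
  have key : ∀ k : ℕ, k ≤ m → ∃ l, IsChainL a (f (k * q)) l ∧ S1 𝓗 l ∧
      ccost 𝓗 l ≤ k * q := by
    intro k
    induction k with
    | zero =>
      intro _
      refine ⟨[a], ?_, List.isChain_singleton a, by simp⟩
      have h0 : f (((0:ℕ):ℝ) * q) = a := by norm_num [hf0]
      rw [h0]; exact isChainL_single a
    | succ k ih =>
      intro hk
      obtain ⟨l, hl, hs, hc⟩ := ih (le_of_lt (Nat.lt_of_succ_le hk))
      have hk' : (k : ℝ) * q ∈ Icc (0:ℝ) (dist a b) := by
        constructor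
        · positivity
        · rw [hq]
          rw [mul_div_assoc']
          rw [div_le_iff₀ hmr]
          have : (k:ℝ) ≤ m := by exact_mod_cast le_of_lt (Nat.lt_of_succ_le hk)
          nlinarith [dist_nonneg (x := a) (y := b)]
      have hk1' : ((k:ℝ) + 1) * q ∈ Icc (0:ℝ) (dist a b) := by
        constructor
        · positivity
        · rw [hq, mul_div_assoc', div_le_iff₀ hmr]
          have : (k:ℝ) + 1 ≤ m := by exact_mod_cast hk
          nlinarith [dist_nonneg (x := a) (y := b)]
      have hdist : dist (f (k * q)) (f ((k + 1 : ℕ) * q)) = q := by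
        push_cast
        rw [hiso _ hk' _ (by push_cast at hk1' ⊢; exact hk1')]
        rw [abs_of_nonpos (by linarith)]
        ring
      refine ⟨l ++ [f ((k+1 : ℕ) * q)], ⟨?_, by simp⟩, ?_, ?_⟩
      · rw [List.head?_append_of_ne_nil _ hl.ne_nil]; exact hl.1
      · rw [S1, List.isChain_append]
        refine ⟨hs, List.isChain_singleton _, ?_⟩
        intro u hu v hv
        rw [hl.2, Option.mem_def, Option.some.injEq] at hu
        simp only [List.head?_cons, Option.mem_def, Option.some.injEq] at hv
        subst hu; subst hv
        refine le_trans (sc_le_dist 𝓗 _ _) ?_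
        rw [hdist]; exact hq1
      · rw [ccost_snoc 𝓗 hl.2]
        have hstep : stepCost 𝓗 (f ((k:ℝ) * q)) (f (((k+1 : ℕ):ℝ) * q)) ≤ q :=
          le_trans (sc_le_dist 𝓗 _ _) (le_of_eq hdist)
        push_cast at hstep hc ⊢
        nlinarith
  obtain ⟨l, hl, hs, hc⟩ := key m le_rfl
  have hfm : f (m * q) = b := by
    rw [hq, mul_div_assoc', mul_comm, mul_div_assoc, div_self (ne_of_gt hmr), mul_one, hfd]
  rw [hfm] at hl
  refine ⟨l, hl, hs, ?_⟩
  calc ccost 𝓗 l ≤ m * q := hc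
  _ = dist a b := by rw [hq]; field_simp

lemma exists_S1_chain (geo : GeodesicSpace X) {x y : X} {l : List X} (hl : IsChainL x y l) :
    ∃ l', IsChainL x y l' ∧ S1 𝓗 l' ∧ ccost 𝓗 l' ≤ ccost 𝓗 l := by
  induction l generalizing x with
  | nil => exact absurd rfl hl.ne_nil
  | cons a t ih =>
    have hx : a = x := by
      have := hl.1; simpa using this
    subst hx
    cases t with
    | nil =>
      have : a = y := by have := hl.2; simpa using this
      subst this
      exact ⟨[a], isChainL_single a, List.isChain_singleton a, le_rfl⟩
    | cons b t' =>
      obtain ⟨r, hr, hrs, hrc⟩ := ih hl.tail_chain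
      by_cases hsc : stepCost 𝓗 a b ≤ 1
      · obtain ⟨hch, hcost, -, -⟩ := glue_spec 𝓗 (isChainL_pair a b) hr
        refine ⟨[a, b] ++ r.tail, hch, ?_, ?_⟩
        · refine S1_glue 𝓗 (isChainL_pair a b) hr ?_ hrs
          rw [S1, List.isChain_cons_cons]
          exact ⟨hsc, List.isChain_singleton b⟩
        · rw [hcost]
          have h2 : ccost 𝓗 [a, b] = stepCost 𝓗 a b := by simp
          rw [h2, ccost_cons_cons]
          linarith
      · push_neg at hsc
        have hsd : stepCost 𝓗 a b = dist a b := by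
          rcases sc_cases 𝓗 a b with h | ⟨h1, -, -⟩
          · exact h
          · rw [h1] at hsc; linarith
        obtain ⟨u, hu, hus, huc⟩ := exists_unit_chain 𝓗 geo a b
        obtain ⟨hch, hcost, -, -⟩ := glue_spec 𝓗 hu hr
        refine ⟨u ++ r.tail, hch, S1_glue 𝓗 hu hr hus hrs, ?_⟩
        rw [hcost, ccost_cons_cons]
        rw [hsd]
        linarith

/-! ### merging small steps: `nas` = no two adjacent steps of cost < 1/2 -/

def nas : List X → Prop
  | a :: b :: c :: t =>
      ¬(stepCost 𝓗 a b < 1/2 ∧ stepCost 𝓗 b c < 1/2) ∧ nas (b :: c :: t)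
  | _ => True

lemma nas_nil : nas 𝓗 ([] : List X) := trivial
lemma nas_single (a : X) : nas 𝓗 [a] := trivial
lemma nas_pair (a b : X) : nas 𝓗 [a, b] := trivial
lemma nas_cons3 {a b c : X} {t : List X} :
    nas 𝓗 (a :: b :: c :: t) ↔
      (¬(stepCost 𝓗 a b < 1/2 ∧ stepCost 𝓗 b c < 1/2) ∧ nas 𝓗 (b :: c :: t)) := Iff.rfl

lemma nas_tail : ∀ {a : X} {l : List X}, nas 𝓗 (a :: l) → nas 𝓗 l := by
  intro a l h
  match l with
  | [] => trivial
  | [b] => trivial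
  | b :: c :: t => exact h.2

lemma nas_count : ∀ l : List X, nas 𝓗 l → (l.length : ℝ) ≤ 4 * ccost 𝓗 l + 2
  | [] => fun _ => by simp
  | [a] => fun _ => by simp
  | [a, b] => fun _ => by
      have := sc_nonneg 𝓗 a b
      simp only [List.length_cons, List.length_nil]
      have h2 : ccost 𝓗 [a, b] = stepCost 𝓗 a b := by simp
      rw [h2]; push_cast; linarith
  | a :: b :: c :: t => fun h => by
      obtain ⟨h1, h2⟩ := h
      by_cases hab : 1/2 ≤ stepCost 𝓗 a b
      · have ih := nas_count (b :: c :: t) h2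
        have hc : ccost 𝓗 (a :: b :: c :: t) = stepCost 𝓗 a b + ccost 𝓗 (b :: c :: t) := rfl
        simp only [List.length_cons] at *
        rw [hc]; push_cast at *; linarith
      · push_neg at hab
        have hbc : 1/2 ≤ stepCost 𝓗 b c := by
          by_contra hcon; push_neg at hcon; exact h1 ⟨hab, hcon⟩
        have ih := nas_count (c :: t) (nas_tail 𝓗 h2)
        have hc : ccost 𝓗 (a :: b :: c :: t)
            = stepCost 𝓗 a b + (stepCost 𝓗 b c + ccost 𝓗 (c :: t)) := rfl
        have hnn := sc_nonneg 𝓗 a b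
        simp only [List.length_cons] at *
        rw [hc]; push_cast at *; linarith

lemma exists_merge : ∀ (N : ℕ) (l : List X), l.length ≤ N → S1 𝓗 l → ∃ l',
    l'.head? = l.head? ∧ l'.getLast? = l.getLast? ∧ (∀ z ∈ l', z ∈ l) ∧
    ccost 𝓗 l' ≤ ccost 𝓗 l ∧ S1 𝓗 l' ∧ nas 𝓗 l' ∧
    (∀ a b t, l = a :: b :: t → 1/2 ≤ stepCost 𝓗 a b →
       ∃ b' t', l' = a :: b' :: t' ∧ 1/2 ≤ stepCost 𝓗 a b') := by
  intro N
  induction N with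
  | zero =>
    intro l hlen _
    have : l = [] := List.length_eq_zero_iff.mp (Nat.le_zero.mp hlen)
    subst this
    exact ⟨[], rfl, rfl, fun z hz => hz, le_rfl, List.isChain_nil, nas_nil 𝓗,
      fun a b t heq => by simp at heq⟩
  | succ N ih =>
    intro l hlen hS1
    match l with
    | [] => exact ⟨[], rfl, rfl, fun z hz => hz, le_rfl, hS1, nas_nil 𝓗,
        fun a b t heq => by simp at heq⟩
    | [a] => exact ⟨[a], rfl, rfl, fun z hz => hz, le_rfl, hS1, nas_single 𝓗 a,
        fun a' b t heq => by simp at heq⟩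
    | [a, b] =>
      refine ⟨[a, b], rfl, rfl, fun z hz => hz, le_rfl, hS1, nas_pair 𝓗 a b, ?_⟩
      intro a' b' t heq hge
      simp only [List.cons.injEq] at heq
      obtain ⟨rfl, rfl, rfl⟩ := heq
      exact ⟨_, _, rfl, hge⟩
    | a :: b :: c :: t =>
      have hS1' := hS1
      rw [S1, List.isChain_cons_cons] at hS1'
      obtain ⟨hab1, hrest⟩ := hS1'
      by_cases hsm : stepCost 𝓗 a b < 1/2 ∧ stepCost 𝓗 b c < 1/2
      · -- merge the two small steps
        have hd : stepCost 𝓗 a c ≤ stepCost 𝓗 a b + stepCost 𝓗 b c := by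
          have e1 : stepCost 𝓗 a b = dist a b := sc_eq_dist_of_lt_one 𝓗 (by linarith [hsm.1])
          have e2 : stepCost 𝓗 b c = dist b c := sc_eq_dist_of_lt_one 𝓗 (by linarith [hsm.2])
          rw [e1, e2]
          exact (sc_le_dist 𝓗 a c).trans (dist_triangle a b c)
        have hS1'' : S1 𝓗 (a :: c :: t) := by
          rw [S1, List.isChain_cons_cons]
          constructor
          · linarith [hsm.1, hsm.2]
          · rw [List.isChain_cons_cons] at hrest; exact hrest.2
        obtain ⟨l', p1, p2, p3, p4, p5, p6, p7⟩ :=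
          ih (a :: c :: t) (by simp at hlen ⊢; omega) hS1''
        refine ⟨l', ?_, ?_, ?_, ?_, p5, p6, ?_⟩
        · rw [p1]; rfl
        · rw [p2, List.getLast?_cons_cons, List.getLast?_cons_cons, List.getLast?_cons_cons]
        · intro z hz
          rcases List.mem_cons.mp (p3 z hz) with h | h
          · subst h; exact List.mem_cons_self
          · rcases List.mem_cons.mp h with h' | h'
            · subst h'; right; right; exact List.mem_cons_self
            · right; right; exact List.mem_cons_of_mem _ h'
        · refine p4.trans ?_
          have e1 : ccost 𝓗 (a :: c :: t) = stepCost 𝓗 a c + ccost 𝓗 (c :: t) := rfl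
          have e2 : ccost 𝓗 (a :: b :: c :: t)
              = stepCost 𝓗 a b + (stepCost 𝓗 b c + ccost 𝓗 (c :: t)) := rfl
          rw [e1, e2]; linarith
        · intro a' b' t'' heq hge
          simp only [List.cons.injEq] at heq
          obtain ⟨rfl, rfl, -⟩ := heq
          exact absurd hsm.1 (by linarith)
      · -- keep the first point
        obtain ⟨r, p1, p2, p3, p4, p5, p6, p7⟩ :=
          ih (b :: c :: t) (by simp at hlen ⊢; omega) hrest
        obtain ⟨r', rfl⟩ : ∃ r', r = b :: r' := by
          cases r with
          | nil => simp at p1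
          | cons u r' =>
            simp only [List.head?_cons, Option.some.injEq] at p1
            exact ⟨r', by rw [p1]⟩
        refine ⟨a :: b :: r', rfl, ?_, ?_, ?_, ?_, ?_, ?_⟩
        · simp only [List.getLast?_cons_cons]
          rw [p2]
          simp only [List.getLast?_cons_cons]
        · intro z hz
          rcases List.mem_cons.mp hz with h | h
          · subst h; exact List.mem_cons_self (a := z)
          · exact List.mem_cons_of_mem _ (p3 z h)
        · have e1 : ccost 𝓗 (a :: b :: r') = stepCost 𝓗 a b + ccost 𝓗 (b :: r') := rfl
          have e2 : ccost 𝓗 (a :: b :: c :: t)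
              = stepCost 𝓗 a b + ccost 𝓗 (b :: c :: t) := rfl
          rw [e1, e2]; linarith
        · rw [S1, List.isChain_cons_cons]; exact ⟨hab1, p5⟩
        · cases r' with
          | nil => exact nas_pair 𝓗 a b
          | cons d r₃ =>
            rw [nas_cons3]
            refine ⟨?_, p6⟩
            by_cases hab2 : stepCost 𝓗 a b < 1/2
            · have hbc : 1/2 ≤ stepCost 𝓗 b c := by
                by_contra hcon; push_neg at hcon; exact hsm ⟨hab2, hcon⟩
              obtain ⟨b', t', heq, hge⟩ := p7 b c t rfl hbc
              simp only [List.cons.injEq] at heq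
              obtain ⟨-, rfl, -⟩ := heq
              rintro ⟨-, hcon⟩
              linarith
            · rintro ⟨hcon, -⟩; exact hab2 hcon
        · intro a' b' t'' heq hge
          simp only [List.cons.injEq] at heq
          obtain ⟨rfl, rfl, -⟩ := heq
          exact ⟨_, _, rfl, hge⟩

/-- a fully normalized near-optimal chain between any two points -/
lemma exists_good_chain (geo : GeodesicSpace X) (x y : X) {ε : ℝ} (hε : 0 < ε) :
    ∃ l, IsChainL x y l ∧ S1 𝓗 l ∧ nas 𝓗 l ∧ ccost 𝓗 l ≤ elDist 𝓗 x y + ε := by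
  obtain ⟨l₀, hl₀, hc₀⟩ := exists_chain_lt 𝓗 (show elDist 𝓗 x y < elDist 𝓗 x y + ε by linarith)
  obtain ⟨l₁, hl₁, hs₁, hc₁⟩ := exists_S1_chain 𝓗 geo hl₀
  obtain ⟨l₂, p1, p2, -, p4, p5, p6, -⟩ := exists_merge 𝓗 l₁.length l₁ le_rfl hs₁
  refine ⟨l₂, ⟨by rw [p1]; exact hl₁.1, by rw [p2]; exact hl₁.2⟩, p5, p6, by linarith⟩

/-- normalize an arbitrary chain, keeping only points of the original -/
lemma normalize_chain {x y : X} {l : List X} (hl : IsChainL x y l) (hS : S1 𝓗 l) :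
    ∃ l', IsChainL x y l' ∧ S1 𝓗 l' ∧ nas 𝓗 l' ∧ ccost 𝓗 l' ≤ ccost 𝓗 l ∧
      (∀ z ∈ l', z ∈ l) := by
  obtain ⟨l', p1, p2, p3, p4, p5, p6, -⟩ := exists_merge 𝓗 l.length l le_rfl hS
  exact ⟨l', ⟨by rw [p1]; exact hl.1, by rw [p2]; exact hl.2⟩, p5, p6, p4, p3⟩

/-! ### near-optimal subchain extraction -/

lemma subchain_near_opt {x y z₁ z₂ : X} {l : List X} (hl : IsChainL x y l)
    (hno : ccost 𝓗 l ≤ elDist 𝓗 x y + 1) (hS : S1 𝓗 l)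
    (h₁ : z₁ ∈ l) (h₂ : z₂ ∈ l) :
    ∃ m, IsChainL z₁ z₂ m ∧ (∀ w ∈ m, w ∈ l) ∧ S1 𝓗 m ∧
      ccost 𝓗 m ≤ elDist 𝓗 z₁ z₂ + 1 := by
  -- decompose at z₁
  obtain ⟨p, s, rfl, hxz, hzy, hcsplit⟩ := mem_decomp 𝓗 hl h₁
  have hS' : List.Chain' (fun a b => stepCost 𝓗 a b ≤ 1) ((p ++ [z₁]) ++ s) := by
    have he : (p ++ [z₁]) ++ s = p ++ z₁ :: s := by simp
    rw [he]; exact hS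
  have hSpre1 : S1 𝓗 (p ++ [z₁]) := (List.isChain_append.mp hS').1
  have hSpre2 : S1 𝓗 (z₁ :: s) := by
    have h' := (List.isChain_append (l₁ := p) (l₂ := z₁ :: s)).mp hS
    exact h'.2.1
  rcases List.mem_append.mp h₂ with hz₂ | hz₂
  · -- z₂ occurs in the prefix; reverse the middle chain
    have hz₂' : z₂ ∈ p ++ [z₁] := List.mem_append.mpr (Or.inl hz₂)
    obtain ⟨p', s', hps, hxz₂, hz₂z₁, hcsplit₂⟩ := mem_decomp 𝓗 hxz hz₂'
    refine ⟨(z₂ :: s').reverse, hz₂z₁.reverse, ?_, S1_reverse 𝓗 ?_, ?_⟩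
    · intro w hw
      rw [List.mem_reverse] at hw
      have : w ∈ p ++ [z₁] := by rw [hps]; exact List.mem_append.mpr (Or.inr hw)
      rcases List.mem_append.mp this with h | h
      · exact List.mem_append.mpr (Or.inl h)
      · simp only [List.mem_singleton] at h; subst h
        exact List.mem_append.mpr (Or.inr (List.mem_cons_self))
    · have h2 := hSpre1
      rw [hps] at h2
      exact (List.isChain_append.mp h2).2.1
    · rw [ccost_reverse]
      -- ccost (z₂ :: s') ≤ elDist z₁ z₂ + 1
      have e1 := (elDist_le_ccost 𝓗 hxz₂)
      have e2 := (elDist_le_ccost 𝓗 hzy)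
      have tri : elDist 𝓗 x y ≤ elDist 𝓗 x z₂ + elDist 𝓗 z₂ z₁ + elDist 𝓗 z₁ y := by
        have t1 := elDist_triangle 𝓗 x z₂ y
        have t2 := elDist_triangle 𝓗 z₂ z₁ y
        linarith
      have hsym : elDist 𝓗 z₂ z₁ = elDist 𝓗 z₁ z₂ := elDist_symm 𝓗 z₂ z₁
      linarith
  · -- z₂ occurs in the suffix chain z₁ :: s
    obtain ⟨p', s', hps, hz₁z₂, hz₂y, hcsplit₂⟩ := mem_decomp 𝓗 hzy hz₂
    refine ⟨p' ++ [z₂], hz₁z₂, ?_, ?_, ?_⟩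
    · intro w hw
      have hwzs : w ∈ z₁ :: s := by
        rcases List.mem_append.mp hw with h | h
        · rw [hps]; exact List.mem_append.mpr (Or.inl h)
        · simp only [List.mem_singleton] at h; subst h; exact hz₂
      exact List.mem_append.mpr (Or.inr hwzs)
    · have h2 := hSpre2
      rw [hps] at h2
      have he : p' ++ z₂ :: s' = (p' ++ [z₂]) ++ s' := by simp
      rw [he] at h2
      exact (List.isChain_append.mp h2).1
    · have e1 := (elDist_le_ccost 𝓗 hxz)
      have e2 := (elDist_le_ccost 𝓗 hz₂y)
      have tri : elDist 𝓗 x y ≤ elDist 𝓗 x z₁ + elDist 𝓗 z₁ z₂ + elDist 𝓗 z₂ y := by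
        have t1 := elDist_triangle 𝓗 x z₁ y
        have t2 := elDist_triangle 𝓗 z₁ z₂ y
        linarith
      linarith

/-! ### hyperbolic geometry: geodesics and Gromov products -/

lemma geodesic_point_dist {x y : X} {f : ℝ → X} (hf : IsGeodesicFrom f x y)
    {t : ℝ} (ht : t ∈ Icc (0:ℝ) (dist x y)) :
    dist x (f t) = t ∧ dist (f t) y = dist x y - t := by
  obtain ⟨hf0, hfd, hiso⟩ := hf
  constructor
  · have := hiso 0 ⟨le_rfl, dist_nonneg⟩ t ht
    rw [hf0] at this
    rw [this, abs_of_nonpos (by linarith [ht.1])]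
    ring
  · have := hiso t ht (dist x y) ⟨dist_nonneg, le_rfl⟩
    rw [hfd] at this
    rw [this, abs_of_nonpos (by linarith [ht.2])]
    ring

lemma geodesic_near_product {δ : ℝ} (hX : DeltaHyperbolic X δ) {x y : X} {f : ℝ → X}
    (hf : IsGeodesicFrom f x y) (o : X) :
    ∃ t ∈ Icc (0:ℝ) (dist x y), dist o (f t) ≤ gromovProd o x y + 2 * δ := by
  set t₀ := (dist x o + dist x y - dist o y) / 2 with ht₀
  have hoy : dist o y ≤ dist o x + dist x y := dist_triangle o x y
  have hxo : dist x o ≤ dist x y + dist y o := dist_triangle x y o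
  have c1 : dist x o = dist o x := dist_comm x o
  have c2 : dist y o = dist o y := dist_comm y o
  have htIcc : t₀ ∈ Icc (0:ℝ) (dist x y) := ⟨by rw [ht₀]; linarith, by rw [ht₀]; linarith⟩
  obtain ⟨hdx, hdy⟩ := geodesic_point_dist hf htIcc
  refine ⟨t₀, htIcc, ?_⟩
  have h4 := hX o x (f t₀) y
  rcases min_le_iff.mp h4 with hc | hc
  · unfold gromovProd at hc ⊢
    have c3 : dist x (f t₀) = dist (f t₀) x := dist_comm _ _
    linarith
  · unfold gromovProd at hc ⊢
    linarith

lemma slim_triangle {δ : ℝ} (hδ : 0 ≤ δ) (hX : DeltaHyperbolic X δ)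
    {x y z : X} {f g h : ℝ → X}
    (hf : IsGeodesicFrom f x z) (hg : IsGeodesicFrom g x y) (hh : IsGeodesicFrom h y z)
    {t : ℝ} (ht : t ∈ Icc (0:ℝ) (dist x z)) :
    (∃ s ∈ Icc (0:ℝ) (dist x y), dist (f t) (g s) ≤ 3 * δ) ∨
    (∃ s ∈ Icc (0:ℝ) (dist y z), dist (f t) (h s) ≤ 3 * δ) := by
  obtain ⟨hdx, hdz⟩ := geodesic_point_dist hf ht
  have hzero : gromovProd (f t) x z = 0 := by
    unfold gromovProd
    have c1 : dist (f t) x = dist x (f t) := dist_comm _ _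
    have c2 : dist (f t) z = dist (f t) z := rfl
    rw [c1, hdx]
    have : dist (f t) z = dist x z - t := hdz
    rw [this]; ring
  have h4 := hX (f t) x y z
  rw [hzero, zero_add] at h4
  rcases min_le_iff.mp h4 with hc | hc
  · left
    obtain ⟨s, hs, hd⟩ := geodesic_near_product hX hg (f t)
    exact ⟨s, hs, by unfold gromovProd at hc hd; linarith⟩
  · right
    obtain ⟨s, hs, hd⟩ := geodesic_near_product hX hh (f t)
    exact ⟨s, hs, by unfold gromovProd at hc hd; linarith⟩

/-! ### chains of small cost: structure -/

lemma chain_decomp : ∀ {l : List X} {x y : X}, IsChainL x y l →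
    dist x y ≤ ccost 𝓗 l ∨ 2 ≤ ccost 𝓗 l ∨
    ∃ A ∈ 𝓗, ∃ a ∈ A, ∃ b ∈ A, dist x a + 1 + dist b y ≤ ccost 𝓗 l := by
  intro l
  induction l with
  | nil => intro x y h; exact absurd rfl h.ne_nil
  | cons a t ih =>
    intro x y h
    have hx : a = x := by have := h.1; simpa using this
    subst hx
    cases t with
    | nil =>
      have : a = y := by have := h.2; simpa using this
      subst this
      left; simp
    | cons b t' =>
      have htl : IsChainL b y (b :: t') := h.tail_chain
      have hcost : ccost 𝓗 (a :: b :: t') = stepCost 𝓗 a b + ccost 𝓗 (b :: t') := rfl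
      have hnn := ccost_nonneg 𝓗 (b :: t')
      have hnn2 := sc_nonneg 𝓗 a b
      rcases ih htl with hd | h2 | ⟨A, hA, a', ha', b', hb', hab⟩
      · rcases sc_cases 𝓗 a b with hsc | ⟨hsc1, hsc2, A, hA, haA, hbA⟩
        · left
          calc dist a y ≤ dist a b + dist b y := dist_triangle a b y
          _ ≤ stepCost 𝓗 a b + ccost 𝓗 (b :: t') := by rw [hsc]; linarith
          _ = _ := hcost.symm
        · right; right
          exact ⟨A, hA, a, haA, b, hbA, by rw [hcost, hsc1]; simp only [dist_self]; linarith⟩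
      · right; left; rw [hcost]; linarith
      · rcases sc_cases 𝓗 a b with hsc | ⟨hsc1, hsc2, B, hB, haB, hbB⟩
        · right; right
          refine ⟨A, hA, a', ha', b', hb', ?_⟩
          have : dist a a' ≤ dist a b + dist b a' := dist_triangle a b a'
          rw [hcost, hsc]; linarith
        · right; left
          have d1 := dist_nonneg (x := b) (y := a')
          have d2 := dist_nonneg (x := b') (y := y)
          rw [hcost, hsc1]; linarith

/-! ### bounded diameter of geodesics between electrically-close points -/

lemma cone_diam {δ C : ℝ} (geo : GeodesicSpace X) (hδ : 0 ≤ δ) (hX : DeltaHyperbolic X δ)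
    (hC : 0 ≤ C) (hQC : ∀ A ∈ 𝓗, QuasiconvexSubset C A)
    {x y : X} (he : elDist 𝓗 x y ≤ 3/2) {f : ℝ → X} (hf : IsGeodesicFrom f x y)
    {t : ℝ} (ht : t ∈ Icc (0:ℝ) (dist x y)) :
    elDist 𝓗 x (f t) ≤ C + 6 * δ + 3 := by
  obtain ⟨l, hl, hc⟩ := exists_chain_lt 𝓗 (show elDist 𝓗 x y < 8/5 by linarith)
  have hxf : dist x (f t) = t := (geodesic_point_dist hf ht).1
  rcases chain_decomp 𝓗 hl with hd | h2 | ⟨A, hA, a, ha, b, hb, hab⟩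
  · -- short chain: direct distance
    have : elDist 𝓗 x (f t) ≤ dist x (f t) := elDist_le_dist 𝓗 _ _
    rw [hxf] at this
    have := ht.2
    linarith
  · linarith
  · -- one shortcut through A
    have hxa : dist x a ≤ 3/5 := by linarith [dist_nonneg (x := b) (y := y)]
    have hby : dist b y ≤ 3/5 := by linarith [dist_nonneg (x := x) (y := a)]
    obtain ⟨g1, hg1⟩ : ∃ g1, IsGeodesicFrom g1 x b := geo x b
    obtain ⟨h1, hh1⟩ : ∃ h1, IsGeodesicFrom h1 b y := geo b y
    rcases slim_triangle hδ hX hf hg1 hh1 ht with ⟨s, hs, hq⟩ | ⟨s, hs, hq⟩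
    · -- f t is close to the geodesic [x,b]; use the triangle (x,a,b)
      obtain ⟨g2, hg2⟩ : ∃ g2, IsGeodesicFrom g2 x a := geo x a
      obtain ⟨h2, hh2⟩ : ∃ h2, IsGeodesicFrom h2 a b := geo a b
      rcases slim_triangle hδ hX hg1 hg2 hh2 hs with ⟨u, hu, hr⟩ | ⟨u, hu, hr⟩
      · -- close to [x,a] which is short
        have hd1 : dist x (g2 u) = u := (geodesic_point_dist hg2 hu).1
        have e1 : elDist 𝓗 x (f t) ≤ dist x (g2 u) + dist (g2 u) (g1 s) + dist (g1 s) (f t) := by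
          have t1 := elDist_triangle 𝓗 x (g2 u) (f t)
          have t2 := elDist_triangle 𝓗 (g2 u) (g1 s) (f t)
          have b1 := elDist_le_dist 𝓗 x (g2 u)
          have b2 := elDist_le_dist 𝓗 (g2 u) (g1 s)
          have b3 := elDist_le_dist 𝓗 (g1 s) (f t)
          linarith
        rw [hd1] at e1
        rw [dist_comm (g2 u) (g1 s)] at e1
        rw [dist_comm (g1 s) (f t)] at e1
        have := hu.2
        linarith
      · -- close to [a,b]: use quasiconvexity
        have hne : A.Nonempty := ⟨a, ha⟩
        have hqc := hQC A hA a ha b hb h2 hh2 u hu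
        obtain ⟨h', hh', hdh'⟩ : ∃ h' ∈ A, dist (h2 u) h' < C + 1 := by
          rw [← infDist_lt_iff hne]
          linarith
        have e1 : elDist 𝓗 x (f t) ≤ dist x a + elDist 𝓗 a h' + dist h' (h2 u)
            + dist (h2 u) (g1 s) + dist (g1 s) (f t) := by
          have t1 := elDist_triangle 𝓗 x a (f t)
          have t2 := elDist_triangle 𝓗 a h' (f t)
          have t3 := elDist_triangle 𝓗 h' (h2 u) (f t)
          have t4 := elDist_triangle 𝓗 (h2 u) (g1 s) (f t)
          have b1 := elDist_le_dist 𝓗 x a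
          have b2 := elDist_le_dist 𝓗 h' (h2 u)
          have b3 := elDist_le_dist 𝓗 (h2 u) (g1 s)
          have b4 := elDist_le_dist 𝓗 (g1 s) (f t)
          linarith
        have e2 : elDist 𝓗 a h' ≤ 1 := elDist_le_one_of_mem 𝓗 hA ha hh'
        rw [dist_comm h' (h2 u)] at e1
        rw [dist_comm (h2 u) (g1 s)] at e1
        rw [dist_comm (g1 s) (f t)] at e1
        linarith
    · -- f t is close to the geodesic [b,y] which is short
      have hd1 : dist b (h1 s) = s := (geodesic_point_dist hh1 hs).1
      have e1 : elDist 𝓗 x (f t) ≤ dist x a + elDist 𝓗 a b + dist b (h1 s)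
          + dist (h1 s) (f t) := by
        have t1 := elDist_triangle 𝓗 x a (f t)
        have t2 := elDist_triangle 𝓗 a b (f t)
        have t3 := elDist_triangle 𝓗 b (h1 s) (f t)
        have b1 := elDist_le_dist 𝓗 x a
        have b2 := elDist_le_dist 𝓗 b (h1 s)
        have b3 := elDist_le_dist 𝓗 (h1 s) (f t)
        linarith
      have e2 : elDist 𝓗 a b ≤ 1 := elDist_le_one_of_mem 𝓗 hA ha hb
      rw [hd1] at e1
      rw [dist_comm (h1 s) (f t)] at e1
      have := hs.2
      linarith

/-! ### dyadic tracking: geodesics stay log-close to chains -/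

lemma head?_take {α : Type*} (l : List α) (n : ℕ) : (l.take (n+1)).head? = l.head? := by
  cases l <;> simp

lemma dyadic {δ C : ℝ} (geo : GeodesicSpace X) (hδ : 0 ≤ δ) (hX : DeltaHyperbolic X δ)
    (hC : 0 ≤ C) (hQC : ∀ A ∈ 𝓗, QuasiconvexSubset C A) :
    ∀ (k : ℕ) {x y : X} {l : List X}, IsChainL x y l → S1 𝓗 l → l.length ≤ 2^k + 1 →
    ∀ {f : ℝ → X}, IsGeodesicFrom f x y → ∀ t ∈ Icc (0:ℝ) (dist x y),
    ∃ z ∈ l, elDist 𝓗 (f t) z ≤ (C + 6*δ + 3) + 3*δ*k := by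
  intro k
  induction k with
  | zero =>
    intro x y l hl hS hlen f hf t ht
    refine ⟨x, hl.mem_head, ?_⟩
    rw [elDist_symm]
    simp only [pow_zero] at hlen
    match l, hl, hlen with
    | [a], hl, _ =>
      have hxy : x = y := by
        have h1 := hl.1; have h2 := hl.2
        simp only [List.head?_cons, List.getLast?_singleton, Option.some.injEq] at h1 h2
        rw [← h1, ← h2]
      subst hxy
      have hd0 : dist x x = 0 := dist_self x
      have ht' : t = 0 := by
        obtain ⟨h1', h2'⟩ := ht; rw [hd0] at h2'; linarith
      subst ht'
      rw [hf.1, elDist_self]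
      push_cast; positivity
    | [a, b], hl, _ =>
      have hxa : a = x := by have := hl.1; simpa using this
      have hby : b = y := by
        have := hl.2
        simp only [List.getLast?_cons_cons, List.getLast?_singleton, Option.some.injEq] at this
        exact this
      subst hxa; subst hby
      have he : elDist 𝓗 a b ≤ 3/2 := by
        have := elDist_step_le 𝓗 hS (a := a) (b := b) (t := []) rfl
        linarith
      have := cone_diam 𝓗 geo hδ hX hC hQC he hf ht
      push_cast
      linarith
  | succ k ih =>
    intro x y l hl hS hlen f hf t ht
    by_cases hsmall : l.length ≤ 2^k + 1
    · obtain ⟨z, hz, hd⟩ := ih hl hS hsmall hf t ht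
      refine ⟨z, hz, hd.trans ?_⟩
      push_cast
      nlinarith
    · push_neg at hsmall
      set m := 2^k with hm
      have hmlt : m < l.length := by omega
      have hm1lt : m + 1 ≤ l.length := hmlt
      set z₀ := l[m] with hz₀
      set pre := l.take (m+1) with hpre
      set suf := l.drop m with hsuf
      have hsufeq : suf = z₀ :: l.drop (m+1) := List.drop_eq_getElem_cons hmlt
      have hpreeq : pre = l.take m ++ [z₀] := by
        rw [hpre, List.take_succ]
        congr 1
        rw [List.getElem?_eq_getElem hmlt]
        rfl
      have hpre_chain : IsChainL x z₀ pre := by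
        constructor
        · rw [hpre, head?_take]; exact hl.1
        · rw [hpreeq]; exact List.getLast?_concat
      have hsuf_chain : IsChainL z₀ y suf := by
        constructor
        · rw [hsuf, List.head?_drop, List.getElem?_eq_getElem hmlt]
        · have : l = l.take m ++ suf := (List.take_append_drop m l).symm
          have h2 := hl.2
          rw [this, List.getLast?_append_of_ne_nil _ (by rw [hsufeq]; simp)] at h2
          exact h2
      have hSpre : S1 𝓗 pre := by
        have : l = pre ++ l.drop (m+1) := (List.take_append_drop (m+1) l).symm
        have h2 := hS
        rw [S1, this, List.isChain_append] at h2
        exact h2.1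
      have hSsuf : S1 𝓗 suf := by
        have : l = l.take m ++ suf := (List.take_append_drop m l).symm
        have h2 := hS
        rw [S1, this, List.isChain_append] at h2
        exact h2.2.1
      have hlen_pre : pre.length ≤ 2^k + 1 := by
        rw [hpre, List.length_take]; omega
      have hlen_suf : suf.length ≤ 2^k + 1 := by
        rw [hsuf, List.length_drop]
        have : l.length ≤ 2^(k+1) + 1 := hlen
        have h2 : (2:ℕ)^(k+1) = 2^k + 2^k := by ring
        omega
      obtain ⟨g, hg⟩ := geo x z₀
      obtain ⟨h, hh⟩ := geo z₀ y
      rcases slim_triangle hδ hX hf hg hh ht with ⟨s, hs, hq⟩ | ⟨s, hs, hq⟩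
      · obtain ⟨z, hz, hd⟩ := ih hpre_chain hSpre hlen_pre hg s hs
        refine ⟨z, List.mem_of_mem_take (by rw [← hpre]; exact hz), ?_⟩
        have t1 := elDist_triangle 𝓗 (f t) (g s) z
        have b1 := elDist_le_dist 𝓗 (f t) (g s)
        push_cast at hd ⊢
        nlinarith
      · obtain ⟨z, hz, hd⟩ := ih hsuf_chain hSsuf hlen_suf hh s hs
        refine ⟨z, List.mem_of_mem_drop (by rw [← hsuf]; exact hz), ?_⟩
        have t1 := elDist_triangle 𝓗 (f t) (h s) z
        have b1 := elDist_le_dist 𝓗 (f t) (h s)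
        push_cast at hd ⊢
        nlinarith

/-! ### the bootstrap: chains uniformly track geodesics -/

lemma sq_le_two_pow : ∀ m : ℕ, ((m:ℝ))^2 ≤ 4 * 2^m := by
  intro m
  induction m with
  | zero => norm_num
  | succ n ih =>
    have h1 : (n:ℝ) < 2^n := by exact_mod_cast Nat.lt_two_pow_self (n := n)
    have h2 : (1:ℝ) ≤ 2^n := by
      have : (1:ℕ) ≤ 2^n := Nat.one_le_two_pow
      exact_mod_cast this
    have h3 : (2:ℝ)^(n+1) = 2*2^n := by ring
    push_cast
    push_cast at ih
    nlinarith

lemma el_geodesic_continuousOn {x y p : X} {f : ℝ → X} (hf : IsGeodesicFrom f x y) :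
    ContinuousOn (fun s => elDist 𝓗 (f s) p) (Icc 0 (dist x y)) := by
  intro a ha
  rw [Metric.continuousWithinAt_iff]
  intro ε hε
  refine ⟨ε, hε, fun b hb hab => ?_⟩
  have h1 : |elDist 𝓗 (f b) p - elDist 𝓗 (f a) p| ≤ dist (f b) (f a) :=
    elDist_lipschitz 𝓗 (f b) (f a) p
  have h2 : dist (f b) (f a) = |b - a| := hf.2.2 b hb a ha
  have h3 : dist b a = |b - a| := Real.dist_eq b a
  have : dist (elDist 𝓗 (f b) p) (elDist 𝓗 (f a) p) ≤ dist b a := by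
    rw [Real.dist_eq, h3]
    rw [h2] at h1
    exact h1
  exact lt_of_le_of_lt this hab

/-- the tracking constant -/
noncomputable def Aconst (δ C : ℝ) : ℝ :=
  (C + 9*δ + 4) + 3*δ*(384*δ + 128*(C + 9*δ + 4) + 80) + 3*δ + 10

lemma Aconst_nonneg {δ C : ℝ} (hδ : 0 ≤ δ) (hC : 0 ≤ C) : 0 ≤ Aconst δ C := by
  unfold Aconst; positivity

lemma Aconst_big {δ C : ℝ} (hδ : 0 ≤ δ) (hC : 0 ≤ C) :
    3*δ + 2 ≤ Aconst δ C ∧ (C + 6*δ + 3) + 3*δ + 2 ≤ Aconst δ C := by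
  unfold Aconst
  constructor <;> nlinarith

lemma exists_log_bound (N : ℕ) (h : 1 ≤ N) : ∃ k : ℕ, 1 ≤ k ∧ N ≤ 2^k ∧ (2:ℕ)^(k-1) ≤ N := by
  refine ⟨Nat.log 2 N + 1, by omega, ?_, ?_⟩
  · have h2 := Nat.lt_pow_succ_log_self (show 1 < 2 by norm_num) N
    rw [Nat.succ_eq_add_one] at h2
    exact h2.le
  · rw [Nat.add_sub_cancel]
    exact Nat.pow_log_le_self 2 (by omega)

lemma endgame {δ C R σn k : ℝ} (hδ : 0 ≤ δ) (hC : 0 ≤ C) (hk1 : 1 ≤ k)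
    (hσn : σn ≤ 32*R + 18) (hsq : (k-1)^2 ≤ 4*σn)
    (hstar : R - 1 ≤ 3*δ + ((C + 6*δ + 3) + 3*δ*k)) : R ≤ Aconst δ C := by
  set a : ℝ := C + 9*δ + 4 with ha
  have ha4 : 4 ≤ a := by rw [ha]; linarith
  have hRa : R ≤ a + 3*δ*k := by rw [ha]; linarith
  have hsq2 : (k - 1)^2 ≤ 128*(a + 3*δ*k) + 76 := by nlinarith
  have hkpos : (0:ℝ) < k := by linarith
  have hkk : k*k ≤ (384*δ + 128*a + 78)*k := by
    nlinarith [hsq2, mul_nonneg (show (0:ℝ) ≤ 128*a + 76 by linarith)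
      (show (0:ℝ) ≤ k - 1 by linarith)]
  have hkbound : k ≤ 384*δ + 128*a + 78 := le_of_mul_le_mul_right hkk hkpos
  have hAeq : Aconst δ C = a + 3*δ*(384*δ + 128*a + 80) + 3*δ + 10 := by
    rw [ha]; unfold Aconst; ring
  rw [hAeq]
  have hmul : 3*δ*k ≤ 3*δ*(384*δ + 128*a + 78) :=
    mul_le_mul_of_nonneg_left hkbound (by linarith)
  nlinarith [hRa, hmul, hδ, ha4]

lemma tracking {δ C : ℝ} (geo : GeodesicSpace X) (hδ : 0 ≤ δ) (hX : DeltaHyperbolic X δ)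
    (hC : 0 ≤ C) (hQC : ∀ A ∈ 𝓗, QuasiconvexSubset C A)
    {x y : X} {l : List X} (hl : IsChainL x y l) (hS : S1 𝓗 l)
    (hno : ccost 𝓗 l ≤ elDist 𝓗 x y + 1)
    {f : ℝ → X} (hf : IsGeodesicFrom f x y) :
    ∀ t ∈ Icc (0:ℝ) (dist x y), ∃ z ∈ l, elDist 𝓗 (f t) z ≤ Aconst δ C := by
  classical
  set dxy := dist x y with hdxy
  have hdxy0 : 0 ≤ dxy := dist_nonneg
  have hfin : l.toFinset.Nonempty := ⟨x, List.mem_toFinset.mpr hl.mem_head⟩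
  set ρ : ℝ → ℝ := fun t => l.toFinset.inf' hfin (fun z => elDist 𝓗 (f t) z) with hρdef
  have hρ_le : ∀ t, ∀ z ∈ l, ρ t ≤ elDist 𝓗 (f t) z := by
    intro t z hz
    exact Finset.inf'_le _ (List.mem_toFinset.mpr hz)
  have hρ_ex : ∀ t, ∃ z ∈ l, ρ t = elDist 𝓗 (f t) z := by
    intro t
    obtain ⟨z, hz, hzeq⟩ := Finset.exists_mem_eq_inf' hfin (fun z => elDist 𝓗 (f t) z)
    exact ⟨z, List.mem_toFinset.mp hz, hzeq⟩
  have hρ_nonneg : ∀ t, 0 ≤ ρ t := by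
    intro t
    obtain ⟨z, _, hzeq⟩ := hρ_ex t
    rw [hzeq]; exact elDist_nonneg 𝓗 _ _
  -- uniform finite bound via the dyadic lemma
  have hbound : ∀ t ∈ Icc (0:ℝ) dxy, ρ t ≤ (C + 6*δ + 3) + 3*δ*(l.length) := by
    intro t ht
    have hlen : l.length ≤ 2^(l.length) + 1 :=
      le_trans (le_of_lt (Nat.lt_two_pow_self)) (Nat.le_succ _)
    obtain ⟨z, hz, hd⟩ := dyadic 𝓗 geo hδ hX hC hQC l.length hl hS hlen hf t ht
    exact (hρ_le t z hz).trans hd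
  set R := sSup (ρ '' Icc (0:ℝ) dxy) with hR
  have himg_ne : (ρ '' Icc (0:ℝ) dxy).Nonempty := ⟨ρ 0, ⟨0, ⟨le_rfl, hdxy0⟩, rfl⟩⟩
  have himg_bdd : BddAbove (ρ '' Icc (0:ℝ) dxy) := by
    refine ⟨(C + 6*δ + 3) + 3*δ*(l.length), ?_⟩
    rintro v ⟨t, ht, rfl⟩
    exact hbound t ht
  have hR_ub : ∀ t ∈ Icc (0:ℝ) dxy, ρ t ≤ R := fun t ht =>
    le_csSup himg_bdd ⟨t, ht, rfl⟩
  have hR0 : 0 ≤ R := le_trans (hρ_nonneg 0) (hR_ub 0 ⟨le_rfl, hdxy0⟩)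
  -- it suffices to bound R
  suffices hRA : R ≤ Aconst δ C by
    intro t ht
    obtain ⟨z, hz, hzeq⟩ := hρ_ex t
    exact ⟨z, hz, by rw [← hzeq]; exact (hR_ub t ht).trans hRA⟩
  by_contra hRA
  push_neg at hRA
  obtain ⟨hA1, hA2⟩ := Aconst_big (δ := δ) (C := C) hδ hC
  have hA0 := Aconst_nonneg (δ := δ) (C := C) hδ hC
  -- a point nearly realizing R
  obtain ⟨v, ⟨tstar, htstar, rfl⟩, hv⟩ :=
    exists_lt_of_lt_csSup himg_ne (show R - 1 < R by linarith)
  set p := f tstar with hp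
  have hav : ∀ z ∈ l, R - 1 < elDist 𝓗 p z := by
    intro z hz
    exact lt_of_lt_of_le hv (hρ_le tstar z hz)
  -- the u side
  have uside : ∃ (su : ℝ) (zu : X) (cu : List X), su ∈ Icc (0:ℝ) tstar ∧ zu ∈ l ∧
      IsChainL (f su) zu cu ∧ S1 𝓗 cu ∧
      elDist 𝓗 (f su) p ≤ 2*R ∧ elDist 𝓗 zu (f su) ≤ R ∧
      ((cu.length : ℝ)) ≤ 4*(R+1) + 2 ∧
      (∀ w ∈ cu, R - 1 ≤ elDist 𝓗 p w) ∧
      (elDist 𝓗 (f su) p = 2*R ∨ f su = x) := by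
    by_cases hcase : 2*R ≤ elDist 𝓗 x p
    · have hcont : ContinuousOn (fun s => elDist 𝓗 (f s) p) (Icc 0 tstar) :=
        (el_geodesic_continuousOn 𝓗 hf).mono (Icc_subset_Icc le_rfl htstar.2)
      have hval : (2*R) ∈ Icc (elDist 𝓗 (f tstar) p) (elDist 𝓗 (f 0) p) := by
        constructor
        · rw [← hp, elDist_self]; linarith
        · rw [hf.1]; exact hcase
      obtain ⟨su, hsu, hsueq₀⟩ := intermediate_value_Icc' htstar.1 hcont hval
      have hsueq : elDist 𝓗 (f su) p = 2*R := hsueq₀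
      obtain ⟨zu, hzu, hzueq⟩ := hρ_ex su
      have hsu_dxy : su ∈ Icc (0:ℝ) dxy := ⟨hsu.1, le_trans hsu.2 htstar.2⟩
      have hzuR : elDist 𝓗 zu (f su) ≤ R := by
        rw [elDist_symm, ← hzueq]; exact hR_ub su hsu_dxy
      have hlt : elDist 𝓗 (f su) zu < R + 1 := by
        rw [elDist_symm] at hzuR; linarith
      obtain ⟨c₀, hc₀, hcc₀⟩ := exists_chain_lt 𝓗 hlt
      obtain ⟨c₁, hc₁, hS₁, hcc₁⟩ := exists_S1_chain 𝓗 geo hc₀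
      obtain ⟨cu, hcu, hScu, hnascu, hcccu, -⟩ := normalize_chain 𝓗 hc₁ hS₁
      refine ⟨su, zu, cu, hsu, hzu, hcu, hScu, by rw [hsueq], hzuR, ?_, ?_, Or.inl hsueq⟩
      · have := nas_count 𝓗 cu hnascu
        linarith
      · intro w hw
        have h1 : elDist 𝓗 (f su) w ≤ ccost 𝓗 cu := (elDist_head_le 𝓗 hcu hw).1
        have h2 : elDist 𝓗 (f su) p ≤ elDist 𝓗 (f su) w + elDist 𝓗 w p :=
          elDist_triangle 𝓗 _ _ _
        have h3 : elDist 𝓗 w p = elDist 𝓗 p w := elDist_symm 𝓗 _ _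
        rw [hsueq] at h2
        linarith
    · push_neg at hcase
      refine ⟨0, x, [x], ⟨le_rfl, htstar.1⟩, hl.mem_head, ?_, List.isChain_singleton x, ?_,
          ?_, ?_, ?_, Or.inr hf.1⟩
      · rw [hf.1]; exact isChainL_single x
      · rw [hf.1]; linarith
      · rw [hf.1, elDist_self]; exact hR0
      · simp; linarith
      · intro w hw
        simp only [List.mem_singleton] at hw
        subst hw
        exact le_of_lt (hav w hl.mem_head)
  -- the w side (chain from zw to f sw)
  have wside : ∃ (sw : ℝ) (zw : X) (cw : List X), sw ∈ Icc tstar dxy ∧ zw ∈ l ∧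
      IsChainL zw (f sw) cw ∧ S1 𝓗 cw ∧
      elDist 𝓗 (f sw) p ≤ 2*R ∧ elDist 𝓗 zw (f sw) ≤ R ∧
      ((cw.length : ℝ)) ≤ 4*(R+1) + 2 ∧
      (∀ w ∈ cw, R - 1 ≤ elDist 𝓗 p w) ∧
      (elDist 𝓗 (f sw) p = 2*R ∨ f sw = y) := by
    by_cases hcase : 2*R ≤ elDist 𝓗 y p
    · have hcont : ContinuousOn (fun s => elDist 𝓗 (f s) p) (Icc tstar dxy) :=
        (el_geodesic_continuousOn 𝓗 hf).mono (Icc_subset_Icc htstar.1 le_rfl)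
      have hval : (2*R) ∈ Icc (elDist 𝓗 (f tstar) p) (elDist 𝓗 (f dxy) p) := by
        constructor
        · rw [← hp, elDist_self]; linarith
        · rw [hf.2.1]; exact hcase
      obtain ⟨sw, hsw, hsweq₀⟩ := intermediate_value_Icc htstar.2 hcont hval
      have hsweq : elDist 𝓗 (f sw) p = 2*R := hsweq₀
      obtain ⟨zw, hzw, hzweq⟩ := hρ_ex sw
      have hsw_dxy : sw ∈ Icc (0:ℝ) dxy := ⟨le_trans htstar.1 hsw.1, hsw.2⟩
      have hzwR : elDist 𝓗 zw (f sw) ≤ R := by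
        rw [elDist_symm, ← hzweq]; exact hR_ub sw hsw_dxy
      have hlt : elDist 𝓗 (f sw) zw < R + 1 := by
        rw [elDist_symm] at hzwR; linarith
      obtain ⟨c₀, hc₀, hcc₀⟩ := exists_chain_lt 𝓗 hlt
      obtain ⟨c₁, hc₁, hS₁, hcc₁⟩ := exists_S1_chain 𝓗 geo hc₀
      obtain ⟨cw₀, hcw₀, hScw₀, hnascw₀, hcccw₀, -⟩ := normalize_chain 𝓗 hc₁ hS₁
      refine ⟨sw, zw, cw₀.reverse, hsw, hzw, hcw₀.reverse, S1_reverse 𝓗 hScw₀,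
        by rw [hsweq], hzwR, ?_, ?_, Or.inl hsweq⟩
      · rw [List.length_reverse]
        have := nas_count 𝓗 cw₀ hnascw₀
        linarith
      · intro w hw
        rw [List.mem_reverse] at hw
        have h1 : elDist 𝓗 (f sw) w ≤ ccost 𝓗 cw₀ := (elDist_head_le 𝓗 hcw₀ hw).1
        have h2 : elDist 𝓗 (f sw) p ≤ elDist 𝓗 (f sw) w + elDist 𝓗 w p :=
          elDist_triangle 𝓗 _ _ _
        have h3 : elDist 𝓗 w p = elDist 𝓗 p w := elDist_symm 𝓗 _ _
        rw [hsweq] at h2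
        linarith
    · push_neg at hcase
      refine ⟨dxy, y, [y], ⟨htstar.2, le_rfl⟩, hl.mem_last, ?_, List.isChain_singleton y, ?_,
          ?_, ?_, ?_, Or.inr hf.2.1⟩
      · rw [hf.2.1]; exact isChainL_single y
      · rw [hf.2.1]; linarith
      · rw [hf.2.1, elDist_self]; exact hR0
      · simp; linarith
      · intro w hw
        simp only [List.mem_singleton] at hw
        subst hw
        exact le_of_lt (hav w hl.mem_last)
  obtain ⟨su, zu, cu, hsu, hzul, hcu, hScu, hsup, hzuR, hculen, hcuav, hsucase⟩ := uside
  obtain ⟨sw, zw, cw, hsw, hzwl, hcw, hScw, hswp, hzwR, hcwlen, hcwav, hswcase⟩ := wside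
  -- the middle chain
  obtain ⟨m₀, hm₀, hm₀mem, hSm₀, hm₀c⟩ := subchain_near_opt 𝓗 hl hno hS hzul hzwl
  obtain ⟨m', hm', hSm', hnasm', hm'c, hm'mem⟩ := normalize_chain 𝓗 hm₀ hSm₀
  have hzuzw : elDist 𝓗 zu zw ≤ 6*R := by
    have t1 := elDist_triangle 𝓗 zu (f su) zw
    have t2 := elDist_triangle 𝓗 (f su) p zw
    have t3 := elDist_triangle 𝓗 p (f sw) zw
    have s1 : elDist 𝓗 p (f sw) = elDist 𝓗 (f sw) p := elDist_symm 𝓗 _ _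
    have s2 : elDist 𝓗 (f sw) zw = elDist 𝓗 zw (f sw) := elDist_symm 𝓗 _ _
    linarith
  have hm'len : ((m'.length : ℝ)) ≤ 4*(6*R + 1) + 2 := by
    have h1 := nas_count 𝓗 m' hnasm'
    linarith
  -- glue everything into the detour σ
  obtain ⟨hσ1, -, hσ1len, hσ1mem⟩ := glue_spec 𝓗 hcu hm'
  have hSσ1 : S1 𝓗 (cu ++ m'.tail) := S1_glue 𝓗 hcu hm' hScu hSm'
  obtain ⟨hσ, -, hσlen, hσmem⟩ := glue_spec 𝓗 hσ1 hcw
  have hSσ : S1 𝓗 ((cu ++ m'.tail) ++ cw.tail) := S1_glue 𝓗 hσ1 hcw hSσ1 hScw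
  set σ := (cu ++ m'.tail) ++ cw.tail with hσdef
  have hσav : ∀ w ∈ σ, R - 1 ≤ elDist 𝓗 p w := by
    intro w hw
    rcases hσmem w hw with hw1 | hw1
    · rcases hσ1mem w hw1 with hw2 | hw2
      · exact hcuav w hw2
      · exact le_of_lt (hav w (hm₀mem w (hm'mem w hw2)))
    · exact hcwav w hw1
  have hσlenR : ((σ.length : ℝ)) ≤ 32*R + 18 := by
    have e1 : σ.length + 2 = cu.length + m'.length + cw.length := by omega
    have e2 : ((σ.length : ℝ)) + 2 = (cu.length : ℝ) + (m'.length : ℝ) + (cw.length : ℝ) := by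
      exact_mod_cast e1
    linarith
  -- the subgeodesic from f su to f sw
  have hsusw : su ≤ sw := le_trans hsu.2 hsw.1
  have hsu_dxy : su ∈ Icc (0:ℝ) dxy := ⟨hsu.1, le_trans hsu.2 (le_trans hsw.1 hsw.2)⟩
  have hsw_dxy : sw ∈ Icc (0:ℝ) dxy := ⟨le_trans hsu.1 (le_trans hsu.2 hsw.1), hsw.2⟩
  have hduw : dist (f su) (f sw) = sw - su := by
    rw [hf.2.2 su hsu_dxy sw hsw_dxy, abs_of_nonpos (by linarith)]
    ring
  have hf' : IsGeodesicFrom (fun r => f (su + r)) (f su) (f sw) := by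
    refine ⟨?_, ?_, ?_⟩
    · show f (su + 0) = f su
      rw [add_zero]
    · show f (su + dist (f su) (f sw)) = f sw
      rw [hduw]; congr 1; ring
    intro r hr r' hr'
    show dist (f (su + r)) (f (su + r')) = |r - r'|
    rw [hduw] at hr hr'
    have h1 : su + r ∈ Icc (0:ℝ) dxy := ⟨by linarith [hr.1, hsu.1], by
      have := hr.2; have := hsw_dxy.2; linarith⟩
    have h2 : su + r' ∈ Icc (0:ℝ) dxy := ⟨by linarith [hr'.1, hsu.1], by
      have := hr'.2; have := hsw_dxy.2; linarith⟩
    rw [hf.2.2 _ h1 _ h2]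
    congr 1; ring
  have hconstw : IsGeodesicFrom (fun _ : ℝ => f sw) (f sw) (f sw) := by
    refine ⟨rfl, rfl, ?_⟩
    intro s hs t' ht'
    rw [dist_self] at hs ht'
    have hs' : s = 0 := le_antisymm hs.2 hs.1
    have ht'' : t' = 0 := le_antisymm ht'.2 ht'.1
    subst hs'; subst ht''
    simp
  obtain ⟨g, hg⟩ := geo (f su) (f sw)
  have htparam : tstar - su ∈ Icc (0:ℝ) (dist (f su) (f sw)) := by
    rw [hduw]
    exact ⟨by linarith [hsu.2], by linarith [hsw.1]⟩
  have hsum_eq : su + (tstar - su) = tstar := by ring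
  rcases slim_triangle hδ hX hf' hg hconstw htparam with ⟨s, hs, hq₀⟩ | ⟨s, hs, hq₀⟩
  · -- the main case: q = g s
    have hq : dist p (g s) ≤ 3*δ := by
      have h' : dist (f (su + (tstar - su))) (g s) ≤ 3*δ := hq₀
      rwa [hsum_eq] at h'
    -- apply the dyadic lemma to σ along g
    have hNne : 1 ≤ σ.length := List.length_pos_iff.mpr hσ.ne_nil
    obtain ⟨k, hk1N, hNk₀, hklow⟩ := exists_log_bound σ.length hNne
    have hNk : σ.length ≤ 2^k + 1 := hNk₀.trans (Nat.le_succ _)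
    obtain ⟨z, hzσ, hzd⟩ := dyadic 𝓗 geo hδ hX hC hQC k hσ hSσ hNk hg s hs
    have hstar : R - 1 ≤ 3*δ + ((C + 6*δ + 3) + 3*δ*k) := by
      have h1 := hσav z hzσ
      have h2 : elDist 𝓗 p z ≤ elDist 𝓗 p (g s) + elDist 𝓗 (g s) z :=
        elDist_triangle 𝓗 _ _ _
      have h3 : elDist 𝓗 p (g s) ≤ dist p (g s) := elDist_le_dist 𝓗 _ _
      linarith
    -- numeric endgame
    have hsq : (((k:ℝ) - 1))^2 ≤ 4 * ((σ.length:ℕ):ℝ) := by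
      have h1 : (((k-1 : ℕ):ℝ))^2 ≤ 4 * 2^(k-1 : ℕ) := sq_le_two_pow (k-1)
      have h2 : ((2:ℝ))^(k-1 : ℕ) ≤ ((σ.length:ℕ):ℝ) := by exact_mod_cast hklow
      have h3 : ((k-1 : ℕ):ℝ) = (k:ℝ) - 1 := by
        rw [Nat.cast_sub hk1N]; simp
      rw [h3] at h1
      linarith
    have hk1 : (1:ℝ) ≤ (k:ℝ) := by exact_mod_cast hk1N
    have hfinal : R ≤ Aconst δ C :=
      endgame hδ hC hk1 hσlenR hsq hstar
    linarith
  · -- degenerate case: p is 3δ-close to f sw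
    have hq' : dist p (f sw) ≤ 3*δ := by
      have h' : dist (f (su + (tstar - su))) ((fun _ : ℝ => f sw) s) ≤ 3*δ := hq₀
      rwa [hsum_eq] at h'
    have hle : elDist 𝓗 (f sw) p ≤ 3*δ := by
      rw [elDist_symm]
      exact (elDist_le_dist 𝓗 _ _).trans (by rwa [])
    rcases hswcase with hh | hh
    · rw [hh] at hle; linarith
    · rw [hh] at hle
      have := hav y hl.mem_last
      rw [elDist_symm] at hle
      linarith

/-! ### geodesics are electrically taut -/

lemma taut {δ C : ℝ} (geo : GeodesicSpace X) (hδ : 0 ≤ δ) (hX : DeltaHyperbolic X δ)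
    (hC : 0 ≤ C) (hQC : ∀ A ∈ 𝓗, QuasiconvexSubset C A)
    {x y : X} {f : ℝ → X} (hf : IsGeodesicFrom f x y)
    {t : ℝ} (ht : t ∈ Icc (0:ℝ) (dist x y)) :
    elDist 𝓗 x (f t) + elDist 𝓗 (f t) y ≤ elDist 𝓗 x y + 2*(Aconst δ C) + 1 := by
  obtain ⟨l, hl, hS, -, hc⟩ := exists_good_chain 𝓗 geo x y one_pos
  obtain ⟨z, hz, hd⟩ := tracking 𝓗 geo hδ hX hC hQC hl hS hc hf t ht
  obtain ⟨p, s, -, hxz, hzy, hcsplit⟩ := mem_decomp 𝓗 hl hz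
  have e1 : elDist 𝓗 x z ≤ ccost 𝓗 (p ++ [z]) := elDist_le_ccost 𝓗 hxz
  have e2 : elDist 𝓗 z y ≤ ccost 𝓗 (z :: s) := elDist_le_ccost 𝓗 hzy
  have t1 : elDist 𝓗 x (f t) ≤ elDist 𝓗 x z + elDist 𝓗 z (f t) := elDist_triangle 𝓗 _ _ _
  have t2 : elDist 𝓗 (f t) y ≤ elDist 𝓗 (f t) z + elDist 𝓗 z y := elDist_triangle 𝓗 _ _ _
  have s1 : elDist 𝓗 z (f t) = elDist 𝓗 (f t) z := elDist_symm 𝓗 _ _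
  linarith

/-! ### the center of a triangle is close to the Gromov product -/

lemma center {δ C : ℝ} (geo : GeodesicSpace X) (hδ : 0 ≤ δ) (hX : DeltaHyperbolic X δ)
    (hC : 0 ≤ C) (hQC : ∀ A ∈ 𝓗, QuasiconvexSubset C A)
    (o x z : X) {f : ℝ → X} (hf : IsGeodesicFrom f x z) :
    ∃ t ∈ Icc (0:ℝ) (dist x z),
      elDist 𝓗 o (f t) ≤ elGromovProd 𝓗 o x z + (2*(Aconst δ C) + 1) + 6*δ + 2 := by
  obtain ⟨g, hg⟩ := geo x o
  obtain ⟨h, hh⟩ := geo o z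
  set dxz := dist x z with hdxz
  have hdxz0 : (0:ℝ) ≤ dxz := dist_nonneg
  set S : Set ℝ := {t | t ∈ Icc (0:ℝ) dxz ∧
    ∃ s ∈ Icc (0:ℝ) (dist x o), dist (f t) (g s) ≤ 3*δ} with hSdef
  have h0S : (0:ℝ) ∈ S := by
    refine ⟨⟨le_rfl, hdxz0⟩, 0, ⟨le_rfl, dist_nonneg⟩, ?_⟩
    rw [hf.1, hg.1, dist_self]
    linarith
  have hSne : S.Nonempty := ⟨0, h0S⟩
  have hSbdd : BddAbove S := ⟨dxz, fun t ht => ht.1.2⟩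
  set tstar := sSup S with htstar
  have htIcc : tstar ∈ Icc (0:ℝ) dxz :=
    ⟨le_csSup hSbdd h0S, csSup_le hSne fun t ht => ht.1.2⟩
  -- side 1: close to the geodesic [x,o]
  have hq₁ : ∃ s₁ ∈ Icc (0:ℝ) (dist x o), dist (f tstar) (g s₁) ≤ 3*δ + 1 := by
    obtain ⟨t, htS, htgt⟩ := exists_lt_of_lt_csSup hSne (show tstar - 1 < tstar by linarith)
    have htle : t ≤ tstar := le_csSup hSbdd htS
    obtain ⟨htIcc', s₁, hs₁, hd₁⟩ := htS
    have hdist : dist (f tstar) (f t) = |tstar - t| := hf.2.2 tstar htIcc t htIcc'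
    have habs : |tstar - t| ≤ 1 := by rw [abs_of_nonneg (by linarith)]; linarith
    refine ⟨s₁, hs₁, ?_⟩
    calc dist (f tstar) (g s₁) ≤ dist (f tstar) (f t) + dist (f t) (g s₁) := dist_triangle _ _ _
    _ ≤ 1 + (3*δ) := by rw [hdist]; exact add_le_add habs hd₁
    _ = 3*δ + 1 := by ring
  -- side 2: close to the geodesic [o,z]
  have hq₂ : ∃ s₂ ∈ Icc (0:ℝ) (dist o z), dist (f tstar) (h s₂) ≤ 3*δ + 1 := by
    by_cases hend : dxz ≤ tstar
    · have : tstar = dxz := le_antisymm htIcc.2 hend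
      refine ⟨dist o z, ⟨dist_nonneg, le_rfl⟩, ?_⟩
      rw [this, hf.2.1, hh.2.1, dist_self]
      linarith
    · push_neg at hend
      set t := min dxz (tstar + 1) with htdef
      have htgt : tstar < t := by
        rw [htdef, lt_min_iff]
        exact ⟨hend, by linarith⟩
      have htIcc' : t ∈ Icc (0:ℝ) dxz := by
        constructor
        · rw [htdef, le_min_iff]; exact ⟨hdxz0, by linarith [htIcc.1]⟩
        · exact min_le_left _ _
      have htnS : t ∉ S := fun hmem => absurd (le_csSup hSbdd hmem) (not_le.mpr htgt)
      rcases slim_triangle hδ hX hf hg hh htIcc' with ⟨s, hs, hd⟩ | ⟨s, hs, hd⟩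
      · exact absurd ⟨htIcc', s, hs, hd⟩ htnS
      · refine ⟨s, hs, ?_⟩
        have hdist : dist (f tstar) (f t) = |tstar - t| := hf.2.2 tstar htIcc t htIcc'
        have habs : |tstar - t| ≤ 1 := by
          rw [abs_of_nonpos (by linarith)]
          rw [htdef]
          have := min_le_right dxz (tstar + 1)
          linarith
        calc dist (f tstar) (h s) ≤ dist (f tstar) (f t) + dist (f t) (h s) := dist_triangle _ _ _
        _ ≤ 1 + (3*δ) := by rw [hdist]; exact add_le_add habs hd
        _ = 3*δ + 1 := by ring
  obtain ⟨s₁, hs₁, hd₁⟩ := hq₁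
  obtain ⟨s₂, hs₂, hd₂⟩ := hq₂
  set p := f tstar with hp
  have taut1 : elDist 𝓗 x (g s₁) + elDist 𝓗 (g s₁) o ≤ elDist 𝓗 x o + 2*(Aconst δ C) + 1 :=
    taut 𝓗 geo hδ hX hC hQC hg hs₁
  have taut2 : elDist 𝓗 o (h s₂) + elDist 𝓗 (h s₂) z ≤ elDist 𝓗 o z + 2*(Aconst δ C) + 1 :=
    taut 𝓗 geo hδ hX hC hQC hh hs₂
  refine ⟨tstar, htIcc, ?_⟩
  -- assemble
  have b1 : elDist 𝓗 o p ≤ elDist 𝓗 o (g s₁) + (3*δ + 1) := by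
    have := elDist_triangle 𝓗 o (g s₁) p
    have h2 : elDist 𝓗 (g s₁) p ≤ dist (g s₁) p := elDist_le_dist 𝓗 _ _
    have h3 : dist (g s₁) p = dist p (g s₁) := dist_comm _ _
    rw [hp] at *
    linarith
  have b2 : elDist 𝓗 o p ≤ elDist 𝓗 o (h s₂) + (3*δ + 1) := by
    have := elDist_triangle 𝓗 o (h s₂) p
    have h2 : elDist 𝓗 (h s₂) p ≤ dist (h s₂) p := elDist_le_dist 𝓗 _ _
    have h3 : dist (h s₂) p = dist p (h s₂) := dist_comm _ _
    rw [hp] at *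
    linarith
  have c1 : elDist 𝓗 x p ≤ elDist 𝓗 x (g s₁) + (3*δ + 1) := by
    have := elDist_triangle 𝓗 x (g s₁) p
    have h2 : elDist 𝓗 (g s₁) p ≤ dist (g s₁) p := elDist_le_dist 𝓗 _ _
    have h3 : dist (g s₁) p = dist p (g s₁) := dist_comm _ _
    linarith
  have c2 : elDist 𝓗 p z ≤ elDist 𝓗 (h s₂) z + (3*δ + 1) := by
    have := elDist_triangle 𝓗 p (h s₂) z
    have h2 : elDist 𝓗 p (h s₂) ≤ dist p (h s₂) := elDist_le_dist 𝓗 _ _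
    linarith
  have sgo : elDist 𝓗 (g s₁) o = elDist 𝓗 o (g s₁) := elDist_symm 𝓗 _ _
  have tri : elDist 𝓗 x z ≤ elDist 𝓗 x p + elDist 𝓗 p z := elDist_triangle 𝓗 _ _ _
  have sxo : elDist 𝓗 x o = elDist 𝓗 o x := elDist_symm 𝓗 _ _
  unfold elGromovProd
  -- 2*e(o,p) ≤ e(o,x) + e(o,z) - e(x,z) + 2K + 4(3δ+1)
  linarith

/-! ### the main theorem, up to choice of Δ -/

lemma main_ineq {δ C : ℝ} (geo : GeodesicSpace X) (hδ : 0 ≤ δ) (hX : DeltaHyperbolic X δ)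
    (hC : 0 ≤ C) (hQC : ∀ A ∈ 𝓗, QuasiconvexSubset C A) (o x y z : X) :
    min (elGromovProd 𝓗 o x y) (elGromovProd 𝓗 o y z) ≤
      elGromovProd 𝓗 o x z + (4*(Aconst δ C) + 12*δ + 10) := by
  obtain ⟨f, hf⟩ := geo x z
  obtain ⟨g, hg⟩ := geo x y
  obtain ⟨h, hh⟩ := geo y z
  obtain ⟨t, ht, hcen⟩ := center 𝓗 geo hδ hX hC hQC o x z hf
  have hA0 := Aconst_nonneg (δ := δ) (C := C) hδ hC
  rcases slim_triangle hδ hX hf hg hh ht with ⟨s, hs, hd⟩ | ⟨s, hs, hd⟩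
  · -- close to [x,y] : bound ⟨x,y⟩
    have htaut : elDist 𝓗 x (g s) + elDist 𝓗 (g s) y ≤ elDist 𝓗 x y + 2*(Aconst δ C) + 1 :=
      taut 𝓗 geo hδ hX hC hQC hg hs
    have b1 : elDist 𝓗 o x ≤ elDist 𝓗 o (g s) + elDist 𝓗 x (g s) := by
      have := elDist_triangle 𝓗 o (g s) x
      have h2 : elDist 𝓗 (g s) x = elDist 𝓗 x (g s) := elDist_symm 𝓗 _ _
      linarith
    have b2 : elDist 𝓗 o y ≤ elDist 𝓗 o (g s) + elDist 𝓗 (g s) y :=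
      elDist_triangle 𝓗 _ _ _
    have b3 : elDist 𝓗 o (g s) ≤ elDist 𝓗 o (f t) + (3*δ) := by
      have := elDist_triangle 𝓗 o (f t) (g s)
      have h2 : elDist 𝓗 (f t) (g s) ≤ dist (f t) (g s) := elDist_le_dist 𝓗 _ _
      linarith
    have hmin : min (elGromovProd 𝓗 o x y) (elGromovProd 𝓗 o y z) ≤ elGromovProd 𝓗 o x y :=
      min_le_left _ _
    unfold elGromovProd at hmin hcen ⊢
    linarith
  · -- close to [y,z] : bound ⟨y,z⟩
    have htaut : elDist 𝓗 y (h s) + elDist 𝓗 (h s) z ≤ elDist 𝓗 y z + 2*(Aconst δ C) + 1 :=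
      taut 𝓗 geo hδ hX hC hQC hh hs
    have b1 : elDist 𝓗 o y ≤ elDist 𝓗 o (h s) + elDist 𝓗 y (h s) := by
      have := elDist_triangle 𝓗 o (h s) y
      have h2 : elDist 𝓗 (h s) y = elDist 𝓗 y (h s) := elDist_symm 𝓗 _ _
      linarith
    have b2 : elDist 𝓗 o z ≤ elDist 𝓗 o (h s) + elDist 𝓗 (h s) z :=
      elDist_triangle 𝓗 _ _ _
    have b3 : elDist 𝓗 o (h s) ≤ elDist 𝓗 o (f t) + (3*δ) := by
      have := elDist_triangle 𝓗 o (f t) (h s)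
      have h2 : elDist 𝓗 (f t) (h s) ≤ dist (f t) (h s) := elDist_le_dist 𝓗 _ _
      linarith
    have hmin : min (elGromovProd 𝓗 o x y) (elGromovProd 𝓗 o y z) ≤ elGromovProd 𝓗 o y z :=
      min_le_right _ _
    unfold elGromovProd at hmin hcen ⊢
    linarith

end ELProof

/-- Farb, Klarreich: electrocuting a C-quasiconvex D-separated family of
subsets of a δ-hyperbolic geodesic space yields a Δ(δ,C,D)-hyperbolic electric space. -/
theorem electric_space_hyperbolic (δ C D : ℝ) (hδ : 0 ≤ δ) (hC : 0 ≤ C) (hD : 0 < D) :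
    ∃ Δ : ℝ, 0 ≤ Δ ∧
      ∀ (X : Type) [MetricSpace X], GeodesicSpace X → DeltaHyperbolic X δ →
        ∀ 𝓗 : Set (Set X), (∀ A ∈ 𝓗, QuasiconvexSubset C A) → SeparatedFamily D 𝓗 →
          ElDeltaHyperbolic X 𝓗 Δ := by
  refine ⟨4*(ELProof.Aconst δ C) + 12*δ + 10, ?_, ?_⟩
  · have := ELProof.Aconst_nonneg (δ := δ) (C := C) hδ hC
    linarith
  · intro X _ geo hX 𝓗 hQC _
    intro o x y z
    exact ELProof.main_ineq 𝓗 geo hδ hX hC hQC o x y z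
end

section
/- Let X be a δ-hyperbolic geodesic metric space and H a collection of C-quasiconvex, D-separated subsets. For every P > 0 there exists K > 0 such that: if β is any P-quasigeodesic in the electric metric from x to y, and γ is a hyperbolic geodesic in X from x to y, then β is contained in the K-neighborhood of γ with respect to the electric metric. -/
open Metric Set

/-- `β` is a `P`-quasigeodesic with respect to the electric pseudo-metric. -/
def ElQuasigeodesicOn {X : Type*} [MetricSpace X] (𝓗 : Set (Set X)) (P : ℝ)
    (S : Set ℝ) (β : ℝ → X) : Prop :=
  ∀ s ∈ S, ∀ t ∈ S,
    (1/P) * |s - t| - P ≤ elDist 𝓗 (β s) (β t) ∧ elDist 𝓗 (β s) (β t) ≤ P * |s - t| + P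

/-! ### Auxiliary development -/

namespace ElTrack

open Classical

variable {X : Type} [MetricSpace X] {𝓗 : Set (Set X)}

/- ## stepCost basics -/

lemma stepCost_nonneg (𝓗 : Set (Set X)) (a b : X) : 0 ≤ stepCost 𝓗 a b := by
  unfold stepCost
  split
  · exact le_min zero_le_one dist_nonneg
  · exact dist_nonneg

lemma stepCost_le_dist (𝓗 : Set (Set X)) (a b : X) : stepCost 𝓗 a b ≤ dist a b := by
  unfold stepCost
  split
  · exact min_le_right _ _
  · exact le_rfl

lemma stepCost_comm (𝓗 : Set (Set X)) (a b : X) : stepCost 𝓗 a b = stepCost 𝓗 b a := by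
  unfold stepCost
  have h : (∃ A ∈ 𝓗, a ∈ A ∧ b ∈ A) ↔ (∃ A ∈ 𝓗, b ∈ A ∧ a ∈ A) := by
    constructor <;> rintro ⟨A, hA, h1, h2⟩ <;> exact ⟨A, hA, h2, h1⟩
  rw [dist_comm]
  by_cases hc : ∃ A ∈ 𝓗, a ∈ A ∧ b ∈ A
  · rw [if_pos hc, if_pos (h.mp hc)]
  · rw [if_neg hc, if_neg (fun hx => hc (h.mpr hx))]

lemma stepCost_of_mem {A : Set X} (hA : A ∈ 𝓗) {a b : X} (ha : a ∈ A) (hb : b ∈ A) :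
    stepCost 𝓗 a b = min 1 (dist a b) := by
  unfold stepCost
  rw [if_pos ⟨A, hA, ha, hb⟩]

lemma stepCost_le_one_of_mem {A : Set X} (hA : A ∈ 𝓗) {a b : X} (ha : a ∈ A) (hb : b ∈ A) :
    stepCost 𝓗 a b ≤ 1 := by
  rw [stepCost_of_mem hA ha hb]; exact min_le_left _ _

/- ## chains as lists -/

/-- cost of the chain starting at `x` and passing through the vertices of `l` in order. -/
noncomputable def cCost (𝓗 : Set (Set X)) : X → List X → ℝ
  | _, [] => 0
  | x, b :: l => stepCost 𝓗 x b + cCost 𝓗 b l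

/-- last vertex of the chain `(x, l)`. -/
def lastV (x : X) (l : List X) : X := (x :: l).getLast (List.cons_ne_nil _ _)

@[simp] lemma lastV_nil (x : X) : lastV x ([] : List X) = x := rfl

@[simp] lemma lastV_cons (x b : X) (l : List X) : lastV x (b :: l) = lastV b l := by
  unfold lastV
  exact List.getLast_cons (List.cons_ne_nil _ _)

@[simp] lemma cCost_nil (x : X) : cCost 𝓗 x [] = 0 := rfl

@[simp] lemma cCost_cons (x b : X) (l : List X) :
    cCost 𝓗 x (b :: l) = stepCost 𝓗 x b + cCost 𝓗 b l := rfl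

lemma cCost_nonneg (x : X) (l : List X) : 0 ≤ cCost 𝓗 x l := by
  induction l generalizing x with
  | nil => simp
  | cons b l ih => simpa using add_nonneg (stepCost_nonneg 𝓗 x b) (ih b)

lemma cCost_append (x : X) (l₁ l₂ : List X) :
    cCost 𝓗 x (l₁ ++ l₂) = cCost 𝓗 x l₁ + cCost 𝓗 (lastV x l₁) l₂ := by
  induction l₁ generalizing x with
  | nil => simp
  | cons b l ih => simp [ih b]; ring

lemma lastV_append (x : X) (l₁ l₂ : List X) :
    lastV x (l₁ ++ l₂) = lastV (lastV x l₁) l₂ := by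
  induction l₁ generalizing x with
  | nil => simp
  | cons b l ih => simp [ih b]

/- ## elDist basics -/

lemma elDist_set_nonempty (x y : X) :
    {d : ℝ | ∃ n : ℕ, ∃ c : ℕ → X, c 0 = x ∧ c n = y ∧
      d = ∑ i ∈ Finset.range n, stepCost 𝓗 (c i) (c (i + 1))}.Nonempty := by
  refine ⟨stepCost 𝓗 x y, 1, fun i => if i = 0 then x else y, by simp, by simp, ?_⟩
  simp

lemma elDist_set_nonneg (x y : X) :
    ∀ d ∈ {d : ℝ | ∃ n : ℕ, ∃ c : ℕ → X, c 0 = x ∧ c n = y ∧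
      d = ∑ i ∈ Finset.range n, stepCost 𝓗 (c i) (c (i + 1))}, 0 ≤ d := by
  rintro d ⟨n, c, h0, hn, rfl⟩
  exact Finset.sum_nonneg fun i _ => stepCost_nonneg 𝓗 _ _

lemma elDist_set_bddBelow (x y : X) :
    BddBelow {d : ℝ | ∃ n : ℕ, ∃ c : ℕ → X, c 0 = x ∧ c n = y ∧
      d = ∑ i ∈ Finset.range n, stepCost 𝓗 (c i) (c (i + 1))} :=
  ⟨0, fun d hd => elDist_set_nonneg x y d hd⟩

lemma elDist_nonneg (𝓗 : Set (Set X)) (x y : X) : 0 ≤ elDist 𝓗 x y :=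
  Real.sInf_nonneg (elDist_set_nonneg x y)

@[simp] lemma elDist_self (𝓗 : Set (Set X)) (x : X) : elDist 𝓗 x x = 0 := by
  refine le_antisymm ?_ (elDist_nonneg 𝓗 x x)
  apply csInf_le (elDist_set_bddBelow x x)
  exact ⟨0, fun _ => x, rfl, rfl, by simp⟩

/-- the list of vertices `c 1, …, c n` of a function-chain. -/
def tailList : ℕ → (ℕ → X) → List X
  | 0, _ => []
  | n + 1, c => c 1 :: tailList n (fun i => c (i + 1))

lemma tailList_spec : ∀ (n : ℕ) (c : ℕ → X),
    lastV (c 0) (tailList n c) = c n ∧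
    cCost 𝓗 (c 0) (tailList n c) = ∑ i ∈ Finset.range n, stepCost 𝓗 (c i) (c (i + 1)) := by
  intro n
  induction n with
  | zero => intro c; simp [tailList]
  | succ n ih =>
    intro c
    obtain ⟨h1, h2⟩ := ih (fun i => c (i + 1))
    constructor
    · simpa [tailList] using h1
    · rw [Finset.sum_range_succ']
      simp only [tailList, cCost_cons]
      rw [h2]
      ring

lemma getD_zero (x d : X) (l : List X) : (x :: l).getD 0 d = x := rfl

lemma getD_succ (x d : X) (l : List X) (i : ℕ) : (x :: l).getD (i+1) d = l.getD i d := rfl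

lemma getD_lastV : ∀ (l : List X) (x d : X), (x :: l).getD l.length d = lastV x l := by
  intro l
  induction l with
  | nil => intro x d; simp [lastV]
  | cons b l ih => intro x d; rw [List.length_cons, getD_succ, ih b d, lastV_cons]

lemma cCost_eq_sum : ∀ (l : List X) (x d : X),
    cCost 𝓗 x l = ∑ i ∈ Finset.range l.length,
      stepCost 𝓗 ((x :: l).getD i d) ((x :: l).getD (i + 1) d) := by
  intro l
  induction l with
  | nil => intro x d; simp
  | cons b l ih =>
    intro x d
    rw [List.length_cons, Finset.sum_range_succ']
    have h1 : ∀ i : ℕ, (x :: b :: l).getD (i + 1) d = (b :: l).getD i d := fun i => rfl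
    simp only [h1, getD_zero]
    rw [cCost_cons, ih b d]
    ring

/-- elDist is at most the cost of any chain. -/
lemma elDist_le_cCost (x : X) (l : List X) :
    elDist 𝓗 x (lastV x l) ≤ cCost 𝓗 x l := by
  apply csInf_le (elDist_set_bddBelow x _)
  exact ⟨l.length, fun i => (x :: l).getD i x, rfl, getD_lastV l x x, cCost_eq_sum l x x⟩

lemma elDist_le_cCost' (x y : X) (l : List X) (h : lastV x l = y) :
    elDist 𝓗 x y ≤ cCost 𝓗 x l := h ▸ elDist_le_cCost x l

lemma elDist_le_stepCost (x y : X) : elDist 𝓗 x y ≤ stepCost 𝓗 x y := by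
  have := elDist_le_cCost (𝓗 := 𝓗) x [y]
  simpa [lastV] using this

lemma elDist_le_dist (x y : X) : elDist 𝓗 x y ≤ dist x y :=
  (elDist_le_stepCost x y).trans (stepCost_le_dist 𝓗 x y)

/-- extraction of an ε-optimal chain. -/
lemma exists_chain (x y : X) {ε : ℝ} (hε : 0 < ε) :
    ∃ l : List X, lastV x l = y ∧ cCost 𝓗 x l < elDist 𝓗 x y + ε := by
  have h : sInf {d : ℝ | ∃ n : ℕ, ∃ c : ℕ → X, c 0 = x ∧ c n = y ∧
      d = ∑ i ∈ Finset.range n, stepCost 𝓗 (c i) (c (i + 1))} < elDist 𝓗 x y + ε := by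
    have : elDist 𝓗 x y < elDist 𝓗 x y + ε := by linarith
    exact this
  obtain ⟨d, hd, hlt⟩ := exists_lt_of_csInf_lt (elDist_set_nonempty x y) h
  obtain ⟨n, c, h0, hn, rfl⟩ := hd
  obtain ⟨hl, hc⟩ := tailList_spec (𝓗 := 𝓗) n c
  exact ⟨tailList n c, by rw [h0] at hl; rw [hl, hn], by rw [h0] at hc; rw [hc]; exact hlt⟩

lemma elDist_triangle (𝓗 : Set (Set X)) (x y z : X) :
    elDist 𝓗 x z ≤ elDist 𝓗 x y + elDist 𝓗 y z := by
  refine le_of_forall_pos_le_add fun ε hε => ?_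
  obtain ⟨l₁, hl₁, hc₁⟩ := exists_chain (𝓗 := 𝓗) x y (half_pos hε)
  obtain ⟨l₂, hl₂, hc₂⟩ := exists_chain (𝓗 := 𝓗) y z (half_pos hε)
  have hlast : lastV x (l₁ ++ l₂) = z := by rw [lastV_append, hl₁, hl₂]
  have := elDist_le_cCost' (𝓗 := 𝓗) x z (l₁ ++ l₂) hlast
  rw [cCost_append, hl₁] at this
  linarith

lemma cCost_reverse : ∀ (l : List X) (x : X),
    cCost 𝓗 (lastV x l) ((x :: l).reverse.tail) = cCost 𝓗 x l ∧
    lastV (lastV x l) ((x :: l).reverse.tail) = x := by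
  intro l
  induction l with
  | nil => intro x; simp
  | cons b l ih =>
    intro x
    obtain ⟨hc, hl⟩ := ih b
    have hrev : (x :: b :: l).reverse = (b :: l).reverse ++ [x] := by
      simp
    have htl : (x :: b :: l).reverse.tail = (b :: l).reverse.tail ++ [x] := by
      rw [hrev]
      have : (b :: l).reverse ≠ [] := by simp
      cases h : (b :: l).reverse with
      | nil => exact absurd h this
      | cons a t => simp
    rw [lastV_cons, htl, cCost_append, lastV_append, hc, hl]
    constructor
    · simp only [cCost_cons, cCost_nil, stepCost_comm 𝓗 b x]; ring
    · simp [lastV]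

lemma elDist_comm (𝓗 : Set (Set X)) (x y : X) : elDist 𝓗 x y = elDist 𝓗 y x := by
  have key : ∀ a b : X, elDist 𝓗 a b ≤ elDist 𝓗 b a := by
    intro a b
    refine le_of_forall_pos_le_add fun ε hε => ?_
    obtain ⟨l, hl, hc⟩ := exists_chain (𝓗 := 𝓗) b a hε
    obtain ⟨hc', hl'⟩ := cCost_reverse (𝓗 := 𝓗) l b
    rw [hl] at hc' hl'
    have := elDist_le_cCost' (𝓗 := 𝓗) a b _ hl'
    rw [hc'] at this
    linarith
  exact le_antisymm (key x y) (key y x)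

/-- every vertex of a chain is electrically within the chain cost of the start. -/
lemma elDist_start_le (x : X) (l : List X) : ∀ v ∈ x :: l, elDist 𝓗 x v ≤ cCost 𝓗 x l := by
  induction l generalizing x with
  | nil => intro v hv; simp at hv; simp [hv]
  | cons b l ih =>
    intro v hv
    rcases List.mem_cons.mp hv with h | h
    · simp [h, elDist_nonneg, cCost_nonneg, add_nonneg (stepCost_nonneg 𝓗 x b) (cCost_nonneg b l)]
    · calc elDist 𝓗 x v ≤ elDist 𝓗 x b + elDist 𝓗 b v := elDist_triangle 𝓗 x b v
        _ ≤ stepCost 𝓗 x b + cCost 𝓗 b l :=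
            add_le_add (elDist_le_stepCost x b) (ih b v h)
        _ = cCost 𝓗 x (b :: l) := rfl

/-- every vertex of a chain is electrically within the chain cost of the end. -/
lemma elDist_end_le (x : X) (l : List X) :
    ∀ v ∈ x :: l, elDist 𝓗 v (lastV x l) ≤ cCost 𝓗 x l := by
  induction l generalizing x with
  | nil => intro v hv; simp at hv; simp [hv]
  | cons b l ih =>
    intro v hv
    rcases List.mem_cons.mp hv with h | h
    · subst h
      calc elDist 𝓗 v (lastV v (b :: l)) ≤ cCost 𝓗 v (b :: l) := elDist_le_cCost v (b :: l)
        _ = cCost 𝓗 v (b :: l) := rfl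
    · rw [lastV_cons]
      calc elDist 𝓗 v (lastV b l) ≤ cCost 𝓗 b l := ih b v h
        _ ≤ stepCost 𝓗 x b + cCost 𝓗 b l := by
            have := stepCost_nonneg 𝓗 x b; linarith
        _ = cCost 𝓗 x (b :: l) := rfl

/- ## normalization of chains -/

lemma min_one_subadd {a b : ℝ} (ha : 0 ≤ a) (hb : 0 ≤ b) :
    min 1 (a + b) ≤ min 1 a + min 1 b := by
  rcases le_total 1 a with h | h
  · rw [min_eq_left h]
    have : min 1 (a+b) ≤ 1 := min_le_left _ _
    have : 0 ≤ min 1 b := le_min zero_le_one hb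
    linarith [min_le_left (1:ℝ) (a+b)]
  · rw [min_eq_right h]
    rcases le_total 1 b with h' | h'
    · have := min_le_left (1:ℝ) (a+b); rw [min_eq_left h']; linarith
    · rw [min_eq_right h']
      exact (min_le_right _ _)

lemma stepCost_dichotomy {D : ℝ} (hsep : SeparatedFamily D 𝓗) (hD : 0 < D) (a b c : X) :
    stepCost 𝓗 a c ≤ stepCost 𝓗 a b + stepCost 𝓗 b c ∨
      1 ≤ stepCost 𝓗 a b + stepCost 𝓗 b c := by
  classical
  by_cases hab : ∃ A ∈ 𝓗, a ∈ A ∧ b ∈ A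
  · by_cases hbc : ∃ A ∈ 𝓗, b ∈ A ∧ c ∈ A
    · obtain ⟨A, hA, haA, hbA⟩ := hab
      obtain ⟨B, hB, hbB, hcB⟩ := hbc
      by_cases hAB : A = B
      · subst hAB
        left
        have hac : stepCost 𝓗 a c = min 1 (dist a c) := stepCost_of_mem hA haA hcB
        rw [hac, stepCost_of_mem hA haA hbA, stepCost_of_mem hA hbA hcB]
        calc min 1 (dist a c) ≤ min 1 (dist a b + dist b c) := by
              apply min_le_min le_rfl (dist_triangle a b c)
          _ ≤ min 1 (dist a b) + min 1 (dist b c) :=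
              min_one_subadd dist_nonneg dist_nonneg
      · exfalso
        have := hsep A hA B hB hAB b hbA b hbB
        rw [dist_self] at this
        linarith
    · -- b,c honest step
      have hbc' : stepCost 𝓗 b c = dist b c := by unfold stepCost; rw [if_neg hbc]
      obtain ⟨A, hA, haA, hbA⟩ := hab
      rw [stepCost_of_mem hA haA hbA]
      rcases le_total (dist a b) 1 with h1 | h1
      · left
        rw [min_eq_right h1, hbc']
        calc stepCost 𝓗 a c ≤ dist a c := stepCost_le_dist 𝓗 a c
          _ ≤ dist a b + dist b c := dist_triangle a b c
      · right
        rw [min_eq_left h1, hbc']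
        have := dist_nonneg (x := b) (y := c)
        linarith
  · by_cases hbc : ∃ A ∈ 𝓗, b ∈ A ∧ c ∈ A
    · have hab' : stepCost 𝓗 a b = dist a b := by unfold stepCost; rw [if_neg hab]
      obtain ⟨A, hA, hbA, hcA⟩ := hbc
      rw [stepCost_of_mem hA hbA hcA]
      rcases le_total (dist b c) 1 with h1 | h1
      · left
        rw [min_eq_right h1, hab']
        calc stepCost 𝓗 a c ≤ dist a c := stepCost_le_dist 𝓗 a c
          _ ≤ dist a b + dist b c := dist_triangle a b c
      · right
        rw [min_eq_left h1, hab']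
        have := dist_nonneg (x := a) (y := b)
        linarith
    · left
      have hab' : stepCost 𝓗 a b = dist a b := by unfold stepCost; rw [if_neg hab]
      have hbc' : stepCost 𝓗 b c = dist b c := by unfold stepCost; rw [if_neg hbc]
      rw [hab', hbc']
      calc stepCost 𝓗 a c ≤ dist a c := stepCost_le_dist 𝓗 a c
        _ ≤ dist a b + dist b c := dist_triangle a b c

/-- unmergeable ("normalized") chains. -/
def Unm (𝓗 : Set (Set X)) : X → List X → Prop
  | _, [] => True
  | _, [_] => True
  | x, b :: c :: l => ¬(stepCost 𝓗 x c ≤ stepCost 𝓗 x b + stepCost 𝓗 b c) ∧ Unm 𝓗 b (c :: l)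

lemma Unm_length {D : ℝ} (hsep : SeparatedFamily D 𝓗) (hD : 0 < D) :
    ∀ (n : ℕ) (l : List X) (x : X), l.length ≤ n → Unm 𝓗 x l →
      (l.length : ℝ) ≤ 2 * cCost 𝓗 x l + 1 := by
  intro n
  induction n with
  | zero =>
    intro l x hl _
    have : l = [] := List.length_eq_zero_iff.mp (Nat.le_zero.mp hl)
    subst this; simp
  | succ n ih =>
    intro l x hl hu
    match l with
    | [] => simp
    | [b] =>
      have := stepCost_nonneg 𝓗 x b
      simp only [cCost_cons, cCost_nil, List.length_cons, List.length_nil]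
      push_cast
      linarith
    | b :: c :: rest =>
      obtain ⟨hm, hu'⟩ := hu
      have hu'' : Unm 𝓗 c rest := by
        match rest with
        | [] => trivial
        | d :: rest' => exact hu'.2
      have h1 : 1 ≤ stepCost 𝓗 x b + stepCost 𝓗 b c := by
        rcases stepCost_dichotomy hsep hD x b c with h | h
        · exact absurd h hm
        · exact h
      have hlen : rest.length ≤ n := by
        simp only [List.length_cons] at hl
        omega
      have := ih rest c hlen hu''
      simp only [List.length_cons, cCost_cons]
      push_cast
      have hc := cCost_nonneg (𝓗 := 𝓗) c rest
      linarith

lemma not_Unm_merge : ∀ (l : List X) (x : X), ¬ Unm 𝓗 x l →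
    ∃ l₁ b c l₂, l = l₁ ++ b :: c :: l₂ ∧
      stepCost 𝓗 (lastV x l₁) c ≤ stepCost 𝓗 (lastV x l₁) b + stepCost 𝓗 b c := by
  intro l
  induction l with
  | nil => intro x h; exact absurd trivial h
  | cons b t ih =>
    intro x h
    match t, ih with
    | [], _ => exact absurd trivial h
    | c :: rest, ih =>
      by_cases hm : stepCost 𝓗 x c ≤ stepCost 𝓗 x b + stepCost 𝓗 b c
      · exact ⟨[], b, c, rest, rfl, by simpa using hm⟩
      · have : ¬ Unm 𝓗 b (c :: rest) := by
          intro hu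
          exact h ⟨hm, hu⟩
        obtain ⟨l₁, b', c', l₂, heq, hle⟩ := ih b this
        refine ⟨b :: l₁, b', c', l₂, by rw [heq]; rfl, ?_⟩
        rwa [lastV_cons]

lemma exists_unm : ∀ (n : ℕ) (l : List X) (x : X), l.length ≤ n →
    ∃ l', lastV x l' = lastV x l ∧ cCost 𝓗 x l' ≤ cCost 𝓗 x l ∧ Unm 𝓗 x l' := by
  intro n
  induction n with
  | zero =>
    intro l x hl
    have : l = [] := List.length_eq_zero_iff.mp (Nat.le_zero.mp hl)
    subst this
    exact ⟨[], rfl, le_rfl, trivial⟩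
  | succ n ih =>
    intro l x hl
    by_cases hu : Unm 𝓗 x l
    · exact ⟨l, rfl, le_rfl, hu⟩
    · obtain ⟨l₁, b, c, l₂, heq, hle⟩ := not_Unm_merge l x hu
      set v := lastV x l₁ with hv
      have hlen : (l₁ ++ c :: l₂).length ≤ n := by
        subst heq
        simp only [List.length_append, List.length_cons] at hl ⊢
        omega
      obtain ⟨l', h1, h2, h3⟩ := ih (l₁ ++ c :: l₂) x hlen
      refine ⟨l', ?_, ?_, h3⟩
      · rw [h1, heq, lastV_append, lastV_append]
        simp
      · refine h2.trans ?_
        rw [heq, cCost_append, cCost_append]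
        simp only [cCost_cons, ← hv]
        have := cCost_nonneg (𝓗 := 𝓗) c l₂
        linarith

/-- ε-optimal normalized chains: cost close to elDist and few steps. -/
lemma exists_norm_chain {D : ℝ} (hsep : SeparatedFamily D 𝓗) (hD : 0 < D)
    (x y : X) {ε : ℝ} (hε : 0 < ε) :
    ∃ l : List X, lastV x l = y ∧ cCost 𝓗 x l ≤ elDist 𝓗 x y + ε ∧
      (l.length : ℝ) ≤ 2 * (elDist 𝓗 x y + ε) + 1 := by
  obtain ⟨l, hl, hc⟩ := exists_chain (𝓗 := 𝓗) x y hε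
  obtain ⟨l', h1, h2, h3⟩ := exists_unm l.length l x le_rfl
  have hcost : cCost 𝓗 x l' ≤ elDist 𝓗 x y + ε := h2.trans hc.le
  refine ⟨l', by rw [h1, hl], hcost, ?_⟩
  have := Unm_length hsep hD l'.length l' x le_rfl h3
  linarith

/- ## hyperbolic geometry: projection and thinness -/

lemma gromovProd_nonneg (o x y : X) : 0 ≤ gromovProd o x y := by
  unfold gromovProd
  have := dist_triangle x o y
  have h1 := dist_comm x o
  linarith

lemma gromovProd_le_dist (o x y : X) : gromovProd o x y ≤ dist o y := by
  unfold gromovProd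
  have := dist_triangle o x y  -- not what we need; use |d o x − d x y| ≤ ...
  have h2 := dist_triangle o y x
  have h3 := dist_comm y x
  linarith

/-- a geodesic from `a` to `b` passes within `⟨a,b⟩_w + 2δ` of `w`. -/
lemma proj_lemma {δ : ℝ} (hX : DeltaHyperbolic X δ) {a b w : X} {g : ℝ → X}
    (hg : IsGeodesicFrom g a b) :
    ∃ σ ∈ Icc (0:ℝ) (dist a b), dist w (g σ) ≤ gromovProd w a b + 2*δ := by
  obtain ⟨hg0, hg1, hiso⟩ := hg
  set σ := gromovProd a w b with hσdef
  have hσ0 : 0 ≤ σ := gromovProd_nonneg a w b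
  have hσ1 : σ ≤ dist a b := gromovProd_le_dist a w b
  have hmem : σ ∈ Icc (0:ℝ) (dist a b) := ⟨hσ0, hσ1⟩
  have h0mem : (0:ℝ) ∈ Icc (0:ℝ) (dist a b) := ⟨le_rfl, dist_nonneg⟩
  have h1mem : dist a b ∈ Icc (0:ℝ) (dist a b) := ⟨dist_nonneg, le_rfl⟩
  set m := g σ with hm
  have hdam : dist a m = σ := by
    have := hiso σ hmem 0 h0mem
    rw [hg0] at this
    rw [dist_comm a m, hm, this]
    rw [abs_of_nonneg (by linarith)]
    ring
  have hdmb : dist m b = dist a b - σ := by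
    have := hiso σ hmem (dist a b) h1mem
    rw [hg1] at this
    rw [hm, this, abs_of_nonpos (by linarith)]
    ring
  refine ⟨σ, hmem, ?_⟩
  have h4 := hX w a m b
  rw [← hm]
  have e1 : gromovProd w a m = (dist w m + gromovProd w a b)/2 := by
    unfold gromovProd
    rw [hdam, hσdef]
    unfold gromovProd
    have := dist_comm a w
    have := dist_comm w b
    linarith
  have e2 : gromovProd w m b = (dist w m + gromovProd w a b)/2 := by
    unfold gromovProd
    rw [hdmb, hσdef]
    unfold gromovProd
    have := dist_comm a w
    have := dist_comm w b
    linarith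
  rw [e1, e2, min_self] at h4
  linarith

/-- thinness: a point on `[z,z']` is 3δ-close to `[z,v] ∪ [v,z']`. -/
lemma thin_lemma {δ : ℝ} (hX : DeltaHyperbolic X δ) {z z' v w : X} {g g₁ g₂ : ℝ → X}
    (hg : IsGeodesicFrom g z z') (hg₁ : IsGeodesicFrom g₁ z v) (hg₂ : IsGeodesicFrom g₂ v z')
    {τ : ℝ} (hτ : τ ∈ Icc 0 (dist z z')) (hw : w = g τ) :
    (∃ σ ∈ Icc (0:ℝ) (dist z v), dist w (g₁ σ) ≤ 3*δ) ∨
    (∃ σ ∈ Icc (0:ℝ) (dist v z'), dist w (g₂ σ) ≤ 3*δ) := by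
  obtain ⟨hg0, hg1, hiso⟩ := hg
  have h0mem : (0:ℝ) ∈ Icc (0:ℝ) (dist z z') := ⟨le_rfl, dist_nonneg⟩
  have h1mem : dist z z' ∈ Icc (0:ℝ) (dist z z') := ⟨dist_nonneg, le_rfl⟩
  have hdwz : dist w z = τ := by
    have := hiso τ hτ 0 h0mem
    rw [hg0] at this
    rw [hw, this, abs_of_nonneg (by linarith [hτ.1])]
    ring
  have hdwz' : dist w z' = dist z z' - τ := by
    have := hiso τ hτ (dist z z') h1mem
    rw [hg1] at this
    rw [hw, this, abs_of_nonpos (by linarith [hτ.2])]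
    ring
  have hgp0 : gromovProd w z z' = 0 := by
    unfold gromovProd
    rw [hdwz, hdwz']
    ring
  have h4 := hX w z v z'
  rw [hgp0] at h4
  rcases le_total (gromovProd w z v) (gromovProd w v z') with hc | hc
  · rw [min_eq_left hc] at h4
    left
    obtain ⟨σ, hσ, hd⟩ := proj_lemma hX hg₁ (w := w)
    exact ⟨σ, hσ, by linarith⟩
  · rw [min_eq_right hc] at h4
    right
    obtain ⟨σ, hσ, hd⟩ := proj_lemma hX hg₂ (w := w)
    exact ⟨σ, hσ, by linarith⟩

/- ## the logarithmic chain lemma -/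

/-- any point of a geodesic joining the endpoints of an `n`-step chain is within
`3δ·log₂ n` of a geodesic "fill" of one of the steps. -/
lemma log_lemma {δ : ℝ} (hX : DeltaHyperbolic X δ) (hgeo : GeodesicSpace X) (hδ : 0 ≤ δ) :
    ∀ (k : ℕ) (l : List X) (x : X), 1 ≤ l.length → l.length ≤ 2^k →
    ∀ g : ℝ → X, IsGeodesicFrom g x (lastV x l) → ∀ τ ∈ Icc (0:ℝ) (dist x (lastV x l)),
    ∃ l₁ b l₂, l = l₁ ++ b :: l₂ ∧ ∃ f : ℝ → X, IsGeodesicFrom f (lastV x l₁) b ∧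
      ∃ σ ∈ Icc (0:ℝ) (dist (lastV x l₁) b), dist (g τ) (f σ) ≤ 3*δ*k := by
  intro k
  induction k with
  | zero =>
    intro l x h1 h2 g hg τ hτ
    -- l.length = 1
    match l, h1, h2 with
    | [b], _, _ =>
      refine ⟨[], b, [], rfl, g, ?_, τ, ?_, ?_⟩
      · simpa [lastV] using hg
      · simpa [lastV] using hτ
      · simp
  | succ k ih =>
    intro l x h1 h2 g hg τ hτ
    match l, h1, h2 with
    | [b], _, _ =>
      refine ⟨[], b, [], rfl, g, ?_, τ, ?_, ?_⟩
      · simpa [lastV] using hg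
      · simpa [lastV] using hτ
      · simp
        positivity
    | (a :: b :: t), _, h2 =>
      set l : List X := a :: b :: t with hldef
      have hlen2 : 2 ≤ l.length := by simp [hldef]
      set m := l.length / 2 with hm
      have hm1 : 1 ≤ m := by omega
      have hmlt : m < l.length := by omega
      have hpow : (2:ℕ)^(k+1) = 2 * 2^k := by ring
      have htake_len : (l.take m).length = m := by
        rw [List.length_take]
        omega
      have hdrop_len : (l.drop m).length = l.length - m := by
        rw [List.length_drop]
      have htake_le : (l.take m).length ≤ 2^k := by
        rw [htake_len]
        omega
      have hdrop_le : (l.drop m).length ≤ 2^k := by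
        rw [hdrop_len]
        omega
      have htake_ne : 1 ≤ (l.take m).length := by omega
      have hdrop_ne : 1 ≤ (l.drop m).length := by omega
      set v := lastV x (l.take m) with hv
      have hsplit : l.take m ++ l.drop m = l := List.take_append_drop m l
      have hlast_drop : lastV v (l.drop m) = lastV x l := by
        rw [hv, ← lastV_append, hsplit]
      obtain ⟨g₁, hg₁⟩ := hgeo x v
      obtain ⟨g₂, hg₂'⟩ := hgeo v (lastV x l)
      have hg₁' : IsGeodesicFrom g₁ x v := hg₁
      have hg₂'' : IsGeodesicFrom g₂ v (lastV x l) := hg₂'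
      rcases thin_lemma hX hg hg₁' hg₂'' hτ rfl with ⟨σ', hσ', hd⟩ | ⟨σ', hσ', hd⟩
      · -- recurse into take
        obtain ⟨l₁, b', l₂, heq, f, hf, σ, hσ, hdist⟩ :=
          ih (l.take m) x htake_ne htake_le g₁ hg₁' σ' hσ'
        refine ⟨l₁, b', l₂ ++ l.drop m, ?_, f, ?_, σ, hσ, ?_⟩
        · conv_lhs => rw [← hsplit, heq]
          simp [List.append_assoc]
        · exact hf
        · calc dist (g τ) (f σ) ≤ dist (g τ) (g₁ σ') + dist (g₁ σ') (f σ) := dist_triangle _ _ _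
            _ ≤ 3*δ + 3*δ*k := add_le_add hd hdist
            _ = 3*δ*(((k+1 : ℕ)) : ℝ) := by push_cast; ring
      · -- recurse into drop
        obtain ⟨l₁, b', l₂, heq, f, hf, σ, hσ, hdist⟩ :=
          ih (l.drop m) v hdrop_ne hdrop_le g₂ (hlast_drop ▸ hg₂'') σ' (hlast_drop ▸ hσ')
        have hlv : lastV x (l.take m ++ l₁) = lastV v l₁ := by
          rw [lastV_append, ← hv]
        refine ⟨l.take m ++ l₁, b', l₂, ?_, f, ?_, σ, ?_, ?_⟩
        · conv_lhs => rw [← hsplit, heq]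
          simp [List.append_assoc]
        · rw [hlv]; exact hf
        · rw [hlv]; exact hσ
        · calc dist (g τ) (f σ) ≤ dist (g τ) (g₂ σ') + dist (g₂ σ') (f σ) := dist_triangle _ _ _
            _ ≤ 3*δ + 3*δ*k := add_le_add hd hdist
            _ = 3*δ*(((k+1 : ℕ)) : ℝ) := by push_cast; ring

/- ## avoidance machinery -/

lemma lastV_mem (x : X) (l : List X) : lastV x l ∈ x :: l := by
  unfold lastV
  exact List.getLast_mem _

/-- all geodesic fills of the steps of the chain `(x,l)` stay `elDist ≥ r` from `w`. -/
def Avoid (𝓗 : Set (Set X)) (w : X) (r : ℝ) (x : X) (l : List X) : Prop :=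
  ∀ l₁ b l₂, l = l₁ ++ b :: l₂ → ∀ f : ℝ → X, IsGeodesicFrom f (lastV x l₁) b →
    ∀ σ ∈ Icc (0:ℝ) (dist (lastV x l₁) b), r ≤ elDist 𝓗 w (f σ)

lemma avoid_nil (w : X) (r : ℝ) (x : X) : Avoid 𝓗 w r x [] := by
  intro l₁ b l₂ h
  exact absurd h (by simp)

lemma avoid_append {w : X} {r : ℝ} {x : X} {l₁ l₂ : List X}
    (h₁ : Avoid 𝓗 w r x l₁) (h₂ : Avoid 𝓗 w r (lastV x l₁) l₂) :
    Avoid 𝓗 w r x (l₁ ++ l₂) := by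
  intro m₁ b m₂ heq f hf σ hσ
  rcases List.append_eq_append_iff.mp heq with ⟨a', ha1, ha2⟩ | ⟨c', hc1, hc2⟩
  · -- m₁ = l₁ ++ a', l₂ = a' ++ b :: m₂ : pair inside l₂
    have hlv : lastV x m₁ = lastV (lastV x l₁) a' := by rw [ha1, lastV_append]
    rw [hlv] at hf hσ
    exact h₂ a' b m₂ ha2 f hf σ hσ
  · -- l₁ = m₁ ++ c', b :: m₂ = c' ++ l₂
    match c', hc1, hc2 with
    | [], hc1, hc2 =>
      simp only [List.append_nil] at hc1
      simp only [List.nil_append] at hc2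
      have hlv : lastV x m₁ = lastV (lastV x l₁) ([] : List X) := by
        rw [lastV_nil, hc1]
      rw [hlv] at hf hσ
      exact h₂ [] b m₂ hc2.symm f hf σ hσ
    | (b' :: c''), hc1, hc2 =>
      have hb : b' = b := by
        have h := hc2
        simp only [List.cons_append, List.cons.injEq] at h
        exact h.1.symm
      subst hb
      have hm2 : m₂ = c'' ++ l₂ := by
        have h := hc2
        simp only [List.cons_append, List.cons.injEq] at h
        exact h.2
      exact h₁ m₁ b' c'' hc1 f hf σ hσ

/-- producing `Avoid` from vertex lower bounds and a cost bound. -/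
lemma avoid_of_bounds {C : ℝ} (hq : ∀ A ∈ 𝓗, QuasiconvexSubset C A) (hC : 0 ≤ C)
    (w : X) {x : X} {l : List X} {V W r : ℝ}
    (hvert : ∀ v ∈ x :: l, V ≤ elDist 𝓗 w v)
    (hcost : cCost 𝓗 x l ≤ W)
    (hr : r ≤ V - W - C - 2) :
    Avoid 𝓗 w r x l := by
  intro l₁ b l₂ heq f hf σ hσ
  set a := lastV x l₁ with ha
  have hW0 : 0 ≤ W := le_trans (cCost_nonneg x l) hcost
  have haMem : a ∈ x :: l := by
    have hm := lastV_mem x l₁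
    rw [← ha] at hm
    rcases List.mem_cons.mp hm with h | h
    · rw [h]; exact List.mem_cons_self
    · rw [heq]
      exact List.mem_cons_of_mem _ (List.mem_append.mpr (Or.inl h))
  have hstep : stepCost 𝓗 a b ≤ W := by
    have : cCost 𝓗 x l = cCost 𝓗 x l₁ + (stepCost 𝓗 a b + cCost 𝓗 b l₂) := by
      rw [heq, cCost_append]; rfl
    have h1 := cCost_nonneg (𝓗 := 𝓗) x l₁
    have h2 := cCost_nonneg (𝓗 := 𝓗) b l₂
    linarith
  have hVa : V ≤ elDist 𝓗 w a := hvert a haMem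
  have htri : elDist 𝓗 w a ≤ elDist 𝓗 w (f σ) + elDist 𝓗 a (f σ) := by
    have := elDist_triangle 𝓗 w (f σ) a
    rw [elDist_comm 𝓗 (f σ) a] at this
    exact this
  by_cases hH : ∃ A ∈ 𝓗, a ∈ A ∧ b ∈ A
  · obtain ⟨A, hA, haA, hbA⟩ := hH
    have hqc := hq A hA a haA b hbA f hf σ hσ
    have hne : A.Nonempty := ⟨a, haA⟩
    have : infDist (f σ) A < C + 1 := lt_of_le_of_lt hqc (by linarith)
    obtain ⟨p, hpA, hpd⟩ := (infDist_lt_iff hne).mp this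
    have hed : elDist 𝓗 a (f σ) ≤ C + 2 := by
      calc elDist 𝓗 a (f σ) ≤ elDist 𝓗 a p + elDist 𝓗 p (f σ) := elDist_triangle _ _ _ _
        _ ≤ 1 + dist p (f σ) :=
            add_le_add ((elDist_le_stepCost a p).trans (stepCost_le_one_of_mem hA haA hpA))
              (elDist_le_dist p (f σ))
        _ ≤ 1 + (C + 1) := by rw [dist_comm]; linarith
        _ = C + 2 := by ring
    linarith
  · have hstep' : stepCost 𝓗 a b = dist a b := by unfold stepCost; rw [if_neg hH]
    have hdab : dist a b ≤ W := by rw [← hstep']; exact hstep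
    have hdaf : dist a (f σ) ≤ W := by
      obtain ⟨hf0, hf1, hiso⟩ := hf
      have h0mem : (0:ℝ) ∈ Icc (0:ℝ) (dist a b) := ⟨le_rfl, dist_nonneg⟩
      have := hiso 0 h0mem σ hσ
      rw [hf0] at this
      rw [this, abs_of_nonpos (by linarith [hσ.1])]
      linarith [hσ.2]
    have : elDist 𝓗 a (f σ) ≤ W := (elDist_le_dist a (f σ)).trans hdaf
    linarith

/- ## geodesic helpers -/

lemma sub_geodesic {γ : ℝ → X} {x y : X} (hγ : IsGeodesicFrom γ x y) {a b : ℝ}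
    (ha : a ∈ Icc (0:ℝ) (dist x y)) (hb : b ∈ Icc (0:ℝ) (dist x y)) (hab : a ≤ b) :
    IsGeodesicFrom (fun σ => γ (a + σ)) (γ a) (γ b) := by
  obtain ⟨hγ0, hγ1, hiso⟩ := hγ
  have hd : dist (γ a) (γ b) = b - a := by
    rw [hiso a ha b hb, abs_of_nonpos (by linarith)]
    ring
  refine ⟨by simp, by rw [hd]; simp, ?_⟩
  intro s hs t ht
  rw [hd] at hs ht
  have hsm : a + s ∈ Icc (0:ℝ) (dist x y) := by
    constructor
    · linarith [hs.1, ha.1]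
    · linarith [hs.2, hb.2]
  have htm : a + t ∈ Icc (0:ℝ) (dist x y) := by
    constructor
    · linarith [ht.1, ha.1]
    · linarith [ht.2, hb.2]
  rw [hiso (a+s) hsm (a+t) htm]
  congr 1
  ring

lemma geodesic_reverse {γ : ℝ → X} {x y : X} (hγ : IsGeodesicFrom γ x y) :
    IsGeodesicFrom (fun σ => γ (dist x y - σ)) y x := by
  obtain ⟨hγ0, hγ1, hiso⟩ := hγ
  have hdc : dist y x = dist x y := dist_comm y x
  refine ⟨by simp [hγ1], by rw [hdc]; simp [hγ0], ?_⟩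
  intro s hs t ht
  rw [hdc] at hs ht
  have hsm : dist x y - s ∈ Icc (0:ℝ) (dist x y) := ⟨by linarith [hs.2], by linarith [hs.1]⟩
  have htm : dist x y - t ∈ Icc (0:ℝ) (dist x y) := ⟨by linarith [ht.2], by linarith [ht.1]⟩
  rw [hiso _ hsm _ htm]
  rw [show dist x y - s - (dist x y - t) = t - s by ring, abs_sub_comm]

/- ## the crossing lemma -/

/-- electric distance along a geodesic is 1-Lipschitz in the parameter. -/
lemma elDist_param_lipschitz {γ : ℝ → X} {x y : X} (hγ : IsGeodesicFrom γ x y) (w : X)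
    {a b : ℝ} (ha : a ∈ Icc (0:ℝ) (dist x y)) (hb : b ∈ Icc (0:ℝ) (dist x y)) :
    elDist 𝓗 (γ a) w ≤ elDist 𝓗 (γ b) w + |a - b| := by
  have h1 : elDist 𝓗 (γ a) w ≤ elDist 𝓗 (γ a) (γ b) + elDist 𝓗 (γ b) w :=
    elDist_triangle _ _ _ _
  have h2 : elDist 𝓗 (γ a) (γ b) ≤ dist (γ a) (γ b) := elDist_le_dist _ _
  rw [hγ.2.2 a ha b hb] at h2
  linarith

/-- finding the last crossing of level `Θ` of `t' ↦ elDist (γ t') w` before `t*`. -/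
lemma crossing {γ : ℝ → X} {x y : X} (hγ : IsGeodesicFrom γ x y) (w : X) {Θ tstar : ℝ}
    (hΘ : 0 < Θ) (hts : tstar ∈ Icc (0:ℝ) (dist x y)) (hw : γ tstar = w) :
    ∃ tl ∈ Icc (0:ℝ) tstar, elDist 𝓗 (γ tl) w ≤ Θ ∧ (tl = 0 ∨ Θ ≤ elDist 𝓗 (γ tl) w) := by
  classical
  set φ : ℝ → ℝ := fun t' => elDist 𝓗 (γ t') w with hφ
  set S : Set ℝ := {t' ∈ Icc (0:ℝ) tstar | Θ ≤ φ t'} with hS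
  by_cases hne : S.Nonempty
  · -- last crossing
    have hbdd : BddAbove S := ⟨tstar, fun t ht => ht.1.2⟩
    have hlip : ∀ a ∈ Icc (0:ℝ) tstar, ∀ b ∈ Icc (0:ℝ) tstar, φ a ≤ φ b + |a - b| := by
      intro a ha b hb
      have ha' : a ∈ Icc (0:ℝ) (dist x y) := ⟨ha.1, ha.2.trans hts.2⟩
      have hb' : b ∈ Icc (0:ℝ) (dist x y) := ⟨hb.1, hb.2.trans hts.2⟩
      exact elDist_param_lipschitz hγ w ha' hb'
    have habs : ∀ a ∈ Icc (0:ℝ) tstar, ∀ b ∈ Icc (0:ℝ) tstar, |φ a - φ b| ≤ |a - b| := by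
      intro a ha b hb
      rw [abs_sub_le_iff]
      constructor
      · have := hlip a ha b hb
        have h2 := abs_sub_comm a b
        linarith [le_abs_self (a - b)]
      · have := hlip b hb a ha
        rw [abs_sub_comm b a] at this
        linarith [le_abs_self (a - b), neg_abs_le (a - b)]
    have hclosed : IsClosed S := by
      have hcont : ContinuousOn φ (Icc (0:ℝ) tstar) := by
        apply LipschitzOnWith.continuousOn (K := 1)
        apply LipschitzOnWith.of_dist_le_mul
        intro a ha b hb
        rw [Real.dist_eq, Real.dist_eq, NNReal.coe_one, one_mul]
        exact habs a ha b hb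
      have hSeq : S = Icc (0:ℝ) tstar ∩ φ ⁻¹' (Ici Θ) := by
        ext t
        simp only [hS, Set.mem_sep_iff, Set.mem_inter_iff, Set.mem_preimage, Set.mem_Ici]
      rw [hSeq]
      exact hcont.preimage_isClosed_of_isClosed isClosed_Icc isClosed_Ici
    set tl := sSup S with htl
    have hmem : tl ∈ S := hclosed.csSup_mem hne hbdd
    have htl_icc : tl ∈ Icc (0:ℝ) tstar := hmem.1
    refine ⟨tl, htl_icc, ?_, Or.inr hmem.2⟩
    -- φ tl ≤ Θ via right-approach
    have hφts : φ tstar = 0 := by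
      simp only [hφ]
      rw [hw]
      simp
    have htlt : tl < tstar := by
      rcases lt_or_eq_of_le htl_icc.2 with h | h
      · exact h
      · exfalso
        rw [h] at hmem
        have h2 := hmem.2
        rw [hφts] at h2
        linarith
    refine le_of_forall_pos_le_add ?_
    intro ε hε
    set h := min ε (tstar - tl) with hh
    have hh0 : 0 < h := lt_min hε (by linarith)
    have hnotin : tl + h ∉ S := by
      intro hin
      have : tl + h ≤ tl := le_csSup hbdd hin
      linarith
    have hin_icc : tl + h ∈ Icc (0:ℝ) tstar := by
      constructor
      · linarith [htl_icc.1]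
      · have : h ≤ tstar - tl := min_le_right _ _
        linarith
    have hφlt : φ (tl + h) < Θ := by
      by_contra hcon
      push_neg at hcon
      exact hnotin ⟨hin_icc, hcon⟩
    have := hlip tl htl_icc (tl + h) hin_icc
    rw [show |tl - (tl + h)| = h by rw [abs_of_nonpos (by linarith)]; ring] at this
    have hhe : h ≤ ε := min_le_left _ _
    linarith
  · -- no crossing: take 0
    refine ⟨0, ⟨le_rfl, hts.1⟩, ?_, Or.inl rfl⟩
    by_contra hcon
    push_neg at hcon
    exact hne ⟨0, ⟨⟨le_rfl, hts.1⟩, hcon.le⟩⟩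

/- ## arithmetic helpers -/

lemma log_le_two_sqrt {z : ℝ} (hz : 1 ≤ z) : Real.log z ≤ 2 * Real.sqrt z := by
  have hz0 : (0:ℝ) < z := by linarith
  have h1 : Real.log (Real.sqrt z) ≤ Real.sqrt z - 1 :=
    Real.log_le_sub_one_of_pos (Real.sqrt_pos.mpr hz0)
  have h2 : Real.log (Real.sqrt z) = Real.log z / 2 := Real.log_sqrt hz0.le
  have h3 : 0 ≤ Real.sqrt z := Real.sqrt_nonneg z
  linarith

lemma logb_le_three_sqrt {z : ℝ} (hz : 1 ≤ z) : Real.logb 2 z ≤ 3 * Real.sqrt z := by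
  have h1 : Real.log z ≤ 2 * Real.sqrt z := log_le_two_sqrt hz
  have h2 : (0.6931471803 : ℝ) < Real.log 2 := Real.log_two_gt_d9
  have h3 : 0 ≤ Real.log z := Real.log_nonneg hz
  have h4 : 0 ≤ Real.sqrt z := Real.sqrt_nonneg z
  rw [Real.logb, div_le_iff₀ (by linarith)]
  nlinarith

lemma nat_log_le_logb {n : ℕ} (hn : 1 ≤ n) : (Nat.log 2 n : ℝ) ≤ Real.logb 2 n := by
  have h1 : (2:ℕ) ^ Nat.log 2 n ≤ n := Nat.pow_log_le_self 2 (by omega)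
  have h2 : ((2:ℝ)) ^ (Nat.log 2 n) ≤ (n:ℝ) := by exact_mod_cast h1
  have h3 : (0.6931471803 : ℝ) < Real.log 2 := Real.log_two_gt_d9
  have h4 : Real.log ((2:ℝ) ^ (Nat.log 2 n)) ≤ Real.log n := by
    apply Real.log_le_log (by positivity) h2
  rw [Real.log_pow] at h4
  rw [Real.logb, le_div_iff₀ (by linarith)]
  exact h4

/- ## the tracking constants -/

noncomputable def trackE (C P : ℝ) : ℝ := 14 + (4*P+3)*(P*(5*P+2*C+36)+1)

noncomputable def trackA (δ C P : ℝ) : ℝ := 9*δ*Real.sqrt (trackE C P)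

noncomputable def trackR (δ C P : ℝ) : ℝ :=
  max (4*(trackA δ C P)^2 + 1) (2*(3*δ+4*P+C+7))

lemma trackE_ge_one {C P : ℝ} (hC : 0 ≤ C) (hP : 0 < P) : 1 ≤ trackE C P := by
  unfold trackE
  nlinarith [mul_nonneg hP.le hC, sq_nonneg P, mul_nonneg (mul_nonneg hP.le hP.le) hC,
    mul_nonneg hP.le (mul_nonneg hP.le hC)]

lemma trackA_nonneg {δ C P : ℝ} (hδ : 0 ≤ δ) : 0 ≤ trackA δ C P := by
  unfold trackA
  positivity

lemma trackR_ge_one {δ C P : ℝ} (hδ : 0 ≤ δ) : 1 ≤ trackR δ C P := by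
  unfold trackR
  have : (1:ℝ) ≤ 4*(trackA δ C P)^2 + 1 := by nlinarith [sq_nonneg (trackA δ C P)]
  exact this.trans (le_max_left _ _)

lemma N_bound {C P ρ q m ln : ℝ} (hP : 0 < P) (hC : 0 ≤ C) (hρ : 0 ≤ ρ) (hq0 : 0 ≤ q)
    (hlen : ln ≤ (2*(ρ+2)+1) + m*(4*P+3) + (2*(ρ+2)+1))
    (hm : m ≤ q + 1)
    (hqb : q ≤ P*((2*ρ+4+2*(3*ρ + 2*P + C + 12)) + P)) :
    ln ≤ trackE C P * (ρ + 1) := by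
  have hP43 : (0:ℝ) ≤ 4*P+3 := by linarith
  have h1 : m*(4*P+3) ≤ (q+1)*(4*P+3) := mul_le_mul_of_nonneg_right hm hP43
  have h2 : (q+1)*(4*P+3) ≤ (P*(8*ρ+5*P+2*C+28)+1)*(4*P+3) := by
    apply mul_le_mul_of_nonneg_right _ hP43
    nlinarith [hqb]
  have h3 : P*(8*ρ+5*P+2*C+28)+1 ≤ (P*(5*P+2*C+36)+1)*(ρ+1) := by
    nlinarith [mul_nonneg hP.le hρ, mul_nonneg (mul_nonneg hP.le hP.le) hρ,
      mul_nonneg hP.le (mul_nonneg hC hρ), mul_nonneg hP.le hC,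
      mul_nonneg hP.le hP.le]
  have h4 : (P*(8*ρ+5*P+2*C+28)+1)*(4*P+3) ≤ ((P*(5*P+2*C+36)+1)*(ρ+1))*(4*P+3) :=
    mul_le_mul_of_nonneg_right h3 hP43
  unfold trackE
  nlinarith [hlen, h1, h2, h4, hρ]

lemma final_quadratic {a b ρ : ℝ} (ha : 0 ≤ a) (hρ : 0 ≤ ρ)
    (hineq : ρ + 1 ≤ a * Real.sqrt (ρ+1) + b)
    (ha1 : 4*a^2 + 1 < ρ) (hb1 : 2*b < ρ) : False := by
  set z := Real.sqrt (ρ+1) with hz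
  have hz2 : z^2 = ρ + 1 := Real.sq_sqrt (by linarith)
  have hz0 : 0 ≤ z := Real.sqrt_nonneg _
  have hzpos : 0 < z := by nlinarith
  have hzgt : 2*a < z := by nlinarith [sq_nonneg (2*a - z), sq_nonneg (2*a + z)]
  nlinarith [mul_lt_mul_of_pos_right hzgt hzpos]

/- ## the main tracking lemma -/

set_option maxHeartbeats 2000000 in
lemma tracking {δ C D P : ℝ} (hδ : 0 ≤ δ) (hC : 0 ≤ C) (hD : 0 < D) (hP : 0 < P)
    (hgeo : GeodesicSpace X) (hX : DeltaHyperbolic X δ)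
    (hq : ∀ A ∈ 𝓗, QuasiconvexSubset C A) (hsep : SeparatedFamily D 𝓗)
    {x y : X} {L : ℝ} {β γ : ℝ → X} (hL : 0 ≤ L) (hβ0 : β 0 = x) (hβL : β L = y)
    (hqg : ElQuasigeodesicOn 𝓗 P (Icc 0 L) β) (hγ : IsGeodesicFrom γ x y) :
    ∀ t ∈ Icc (0:ℝ) (dist x y), ∃ u ∈ Icc (0:ℝ) L,
      elDist 𝓗 (γ t) (β u) ≤ trackR δ C P + 1 := by
  classical
  set T := dist x y with hT
  have hT0 : 0 ≤ T := dist_nonneg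
  set Fs : ℝ → Set ℝ := fun t => (fun u => elDist 𝓗 (γ t) (β u)) '' (Icc 0 L) with hFs
  set F : ℝ → ℝ := fun t => sInf (Fs t) with hF
  have hFne : ∀ t, (Fs t).Nonempty := fun t => ⟨_, ⟨0, ⟨le_rfl, hL⟩, rfl⟩⟩
  have hFbdd : ∀ t, BddBelow (Fs t) := by
    intro t
    refine ⟨0, ?_⟩
    rintro d ⟨u, hu, rfl⟩
    exact elDist_nonneg 𝓗 _ _
  have hFle : ∀ t, ∀ u ∈ Icc (0:ℝ) L, F t ≤ elDist 𝓗 (γ t) (β u) := by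
    intro t u hu
    exact csInf_le (hFbdd t) ⟨u, hu, rfl⟩
  have hγiso := hγ.2.2
  have hγ0 : γ 0 = x := hγ.1
  have hγT : γ T = y := hγ.2.1
  have hFleT : ∀ t ∈ Icc (0:ℝ) T, F t ≤ T := by
    intro t ht
    have h1 := hFle t 0 ⟨le_rfl, hL⟩
    have h2 : elDist 𝓗 (γ t) (β 0) ≤ dist (γ t) (γ 0) := by
      rw [hβ0, ← hγ0]
      exact elDist_le_dist _ _
    rw [hγiso t ht 0 ⟨le_rfl, hT0⟩, abs_of_nonneg (by linarith [ht.1] : (0:ℝ) ≤ t - 0)] at h2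
    have := ht.2
    linarith
  have himgne : (F '' Icc 0 T).Nonempty := ⟨F 0, 0, ⟨le_rfl, hT0⟩, rfl⟩
  have himgbdd : BddAbove (F '' Icc 0 T) := by
    refine ⟨T, ?_⟩
    rintro d ⟨t, ht, rfl⟩
    exact hFleT t ht
  set ρ := sSup (F '' Icc 0 T) with hρ
  have hρF : ∀ t ∈ Icc (0:ℝ) T, F t ≤ ρ := fun t ht => le_csSup himgbdd ⟨t, ht, rfl⟩
  have hρ0 : 0 ≤ ρ := by
    have h1 : 0 ≤ F 0 :=
      le_csInf (hFne 0) (by rintro d ⟨u, hu, rfl⟩; exact elDist_nonneg 𝓗 _ _)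
    exact h1.trans (hρF 0 ⟨le_rfl, hT0⟩)
  have hmain : ρ ≤ trackR δ C P := by
    obtain ⟨d, ⟨ts, hts, rfl⟩, hdlt⟩ :=
      exists_lt_of_lt_csSup himgne (show ρ - 1 < ρ by linarith)
    set w := γ ts with hw
    have hwd : ∀ u ∈ Icc (0:ℝ) L, ρ - 1 ≤ elDist 𝓗 w (β u) := by
      intro u hu
      exact le_trans hdlt.le (hFle ts u hu)
    set Θ := 3*ρ + 2*P + C + 12 with hΘ
    have hΘpos : 0 < Θ := by rw [hΘ]; linarith
    set r := ρ - 4*P - C - 6 with hr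
    -- left crossing
    obtain ⟨tl, htl, hφl, hdisjl⟩ := crossing (𝓗 := 𝓗) hγ w hΘpos hts (by rw [hw])
    -- right crossing
    have hγ' : IsGeodesicFrom (fun σ => γ (dist x y - σ)) y x := geodesic_reverse hγ
    have hdyx : dist y x = T := by rw [dist_comm, hT]
    have hts' : T - ts ∈ Icc (0:ℝ) (dist y x) := by
      rw [hdyx]
      exact ⟨by linarith [hts.2], by linarith [hts.1]⟩
    have hwrev : (fun σ => γ (dist x y - σ)) (T - ts) = w := by
      simp only []
      rw [hw, ← hT]
      congr 1
      ring
    obtain ⟨tl', htl', hφr', hdisjr'⟩ := crossing (𝓗 := 𝓗) hγ' w hΘpos hts' hwrev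
    set tr := T - tl' with htr
    have htr_mem : tr ∈ Icc ts T := by
      constructor
      · rw [htr]; linarith [htl'.2]
      · rw [htr]; linarith [htl'.1]
    have hγ'tl' : (fun σ => γ (dist x y - σ)) tl' = γ tr := by
      simp only []
      rfl
    have hφr : elDist 𝓗 (γ tr) w ≤ Θ := by rw [← hγ'tl']; exact hφr'
    have hdisjr : tr = T ∨ Θ ≤ elDist 𝓗 (γ tr) w := by
      rcases hdisjr' with h0 | hΘr
      · left; rw [htr, h0]; ring
      · right; rw [← hγ'tl']; exact hΘr
    set wl := γ tl with hwl
    set wr := γ tr with hwr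
    -- left connector bundle
    have hleft : ∃ ul ∈ Icc (0:ℝ) L, ∃ cle : List X, lastV wl cle = β ul ∧
        ((cle.length : ℝ) ≤ 2*(ρ+2)+1) ∧ Avoid 𝓗 w r wl cle ∧
        elDist 𝓗 wl (β ul) ≤ ρ + 2 := by
      rcases hdisjl with h0 | hΘl
      · refine ⟨0, ⟨le_rfl, hL⟩, [], ?_, by simp; linarith, avoid_nil w r wl, ?_⟩
        · rw [lastV_nil, hwl, h0, hγ0, hβ0]
        · rw [hwl, h0, hγ0, hβ0]
          simp
          linarith
      · have htlT : tl ∈ Icc (0:ℝ) T := ⟨htl.1, htl.2.trans hts.2⟩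
        have hFtl : F tl ≤ ρ := hρF tl htlT
        obtain ⟨d, ⟨ul, hul, rfl⟩, hdl⟩ :=
          exists_lt_of_csInf_lt (hFne tl) (show F tl < ρ + 1 by linarith)
        obtain ⟨cle, hcl_last, hcl_cost, hcl_len⟩ :=
          exists_norm_chain hsep hD wl (β ul) one_pos
        have hedwl : elDist 𝓗 wl (β ul) < ρ + 1 := by rw [hwl]; exact hdl
        have hcost2 : cCost 𝓗 wl cle ≤ ρ + 2 := by linarith
        refine ⟨ul, hul, cle, hcl_last, by linarith, ?_, by linarith⟩
        apply avoid_of_bounds hq hC w (V := Θ - (ρ+2)) (W := ρ+2)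
        · intro v hv
          have h1 : elDist 𝓗 wl v ≤ ρ + 2 := (elDist_start_le wl cle v hv).trans hcost2
          have h2 : Θ ≤ elDist 𝓗 wl w := by rw [hwl]; exact hΘl
          have h3 : elDist 𝓗 wl w ≤ elDist 𝓗 wl v + elDist 𝓗 v w := elDist_triangle 𝓗 _ _ _
          have h4 : elDist 𝓗 v w = elDist 𝓗 w v := elDist_comm 𝓗 _ _
          linarith
        · exact hcost2
        · rw [hr, hΘ]; linarith
    -- right connector bundle
    have hright : ∃ ur ∈ Icc (0:ℝ) L, ∃ cre : List X, lastV (β ur) cre = wr ∧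
        ((cre.length : ℝ) ≤ 2*(ρ+2)+1) ∧ Avoid 𝓗 w r (β ur) cre ∧
        elDist 𝓗 wr (β ur) ≤ ρ + 2 := by
      rcases hdisjr with h0 | hΘr
      · refine ⟨L, ⟨hL, le_rfl⟩, [], ?_, by simp; linarith, avoid_nil w r (β L), ?_⟩
        · rw [lastV_nil, hwr, h0, hγT, hβL]
        · rw [hwr, h0, hγT, hβL]
          simp
          linarith
      · have htrT : tr ∈ Icc (0:ℝ) T := ⟨hts.1.trans htr_mem.1, htr_mem.2⟩
        have hFtr : F tr ≤ ρ := hρF tr htrT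
        obtain ⟨d, ⟨ur, hur, rfl⟩, hdr⟩ :=
          exists_lt_of_csInf_lt (hFne tr) (show F tr < ρ + 1 by linarith)
        obtain ⟨cre, hcr_last, hcr_cost, hcr_len⟩ :=
          exists_norm_chain hsep hD (β ur) wr one_pos
        have hedwr : elDist 𝓗 wr (β ur) < ρ + 1 := by rw [hwr]; exact hdr
        have hedwr' : elDist 𝓗 (β ur) wr < ρ + 1 := by
          rw [elDist_comm 𝓗 (β ur) wr]; exact hedwr
        have hcost2 : cCost 𝓗 (β ur) cre ≤ ρ + 2 := by linarith
        refine ⟨ur, hur, cre, hcr_last, by linarith, ?_, by linarith⟩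
        apply avoid_of_bounds hq hC w (V := Θ - (ρ+2)) (W := ρ+2)
        · intro v hv
          have h1 : elDist 𝓗 v wr ≤ ρ + 2 := by
            have := elDist_end_le (𝓗 := 𝓗) (β ur) cre v hv
            rw [hcr_last] at this
            exact this.trans hcost2
          have h2 : Θ ≤ elDist 𝓗 wr w := by rw [hwr]; exact hΘr
          have h3 : elDist 𝓗 wr w ≤ elDist 𝓗 wr v + elDist 𝓗 v w := elDist_triangle 𝓗 _ _ _
          have h4 : elDist 𝓗 v w = elDist 𝓗 w v := elDist_comm 𝓗 _ _
          have h5 : elDist 𝓗 wr v = elDist 𝓗 v wr := elDist_comm 𝓗 _ _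
          linarith
        · exact hcost2
        · rw [hr, hΘ]; linarith
    obtain ⟨ul, hul, cle, hcl_last, hcl_len, hcl_avoid, hedl⟩ := hleft
    obtain ⟨ur, hur, cre, hcr_last, hcr_len, hcr_avoid, hedr⟩ := hright
    set q := |ur - ul| with hqdef
    have hq0 : 0 ≤ q := abs_nonneg _
    have hQ : elDist 𝓗 (β ul) (β ur) ≤ 2*ρ + 4 + 2*Θ := by
      have h1 : elDist 𝓗 (β ul) wl = elDist 𝓗 wl (β ul) := elDist_comm 𝓗 _ _
      have h2 : elDist 𝓗 wl w ≤ Θ := by rw [hwl]; exact hφl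
      have h4 : elDist 𝓗 w wr ≤ Θ := by
        rw [elDist_comm 𝓗 w wr, hwr]; exact hφr
      have t1 : elDist 𝓗 (β ul) (β ur) ≤ elDist 𝓗 (β ul) wl + elDist 𝓗 wl (β ur) :=
        elDist_triangle 𝓗 _ _ _
      have t2 : elDist 𝓗 wl (β ur) ≤ elDist 𝓗 wl w + elDist 𝓗 w (β ur) :=
        elDist_triangle 𝓗 _ _ _
      have t3 : elDist 𝓗 w (β ur) ≤ elDist 𝓗 w wr + elDist 𝓗 wr (β ur) :=
        elDist_triangle 𝓗 _ _ _
      linarith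
    have hqbound : q ≤ P*((2*ρ+4+2*Θ) + P) := by
      have hlow := (hqg ul hul ur hur).1
      have habs : |ul - ur| = q := by rw [hqdef, abs_sub_comm]
      rw [habs] at hlow
      have h2 : (1/P)*q ≤ (2*ρ+4+2*Θ) + P := by linarith
      calc q = P * ((1/P)*q) := by field_simp
        _ ≤ P * ((2*ρ+4+2*Θ) + P) := mul_le_mul_of_nonneg_left h2 hP.le
    set m := ⌈q⌉₊ with hm
    have hmq : (m:ℝ) ≤ q + 1 := (Nat.ceil_lt_add_one hq0).le
    have hqm : q ≤ (m:ℝ) := Nat.le_ceil q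
    have hbeta : ∃ bp : List X, lastV (β ul) bp = β ur ∧ Avoid 𝓗 w r (β ul) bp ∧
        (bp.length : ℝ) ≤ (m:ℝ) * (4*P+3) := by
      rcases Nat.eq_zero_or_pos m with hm0 | hm1
      · have hq00 : q = 0 := by
          have : (m:ℝ) = 0 := by exact_mod_cast congrArg (Nat.cast : ℕ → ℝ) hm0
          linarith [hqm, hq0, this ▸ hqm]
        have hulur : ur = ul := by
          have := abs_eq_zero.mp (hqdef ▸ hq00)
          linarith
        refine ⟨[], by rw [lastV_nil, hulur], avoid_nil w r _, ?_⟩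
        simp
        positivity
      · set mu : ℕ → ℝ := fun j => ul + (j:ℝ)/(m:ℝ) * (ur - ul) with hmu
        have hmR : (0:ℝ) < m := by exact_mod_cast hm1
        have hmu_mem : ∀ j, j ≤ m → mu j ∈ Icc (0:ℝ) L := by
          intro j hj
          have hθ0 : 0 ≤ (j:ℝ)/(m:ℝ) := by positivity
          have hθ1 : (j:ℝ)/(m:ℝ) ≤ 1 := by
            rw [div_le_one hmR]
            exact_mod_cast hj
          have e1 : mu j = (1 - (j:ℝ)/(m:ℝ)) * ul + ((j:ℝ)/(m:ℝ)) * ur := by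
            rw [hmu]; ring
        
          constructor
          · rw [e1]
            nlinarith [hul.1, hur.1]
          · rw [e1]
            nlinarith [hul.2, hur.2]
        have hmu_step : ∀ j : ℕ, |mu (j+1) - mu j| = q / m := by
          intro j
          have e1 : mu (j+1) - mu j = (ur - ul)/(m:ℝ) := by
            rw [hmu]
            push_cast
            field_simp
            ring
          rw [e1, abs_div, abs_of_pos hmR, hqdef]
        have hsted : ∀ j, j < m → elDist 𝓗 (β (mu j)) (β (mu (j+1))) ≤ 2*P := by
          intro j hj
          have h1 := (hqg (mu j) (hmu_mem j hj.le) (mu (j+1)) (hmu_mem (j+1) hj)).2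
          have h2 : |mu j - mu (j+1)| = q / m := by
            rw [abs_sub_comm]; exact hmu_step j
          rw [h2] at h1
          have h3 : q / m ≤ 1 := by rw [div_le_one hmR]; exact hqm
          nlinarith
        have hchains : ∀ j, j < m → ∃ lj, lastV (β (mu j)) lj = β (mu (j+1)) ∧
            Avoid 𝓗 w r (β (mu j)) lj ∧ (lj.length:ℝ) ≤ 4*P+3 := by
          intro j hj
          obtain ⟨lj, hlast, hcost, hlen⟩ :=
            exists_norm_chain hsep hD (β (mu j)) (β (mu (j+1))) one_pos
          have hcost' : cCost 𝓗 (β (mu j)) lj ≤ 2*P + 1 := by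
            have := hsted j hj
            linarith
          refine ⟨lj, hlast, ?_, by linarith [hsted j hj]⟩
          apply avoid_of_bounds hq hC w (V := ρ - 1 - (2*P+1)) (W := 2*P+1)
          · intro v hv
            have h1 : elDist 𝓗 (β (mu j)) v ≤ 2*P+1 :=
              (elDist_start_le _ lj v hv).trans hcost'
            have h2 : ρ - 1 ≤ elDist 𝓗 w (β (mu j)) := hwd (mu j) (hmu_mem j hj.le)
            have h3 : elDist 𝓗 w (β (mu j)) ≤ elDist 𝓗 w v + elDist 𝓗 v (β (mu j)) :=
              elDist_triangle 𝓗 _ _ _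
            have h4 : elDist 𝓗 v (β (mu j)) = elDist 𝓗 (β (mu j)) v := elDist_comm 𝓗 _ _
            linarith
          · exact hcost'
          · rw [hr]; linarith
        have hconcat : ∀ j, j ≤ m → ∃ bp, lastV (β (mu 0)) bp = β (mu j) ∧
            Avoid 𝓗 w r (β (mu 0)) bp ∧ (bp.length:ℝ) ≤ (j:ℝ)*(4*P+3) := by
          intro j
          induction j with
          | zero =>
            intro _
            refine ⟨[], rfl, avoid_nil w r _, ?_⟩
            simp
          | succ j ih =>
            intro hj
            obtain ⟨bp, h1, h2, h3⟩ := ih (by omega)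
            obtain ⟨lj, hl1, hl2, hl3⟩ := hchains j (by omega)
            refine ⟨bp ++ lj, ?_, ?_, ?_⟩
            · rw [lastV_append, h1, hl1]
            · exact avoid_append h2 (by rw [h1]; exact hl2)
            · rw [List.length_append]
              push_cast
              nlinarith
        obtain ⟨bp, h1, h2, h3⟩ := hconcat m le_rfl
        have hmu0 : mu 0 = ul := by rw [hmu]; simp
        have hmum : mu m = ur := by
          rw [hmu]
          field_simp
          ring
        rw [hmu0, hmum] at h1
        rw [hmu0] at h2
        exact ⟨bp, h1, h2, h3⟩
    obtain ⟨bp, hbp_last, hbp_avoid, hbp_len⟩ := hbeta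
    set ζ := cle ++ (bp ++ cre) with hζ
    have hζ_last : lastV wl ζ = wr := by
      rw [hζ, lastV_append, hcl_last, lastV_append, hbp_last, hcr_last]
    have hζ_avoid : Avoid 𝓗 w r wl ζ := by
      apply avoid_append hcl_avoid
      rw [hcl_last]
      apply avoid_append hbp_avoid
      rw [hbp_last]
      exact hcr_avoid
    have hζ_len : (ζ.length : ℝ) ≤ (2*(ρ+2)+1) + (m:ℝ)*(4*P+3) + (2*(ρ+2)+1) := by
      rw [hζ]
      simp only [List.length_append]
      push_cast
      linarith
    have htlT : tl ∈ Icc (0:ℝ) T := ⟨htl.1, htl.2.trans hts.2⟩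
    have htrT : tr ∈ Icc (0:ℝ) T := ⟨hts.1.trans htr_mem.1, htr_mem.2⟩
    have htltr : tl ≤ tr := htl.2.trans htr_mem.1
    have hgs : IsGeodesicFrom (fun σ => γ (tl + σ)) wl wr := sub_geodesic hγ htlT htrT htltr
    have hdlr : dist wl wr = tr - tl := by
      rw [hwl, hwr, hγiso tl htlT tr htrT, abs_of_nonpos (by linarith)]
      ring
    set τ := ts - tl with hτdef
    have hτ : τ ∈ Icc (0:ℝ) (dist wl wr) := by
      rw [hdlr]
      exact ⟨by rw [hτdef]; linarith [htl.2], by rw [hτdef]; linarith [htr_mem.1]⟩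
    have hgsτ : (fun σ => γ (tl + σ)) τ = w := by
      simp only []
      rw [hw]
      congr 1
      rw [hτdef]
      ring
    rcases Nat.eq_zero_or_pos ζ.length with hn0 | hn1
    · -- degenerate case: the whole detour is trivial, so w is a β-point
      have hζnil : ζ = [] := List.length_eq_zero_iff.mp hn0
      rw [hζ] at hζnil
      have hcl0 : cle = [] := (List.append_eq_nil_iff.mp hζnil).1
      have hrest : bp ++ cre = [] := (List.append_eq_nil_iff.mp hζnil).2
      have hbp0 : bp = [] := (List.append_eq_nil_iff.mp hrest).1
      have hcr0 : cre = [] := (List.append_eq_nil_iff.mp hrest).2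
      have h1 : wl = β ul := by rw [← hcl_last, hcl0, lastV_nil]
      have h2 : β ul = β ur := by rw [← hbp_last, hbp0, lastV_nil]
      have h3 : β ur = wr := by rw [← hcr_last, hcr0, lastV_nil]
      have h4 : dist wl wr = 0 := by rw [h1, h2, h3, dist_self]
      have h5 : tr = tl := by rw [hdlr] at h4; linarith
      have h6 : ts = tl := by
        have := htr_mem.1
        rw [h5] at this
        linarith [htl.2]
      have h7 : w = β ul := by rw [hw, h6, ← hwl, h1]
      have h8 := hwd ul hul
      rw [h7] at h8
      simp at h8
      linarith [trackR_ge_one (C := C) (P := P) hδ]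
    · -- main case: apply the log lemma
      set k := Nat.log 2 ζ.length + 1 with hk
      have hpow : ζ.length ≤ 2^k := (Nat.lt_pow_succ_log_self (by norm_num) _).le
      have hg' : IsGeodesicFrom (fun σ => γ (tl + σ)) wl (lastV wl ζ) := by
        rw [hζ_last]; exact hgs
      have hτ' : τ ∈ Icc (0:ℝ) (dist wl (lastV wl ζ)) := by
        rw [hζ_last]; exact hτ
      obtain ⟨l₁, b, l₂, heq, f, hf, σ, hσ, hdist⟩ :=
        log_lemma hX hgeo hδ k ζ wl hn1 hpow _ hg' τ hτ'
      have havoid := hζ_avoid l₁ b l₂ heq f hf σ hσ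
      have hed : elDist 𝓗 w (f σ) ≤ 3*δ*(k:ℝ) := by
        calc elDist 𝓗 w (f σ) ≤ dist w (f σ) := elDist_le_dist _ _
          _ = dist ((fun σ => γ (tl + σ)) τ) (f σ) := by rw [hgsτ]
          _ ≤ 3*δ*(k:ℝ) := hdist
      have hkey : r ≤ 3*δ*(k:ℝ) := le_trans havoid hed
      set N := trackE C P * (ρ + 1) with hN
      have hE1 : 1 ≤ trackE C P := trackE_ge_one hC hP
      have hN1 : 1 ≤ N := by
        rw [hN]
        nlinarith
      have hnN : (ζ.length : ℝ) ≤ N := by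
        rw [hN]
        rw [hΘ] at hqbound
        exact N_bound hP hC hρ0 hq0 hζ_len hmq hqbound
      have hζpos : (1:ℝ) ≤ (ζ.length : ℝ) := by exact_mod_cast hn1
      have hlogk : (k:ℝ) ≤ Real.logb 2 N + 1 := by
        rw [hk]
        push_cast
        have h1 : (Nat.log 2 ζ.length : ℝ) ≤ Real.logb 2 ζ.length := nat_log_le_logb hn1
        have h2 : Real.logb 2 (ζ.length : ℝ) ≤ Real.logb 2 N :=
          Real.logb_le_logb_of_le (by norm_num) (by linarith) hnN
        linarith
      have hsqrtN : Real.logb 2 N ≤ 3 * (Real.sqrt (trackE C P) * Real.sqrt (ρ+1)) := by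
        have h1 := logb_le_three_sqrt hN1
        rw [hN, Real.sqrt_mul (by linarith : (0:ℝ) ≤ trackE C P)] at h1
        exact h1
      have hfinal : ρ + 1 ≤ trackA δ C P * Real.sqrt (ρ+1) + (3*δ + 4*P + C + 7) := by
        have h3 : 3*δ*(k:ℝ) ≤ 3*δ*(Real.logb 2 N + 1) :=
          mul_le_mul_of_nonneg_left hlogk (by linarith)
        have h4 : 3*δ*(Real.logb 2 N + 1) ≤
            3*δ*(3 * (Real.sqrt (trackE C P) * Real.sqrt (ρ+1)) + 1) :=
          mul_le_mul_of_nonneg_left (by linarith) (by linarith)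
        rw [hr] at hkey
        unfold trackA
        linarith [hkey, h3, h4]
      by_contra hcon
      push_neg at hcon
      have hA := trackA_nonneg (δ := δ) (C := C) (P := P) hδ
      have hb1 : 2*(3*δ+4*P+C+7) < ρ := lt_of_le_of_lt (le_max_right _ _) hcon
      have ha1 : 4*(trackA δ C P)^2 + 1 < ρ := lt_of_le_of_lt (le_max_left _ _) hcon
      exact final_quadratic hA hρ0 hfinal ha1 hb1
  intro t ht
  have h1 : F t < trackR δ C P + 1 :=
    lt_of_le_of_lt (le_trans (hρF t ht) hmain) (by linarith)
  obtain ⟨d, ⟨u, hu, rfl⟩, hlt⟩ := exists_lt_of_csInf_lt (hFne t) h1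
  exact ⟨u, hu, hlt.le⟩

end ElTrack

open ElTrack

set_option maxHeartbeats 1000000 in
/-- electric quasigeodesics electrically track hyperbolic geodesics:
any electric P-quasigeodesic from x to y lies in a K-neighborhood (in the electric
metric) of the hyperbolic geodesic from x to y, where K = K(δ,C,D,P). -/
theorem electric_quasigeodesics_track_hyperbolic_geodesics
    (δ C D P : ℝ) (hδ : 0 ≤ δ) (hC : 0 ≤ C) (hD : 0 < D) (hP : 0 < P) :
    ∃ K : ℝ, 0 < K ∧
      ∀ (X : Type) [MetricSpace X], GeodesicSpace X → DeltaHyperbolic X δ →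
        ∀ 𝓗 : Set (Set X), (∀ A ∈ 𝓗, QuasiconvexSubset C A) → SeparatedFamily D 𝓗 →
          ∀ (x y : X) (L : ℝ) (β γ : ℝ → X), 0 ≤ L →
            β 0 = x → β L = y → ElQuasigeodesicOn 𝓗 P (Icc 0 L) β →
            IsGeodesicFrom γ x y →
            ∀ s ∈ Icc (0:ℝ) L,
              ∃ t ∈ Icc (0:ℝ) (dist x y), elDist 𝓗 (β s) (γ t) ≤ K := by
  classical
  set R := trackR δ C P + 1 with hR
  have hR1 : 1 ≤ R := by
    have := trackR_ge_one (δ := δ) (C := C) (P := P) hδ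
    rw [hR]; linarith
  have hKpos : 0 < P*(P*(2*R+2+P)) + P + R + 1 := by
    have h1 : (0:ℝ) ≤ 2*R+2+P := by linarith
    have h2 : 0 ≤ P*(P*(2*R+2+P)) := mul_nonneg hP.le (mul_nonneg hP.le h1)
    linarith
  refine ⟨P*(P*(2*R+2+P)) + P + R + 1, hKpos, ?_⟩
  intro X _ hgeo hX 𝓗 hq hsep x y L β γ hL hβ0 hβL hqg hγ s hs
  set T := dist x y with hT
  have hT0 : 0 ≤ T := dist_nonneg
  have htrack := tracking hδ hC hD hP hgeo hX hq hsep hL hβ0 hβL hqg hγ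
  have hγiso := hγ.2.2
  -- the two half-inf functions
  set G1 : ℝ → Set ℝ := fun t => (fun u => elDist 𝓗 (β u) (γ t)) '' (Icc 0 s) with hG1
  set G2 : ℝ → Set ℝ := fun t => (fun u => elDist 𝓗 (β u) (γ t)) '' (Icc s L) with hG2
  set g1 : ℝ → ℝ := fun t => sInf (G1 t) with hg1
  set g2 : ℝ → ℝ := fun t => sInf (G2 t) with hg2
  have hG1ne : ∀ t, (G1 t).Nonempty := fun t => ⟨_, ⟨0, ⟨le_rfl, hs.1⟩, rfl⟩⟩
  have hG2ne : ∀ t, (G2 t).Nonempty := fun t => ⟨_, ⟨s, ⟨le_rfl, hs.2⟩, rfl⟩⟩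
  have hG1bdd : ∀ t, BddBelow (G1 t) := by
    intro t; refine ⟨0, ?_⟩; rintro d ⟨u, hu, rfl⟩; exact elDist_nonneg 𝓗 _ _
  have hG2bdd : ∀ t, BddBelow (G2 t) := by
    intro t; refine ⟨0, ?_⟩; rintro d ⟨u, hu, rfl⟩; exact elDist_nonneg 𝓗 _ _
  -- Lipschitz bounds
  have hlip1 : ∀ a ∈ Icc (0:ℝ) T, ∀ b ∈ Icc (0:ℝ) T, g1 a ≤ g1 b + |a - b| := by
    intro a ha b hb
    have key : g1 a - |a - b| ≤ sInf (G1 b) := by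
      refine le_csInf (hG1ne b) ?_
      rintro d ⟨u, hu, rfl⟩
      have h1 : g1 a ≤ elDist 𝓗 (β u) (γ a) := csInf_le (hG1bdd a) ⟨u, hu, rfl⟩
      have h2 : elDist 𝓗 (β u) (γ a) ≤ elDist 𝓗 (β u) (γ b) + elDist 𝓗 (γ b) (γ a) :=
        elDist_triangle 𝓗 _ _ _
      have h3 : elDist 𝓗 (γ b) (γ a) ≤ |a - b| := by
        have := elDist_le_dist (𝓗 := 𝓗) (γ b) (γ a)
        rw [hγiso b hb a ha, abs_sub_comm] at this
        exact this
      linarith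
    have hgb : sInf (G1 b) = g1 b := rfl
    rw [hgb] at key
    linarith
  have hlip2 : ∀ a ∈ Icc (0:ℝ) T, ∀ b ∈ Icc (0:ℝ) T, g2 a ≤ g2 b + |a - b| := by
    intro a ha b hb
    have key : g2 a - |a - b| ≤ sInf (G2 b) := by
      refine le_csInf (hG2ne b) ?_
      rintro d ⟨u, hu, rfl⟩
      have h1 : g2 a ≤ elDist 𝓗 (β u) (γ a) := csInf_le (hG2bdd a) ⟨u, hu, rfl⟩
      have h2 : elDist 𝓗 (β u) (γ a) ≤ elDist 𝓗 (β u) (γ b) + elDist 𝓗 (γ b) (γ a) :=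
        elDist_triangle 𝓗 _ _ _
      have h3 : elDist 𝓗 (γ b) (γ a) ≤ |a - b| := by
        have := elDist_le_dist (𝓗 := 𝓗) (γ b) (γ a)
        rw [hγiso b hb a ha, abs_sub_comm] at this
        exact this
      linarith
    have hgb : sInf (G2 b) = g2 b := rfl
    rw [hgb] at key
    linarith
  have hcont1 : ContinuousOn g1 (Icc (0:ℝ) T) := by
    apply LipschitzOnWith.continuousOn (K := 1)
    apply LipschitzOnWith.of_dist_le_mul
    intro a ha b hb
    rw [Real.dist_eq, Real.dist_eq, NNReal.coe_one, one_mul, abs_sub_le_iff]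
    constructor
    · linarith [hlip1 a ha b hb, le_abs_self (a - b)]
    · have := hlip1 b hb a ha
      rw [abs_sub_comm b a] at this
      linarith
  have hcont2 : ContinuousOn g2 (Icc (0:ℝ) T) := by
    apply LipschitzOnWith.continuousOn (K := 1)
    apply LipschitzOnWith.of_dist_le_mul
    intro a ha b hb
    rw [Real.dist_eq, Real.dist_eq, NNReal.coe_one, one_mul, abs_sub_le_iff]
    constructor
    · linarith [hlip2 a ha b hb, le_abs_self (a - b)]
    · have := hlip2 b hb a ha
      rw [abs_sub_comm b a] at this
      linarith
  -- the closed cover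
  set S1 : Set ℝ := Icc (0:ℝ) T ∩ g1 ⁻¹' (Iic R) with hS1
  set S2 : Set ℝ := Icc (0:ℝ) T ∩ g2 ⁻¹' (Iic R) with hS2
  have hS1closed : IsClosed S1 :=
    hcont1.preimage_isClosed_of_isClosed isClosed_Icc isClosed_Iic
  have hS2closed : IsClosed S2 :=
    hcont2.preimage_isClosed_of_isClosed isClosed_Icc isClosed_Iic
  have hcover : Icc (0:ℝ) T ⊆ S1 ∪ S2 := by
    intro t ht
    obtain ⟨u, hu, hed⟩ := htrack t ht
    have hed' : elDist 𝓗 (β u) (γ t) ≤ R := by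
      rw [elDist_comm 𝓗 (β u) (γ t)]
      exact hed
    rcases le_total u s with h | h
    · left
      refine ⟨ht, ?_⟩
      have : g1 t ≤ elDist 𝓗 (β u) (γ t) := csInf_le (hG1bdd t) ⟨u, ⟨hu.1, h⟩, rfl⟩
      simp only [Set.mem_preimage, Set.mem_Iic]
      linarith
    · right
      refine ⟨ht, ?_⟩
      have : g2 t ≤ elDist 𝓗 (β u) (γ t) := csInf_le (hG2bdd t) ⟨u, ⟨h, hu.2⟩, rfl⟩
      simp only [Set.mem_preimage, Set.mem_Iic]
      linarith
  have h0mem : (0:ℝ) ∈ Icc (0:ℝ) T ∩ S1 := by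
    refine ⟨⟨le_rfl, hT0⟩, ⟨le_rfl, hT0⟩, ?_⟩
    have h1 : g1 0 ≤ elDist 𝓗 (β 0) (γ 0) := csInf_le (hG1bdd 0) ⟨0, ⟨le_rfl, hs.1⟩, rfl⟩
    have h2 : elDist 𝓗 (β 0) (γ 0) = 0 := by
      rw [hβ0, hγ.1]
      simp
    simp only [Set.mem_preimage, Set.mem_Iic]
    linarith
  have hTmem : T ∈ Icc (0:ℝ) T ∩ S2 := by
    refine ⟨⟨hT0, le_rfl⟩, ⟨hT0, le_rfl⟩, ?_⟩
    have h1 : g2 T ≤ elDist 𝓗 (β L) (γ T) := csInf_le (hG2bdd T) ⟨L, ⟨hs.2, le_rfl⟩, rfl⟩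
    have h2 : elDist 𝓗 (β L) (γ T) = 0 := by
      rw [hβL, hγ.2.1]
      simp
    simp only [Set.mem_preimage, Set.mem_Iic]
    linarith
  have hconn : IsPreconnected (Icc (0:ℝ) T) := isPreconnected_Icc
  obtain ⟨td, htd⟩ := (isPreconnected_closed_iff.mp hconn) S1 S2 hS1closed hS2closed hcover
    ⟨0, h0mem⟩ ⟨T, hTmem⟩
  obtain ⟨htdT, htd1, htd2⟩ := htd
  -- extract u₁, u₂
  have hg1td : g1 td ≤ R := htd1.2
  have hg2td : g2 td ≤ R := htd2.2
  obtain ⟨d1, ⟨u1, hu1, rfl⟩, hd1⟩ :=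
    exists_lt_of_csInf_lt (hG1ne td) (show g1 td < R + 1 by linarith)
  obtain ⟨d2, ⟨u2, hu2, rfl⟩, hd2⟩ :=
    exists_lt_of_csInf_lt (hG2ne td) (show g2 td < R + 1 by linarith)
  -- finish
  have hu1L : u1 ∈ Icc (0:ℝ) L := ⟨hu1.1, hu1.2.trans hs.2⟩
  have hu2L : u2 ∈ Icc (0:ℝ) L := ⟨hs.1.trans hu2.1, hu2.2⟩
  have hed12 : elDist 𝓗 (β u1) (β u2) ≤ 2*R + 2 := by
    have h1 : elDist 𝓗 (β u1) (β u2) ≤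
        elDist 𝓗 (β u1) (γ td) + elDist 𝓗 (γ td) (β u2) := elDist_triangle 𝓗 _ _ _
    have h2 : elDist 𝓗 (γ td) (β u2) = elDist 𝓗 (β u2) (γ td) := elDist_comm 𝓗 _ _
    linarith
  have hqlow := (hqg u1 hu1L u2 hu2L).1
  have habs : |u1 - u2| = u2 - u1 := by
    rw [abs_of_nonpos (by linarith [hu1.2, hu2.1])]
    ring
  rw [habs] at hqlow
  have hdiff : u2 - u1 ≤ P*(2*R+2+P) := by
    have h2 : (1/P)*(u2-u1) ≤ 2*R+2 + P := by linarith
    calc u2 - u1 = P * ((1/P)*(u2-u1)) := by field_simp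
      _ ≤ P * (2*R+2+P) := mul_le_mul_of_nonneg_left h2 hP.le
  have hsdiff : s - u1 ≤ P*(2*R+2+P) := by linarith [hu2.1]
  have hqup := (hqg s hs u1 hu1L).2
  have habs2 : |s - u1| = s - u1 := abs_of_nonneg (by linarith [hu1.2])
  rw [habs2] at hqup
  refine ⟨td, htdT, ?_⟩
  have hfin : elDist 𝓗 (β s) (γ td) ≤ elDist 𝓗 (β s) (β u1) + elDist 𝓗 (β u1) (γ td) :=
    elDist_triangle 𝓗 _ _ _
  have hm := mul_le_mul_of_nonneg_left hsdiff hP.le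
  linarith
end

section
/- Let Z be a δ-hyperbolic geodesic metric space, B ⊂ Z with coarse Lipschitz retraction Π : Z → B with constant C, and suppose B = B⁻ ∪ B⁺, B⁻ ∩ B⁺ = r, where for all K₀ there is K₁ such that any p ∈ B⁻, q ∈ B⁺ with d(p,q) ≤ K₀ are within K₁ of a common point of r. Then there exists C₁ ≥ 0 such that for all u ∈ B⁻ and v ∈ B⁺, any geodesic in Z from u to v passes through the C₁-neighborhood of r. -/
open Metric Set

/-- Elementary lower bound for the Gromov product. -/
lemma gromovProd_ge {Z : Type*} [MetricSpace Z] (x p q : Z) :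
    min (dist x p) (dist x q) - dist p q / 2 ≤ gromovProd x p q := by
  have h1 := min_le_left (dist x p) (dist x q)
  have h2 := min_le_right (dist x p) (dist x q)
  unfold gromovProd
  linarith

/-- Chain lemma: along a chain of at most `2^K` hops, some hop has Gromov product
(at the basepoint `x`) at most `K·δ` more than the Gromov product of the endpoints. -/
lemma chain_gromov {Z : Type*} [MetricSpace Z] {δ : ℝ} (hδ : 0 ≤ δ)
    (hhyp : DeltaHyperbolic Z δ) (x : Z) :
    ∀ (K n : ℕ), 1 ≤ n → n ≤ 2 ^ K → ∀ y : ℕ → Z,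
      ∃ i < n, gromovProd x (y i) (y (i + 1)) ≤ gromovProd x (y 0) (y n) + K * δ := by
  intro K
  induction K with
  | zero =>
    intro n h1 h2 y
    have hn : n = 1 := le_antisymm h2 h1
    subst hn
    exact ⟨0, Nat.zero_lt_one, by norm_num⟩
  | succ K ih =>
    intro n h1 h2 y
    have hKcast : ((K : ℝ)) * δ ≤ ((K + 1 : ℕ) : ℝ) * δ := by
      push_cast; nlinarith
    by_cases hn : n ≤ 2 ^ K
    · obtain ⟨i, hi, hle⟩ := ih n h1 hn y
      exact ⟨i, hi, hle.trans (by linarith)⟩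
    · push_neg at hn
      have h2' : n ≤ 2 * 2 ^ K := by
        have : (2:ℕ) ^ (K + 1) = 2 * 2 ^ K := by ring
        omega
      have hK1 : 1 ≤ 2 ^ K := Nat.one_le_two_pow
      set m := n / 2 with hm
      have hm1 : 1 ≤ m := by omega
      have hmn : m < n := by omega
      have hmK : m ≤ 2 ^ K := by omega
      have hnmK : n - m ≤ 2 ^ K := by omega
      have hnm1 : 1 ≤ n - m := by omega
      have hmin := hhyp x (y 0) (y m) (y n)
      rcases min_le_iff.mp hmin with h | h
      · obtain ⟨i, hi, hle⟩ := ih m hm1 hmK y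
        refine ⟨i, lt_trans hi hmn, ?_⟩
        push_cast
        push_cast at hle
        linarith
      · obtain ⟨i, hi, hle⟩ := ih (n - m) hnm1 hnmK (fun j => y (m + j))
        refine ⟨m + i, by omega, ?_⟩
        have e1 : m + (n - m) = n := by omega
        have e2 : m + (i + 1) = m + i + 1 := by omega
        have e3 : m + 0 = m := by omega
        rw [e1, e2, e3] at hle
        push_cast
        push_cast at hle
        linarith

set_option maxHeartbeats 1000000 in
/-- Quasiconvexity of a coarse Lipschitz retract in a hyperbolic geodesic space. -/
lemma retract_quasiconvex {Z : Type*} [MetricSpace Z] (δ C : ℝ) (hδ : 0 ≤ δ) (hC : 0 < C)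
    (hgeo : GeodesicSpace Z) (hhyp : DeltaHyperbolic Z δ)
    (B : Set Z) (hBne : B.Nonempty) (P : Z → Z)
    (hPmem : ∀ x : Z, P x ∈ B) (hPid : ∀ x ∈ B, P x = x)
    (hPlip : ∀ x y : Z, dist (P x) (P y) ≤ C * dist x y + C) :
    ∃ Q : ℝ, 0 ≤ Q ∧ ∀ u ∈ B, ∀ v ∈ B, ∀ f : ℝ → Z, IsGeodesicFrom f u v →
      ∀ t ∈ Icc (0:ℝ) (dist u v), infDist (f t) B ≤ Q := by
  obtain ⟨K, hK⟩ := pow_unbounded_of_one_lt (4 * C) (by norm_num : (1:ℝ) < 2)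
  refine ⟨C + 3 + 2 * ((K:ℝ) + 2) * δ, by positivity, ?_⟩
  intro u hu v hv f hf t ht
  obtain ⟨hf0, hfD, hfiso⟩ := hf
  set D := dist u v with hD
  have hD0 : 0 ≤ D := dist_nonneg
  have hmem0 : (0:ℝ) ∈ Icc 0 D := by constructor <;> simp [hD0]
  set S := (fun t => infDist (f t) B) '' Icc 0 D with hS
  have hSne : S.Nonempty := ⟨_, ⟨0, hmem0, rfl⟩⟩
  have hSbdd : BddAbove S := by
    refine ⟨D, ?_⟩
    rintro _ ⟨t', ht', rfl⟩
    calc infDist (f t') B ≤ dist (f t') u := infDist_le_dist_of_mem hu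
      _ = |t' - 0| := by rw [← hf0]; exact hfiso t' ht' 0 hmem0
      _ ≤ D := by rw [abs_of_nonneg (by linarith [ht'.1])]; linarith [ht'.2]
  set s := sSup S with hs
  suffices hsQ : s ≤ C + 3 + 2 * ((K:ℝ) + 2) * δ by
    exact le_trans (le_csSup hSbdd ⟨t, ht, rfl⟩) hsQ
  by_cases hs1 : s ≤ 1
  · have h2 : (0:ℝ) ≤ 2 * ((K:ℝ) + 2) * δ := by positivity
    linarith
  push_neg at hs1
  have hs0 : (0:ℝ) < s := by linarith
  obtain ⟨_, ⟨t₀, ht₀, rfl⟩, hρ⟩ := exists_lt_of_lt_csSup hSne (show s - 1 < s by linarith)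
  set x := f t₀ with hx
  have hxB : ∀ w ∈ B, s - 1 ≤ dist x w := fun w hw =>
    le_trans (le_of_lt hρ) (infDist_le_dist_of_mem hw)
  set α := max 0 (t₀ - s) with hα
  set β := min D (t₀ + s) with hβ
  have hαI : α ∈ Icc (0:ℝ) D := ⟨le_max_left _ _, max_le hD0 (by linarith [ht₀.2])⟩
  have hβI : β ∈ Icc (0:ℝ) D := ⟨le_min hD0 (by linarith [ht₀.1]), min_le_left _ _⟩
  have hαt : α ≤ t₀ := max_le ht₀.1 (by linarith)
  have hβt : t₀ ≤ β := le_min ht₀.2 (by linarith)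
  set a := f α with ha
  set b := f β with hb
  have hdxa : dist x a = t₀ - α := by
    rw [hfiso t₀ ht₀ α hαI, abs_of_nonneg (by linarith)]
  have hdxb : dist x b = β - t₀ := by
    rw [hfiso t₀ ht₀ β hβI, abs_of_nonpos (by linarith)]; ring
  have hdab : dist a b = β - α := by
    rw [hfiso α hαI β hβI, abs_of_nonpos (by linarith)]; ring
  have gp0 : gromovProd x a b = 0 := by
    unfold gromovProd; rw [hdxa, hdxb, hdab]; ring
  have hxa : s - 1 ≤ dist x a := by
    rcases le_or_gt (t₀ - s) 0 with h | h
    · have hα0 : α = 0 := max_eq_left h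
      have hau : a = u := by rw [ha, hα0, hf0]
      rw [hau]; exact hxB u hu
    · have hα' : α = t₀ - s := max_eq_right (le_of_lt h)
      rw [hdxa, hα']; linarith
  have hxb : s - 1 ≤ dist x b := by
    rcases le_or_gt D (t₀ + s) with h | h
    · have hβ0 : β = D := min_eq_left h
      have hbv : b = v := by rw [hb, hβ0, hD, hfD]
      rw [hbv]; exact hxB v hv
    · have hβ' : β = t₀ + s := min_eq_right (le_of_lt h)
      rw [hdxb, hβ']; linarith
  have hdxa' : dist x a ≤ s := by
    rw [hdxa]; have := le_max_right 0 (t₀ - s); linarith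
  have hdxb' : dist x b ≤ s := by
    rw [hdxb]; have := min_le_right D (t₀ + s); linarith
  -- anchors in B near a and b
  have hainf : infDist a B ≤ s := le_csSup hSbdd ⟨α, hαI, rfl⟩
  have hbinf : infDist b B ≤ s := le_csSup hSbdd ⟨β, hβI, rfl⟩
  obtain ⟨a', ha'B, haa'⟩ := (infDist_lt_iff hBne).mp (lt_of_le_of_lt hainf (lt_add_one s))
  obtain ⟨b', hb'B, hbb'⟩ := (infDist_lt_iff hBne).mp (lt_of_le_of_lt hbinf (lt_add_one s))
  obtain ⟨g, hg0, hgL, hgiso⟩ := hgeo a' b'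
  set L := dist a' b' with hL
  have hL0 : 0 ≤ L := dist_nonneg
  have hLle : L ≤ 4 * s + 2 := by
    have h4 : L ≤ dist a' a + dist a b + dist b b' := dist_triangle4 a' a b b'
    have hc1 : dist a' a = dist a a' := dist_comm _ _
    have hab : dist a b ≤ 2 * s := by
      rw [hdab]
      have h5 := le_max_right 0 (t₀ - s)
      have h6 := min_le_right D (t₀ + s)
      linarith
    linarith
  set M := (2:ℕ) ^ K with hM
  have hM1 : 1 ≤ M := Nat.one_le_two_pow
  have hM0 : (0:ℝ) < (M:ℝ) := by exact_mod_cast Nat.pos_of_ne_zero (by omega)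
  have hMR : 4 * C < (M:ℝ) := by rw [hM]; push_cast; exact hK
  set y : ℕ → Z :=
    fun j => if j = 0 then a else if j ≤ M + 1 then P (g (((j - 1 : ℕ) : ℝ) * L / M)) else b
    with hy
  have hpow : M + 2 ≤ 2 ^ (K + 2) := by
    have : (2:ℕ) ^ (K + 2) = M * 4 := by rw [hM, pow_add]; ring
    omega
  obtain ⟨i, hi, hile⟩ := chain_gromov hδ hhyp x (K + 2) (M + 2) (by omega) hpow y
  have hy0 : y 0 = a := by simp [hy]
  have hyn : y (M + 2) = b := by
    simp only [hy]
    rw [if_neg (by omega), if_neg (by omega)]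
  -- the middle points of the chain lie in B
  have hyB : ∀ j, 1 ≤ j → j ≤ M + 1 → y j ∈ B := by
    intro j h1 h2
    simp only [hy]
    rw [if_neg (by omega), if_pos h2]
    exact hPmem _
  have hy1 : y 1 = a' := by
    simp only [hy]
    rw [if_neg (by omega), if_pos (by omega)]
    norm_num
    rw [hg0]
    exact hPid a' ha'B
  have hyM1 : y (M + 1) = b' := by
    simp only [hy]
    rw [if_neg (by omega), if_pos (by omega)]
    have e : ((M + 1 - 1 : ℕ) : ℝ) * L / M = L := by
      have : (M + 1 - 1 : ℕ) = M := by omega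
      rw [this]
      field_simp
    rw [e, hgL]
    exact hPid b' hb'B
  -- lower bound for every hop of the chain
  have hlow : (s - 3 - C) / 2 ≤ gromovProd x (y i) (y (i + 1)) := by
    by_cases hi0 : i = 0
    · subst hi0
      have h1 := gromovProd_ge x (y 0) (y 1)
      rw [hy0, hy1] at h1 ⊢
      have hmin : s - 1 ≤ min (dist x a) (dist x a') := le_min hxa (hxB a' ha'B)
      linarith
    · by_cases hiM : i = M + 1
      · subst hiM
        have h1 := gromovProd_ge x (y (M + 1)) (y (M + 1 + 1))
        have e : M + 1 + 1 = M + 2 := by omega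
        rw [e, hyM1, hyn] at h1 ⊢
        have hmin : s - 1 ≤ min (dist x b') (dist x b) := le_min (hxB b' hb'B) hxb
        have hcomm : dist b' b = dist b b' := dist_comm _ _
        linarith
      · -- middle hop: 1 ≤ i ≤ M
        have h1i : 1 ≤ i := by omega
        have hiM' : i ≤ M := by omega
        obtain ⟨c₁, hc₁⟩ : ∃ c : ℝ, c = ((i - 1 : ℕ) : ℝ) * L / M := ⟨_, rfl⟩
        obtain ⟨c₂, hc₂⟩ : ∃ c : ℝ, c = ((i : ℕ) : ℝ) * L / M := ⟨_, rfl⟩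
        have hyi : y i = P (g c₁) := by
          simp only [hy]; rw [if_neg (by omega), if_pos (by omega), ← hc₁]
        have hyi1 : y (i + 1) = P (g c₂) := by
          simp only [hy]; rw [if_neg (by omega), if_pos (by omega)]
          have e : (i + 1 - 1 : ℕ) = i := by omega
          rw [e, ← hc₂]
        have hc₁I : c₁ ∈ Icc (0:ℝ) L := by
          rw [hc₁]
          constructor
          · exact div_nonneg (mul_nonneg (Nat.cast_nonneg _) hL0) (le_of_lt hM0)
          · rw [div_le_iff₀ hM0]
            have hcast : ((i - 1 : ℕ) : ℝ) ≤ (M : ℝ) := by exact_mod_cast (by omega : i - 1 ≤ M)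
            nlinarith
        have hc₂I : c₂ ∈ Icc (0:ℝ) L := by
          rw [hc₂]
          constructor
          · exact div_nonneg (mul_nonneg (Nat.cast_nonneg _) hL0) (le_of_lt hM0)
          · rw [div_le_iff₀ hM0]
            have hcast : ((i : ℕ) : ℝ) ≤ (M : ℝ) := by exact_mod_cast hiM'
            nlinarith
        have hgap : dist (y i) (y (i + 1)) ≤ s + 1 + C := by
          rw [hyi, hyi1]
          have h2 := hPlip (g c₁) (g c₂)
          have h3 : dist (g c₁) (g c₂) = L / M := by
            rw [hgiso c₁ hc₁I c₂ hc₂I]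
            have e : c₁ - c₂ = -(L / M) := by
              rw [hc₁, hc₂]
              have e2 : ((i - 1 : ℕ) : ℝ) = (i : ℝ) - 1 := by
                push_cast [Nat.cast_sub h1i]; ring
              rw [e2]
              field_simp
              ring
            rw [e, abs_neg, abs_of_nonneg (div_nonneg hL0 (le_of_lt hM0))]
          have h4 : C * (L / M) ≤ s + 1 := by
            rw [mul_div_assoc', div_le_iff₀ hM0]
            nlinarith [mul_le_mul_of_nonneg_left hLle (le_of_lt hC),
              mul_lt_mul_of_pos_right hMR (show (0:ℝ) < s + 1 by linarith)]
          rw [h3] at h2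
          linarith
        have hmin : s - 1 ≤ min (dist x (y i)) (dist x (y (i + 1))) := by
          refine le_min (hxB _ ?_) (hxB _ ?_)
          · exact hyB i h1i (by omega)
          · exact hyB (i + 1) (by omega) (by omega)
        have h1 := gromovProd_ge x (y i) (y (i + 1))
        linarith
  rw [hy0, hyn, gp0] at hile
  push_cast at hile
  linarith

/-- Theorem 5.5, the ray coarsely separates the ladder: with
`B = B⁻ ∪ B⁺ ⊆ Z`, `B⁻ ∩ B⁺ = r`, a coarse `C`-Lipschitz retraction `P : Z → B` in a
δ-hyperbolic geodesic space `Z`, and the property that any `K₀`-close pair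
`p ∈ B⁻, q ∈ B⁺` lies within some `K₁(K₀)` of a common point of `r`, there is `C₁ ≥ 0`
such that every geodesic of `Z` from a point of `B⁻` to a point of `B⁺` passes through
the `C₁`-neighborhood of `r`. -/
theorem geodesics_between_halves_pass_near_ray
    {Z : Type*} [MetricSpace Z] (δ C : ℝ) (hδ : 0 ≤ δ) (hC : 0 < C)
    (hgeo : GeodesicSpace Z) (hhyp : DeltaHyperbolic Z δ)
    (B Bm Bp r : Set Z) (hB : B = Bm ∪ Bp) (hr : Bm ∩ Bp = r) (hrne : r.Nonempty)
    (P : Z → Z)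
    (hPmem : ∀ x : Z, P x ∈ B) (hPid : ∀ x ∈ B, P x = x)
    (hPlip : ∀ x y : Z, dist (P x) (P y) ≤ C * dist x y + C)
    (hclose : ∀ K₀ : ℝ, 0 ≤ K₀ → ∃ K₁ : ℝ, 0 ≤ K₁ ∧
      ∀ p ∈ Bm, ∀ q ∈ Bp, dist p q ≤ K₀ →
        ∃ z ∈ r, dist p z ≤ K₁ ∧ dist q z ≤ K₁) :
    ∃ C₁ : ℝ, 0 ≤ C₁ ∧
      ∀ u ∈ Bm, ∀ v ∈ Bp, ∀ f : ℝ → Z, IsGeodesicFrom f u v →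
        ∃ t ∈ Icc (0:ℝ) (dist u v), Metric.infDist (f t) r ≤ C₁ := by
  obtain ⟨z₀, hz₀⟩ := hrne
  have hz₀' : z₀ ∈ Bm ∩ Bp := by rw [hr]; exact hz₀
  have hBmne : Bm.Nonempty := ⟨z₀, hz₀'.1⟩
  have hBpne : Bp.Nonempty := ⟨z₀, hz₀'.2⟩
  have hBne : B.Nonempty := ⟨z₀, by rw [hB]; exact Or.inl hz₀'.1⟩
  obtain ⟨Q, hQ0, hQ⟩ := retract_quasiconvex δ C hδ hC hgeo hhyp B hBne P hPmem hPid hPlip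
  obtain ⟨K₁, hK₁0, hK₁⟩ := hclose (2 * Q + 2) (by linarith)
  refine ⟨Q + 1 + K₁, by linarith, ?_⟩
  intro u hu v hv f hf
  set D := dist u v with hD
  have hD0 : 0 ≤ D := dist_nonneg
  have hfc : ContinuousOn f (Icc 0 D) := by
    have hlip : LipschitzOnWith 1 f (Icc 0 D) := by
      apply LipschitzOnWith.of_dist_le_mul
      intro p hp q hq
      rw [hf.2.2 p hp q hq, Real.dist_eq]
      norm_num
    exact hlip.continuousOn
  set φ : ℝ → ℝ := fun t => infDist (f t) Bm - infDist (f t) Bp with hφ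
  have hφc : ContinuousOn φ (Icc 0 D) :=
    ((continuous_infDist_pt Bm).comp_continuousOn hfc).sub
      ((continuous_infDist_pt Bp).comp_continuousOn hfc)
  have h0m : φ 0 ≤ 0 := by
    simp only [hφ, hf.1, infDist_zero_of_mem hu]
    have := infDist_nonneg (x := u) (s := Bp)
    linarith
  have h0p : 0 ≤ φ D := by
    simp only [hφ, hD]
    rw [hf.2.1, infDist_zero_of_mem hv]
    have := infDist_nonneg (x := v) (s := Bm)
    linarith
  obtain ⟨t₁, ht₁, hφt⟩ := intermediate_value_Icc hD0 hφc ⟨h0m, h0p⟩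
  have heq : infDist (f t₁) Bm = infDist (f t₁) Bp := by
    simp only [hφ] at hφt
    linarith
  have hminle : infDist (f t₁) Bm ≤ infDist (f t₁) B := by
    by_contra hcon
    push_neg at hcon
    obtain ⟨w, hw, hwd⟩ := (infDist_lt_iff hBne).mp hcon
    rw [hB] at hw
    rcases hw with hw' | hw'
    · exact absurd hwd (not_lt.mpr (infDist_le_dist_of_mem hw'))
    · have h2 := infDist_le_dist_of_mem (x := f t₁) hw'
      rw [← heq] at h2
      linarith
  have hle : infDist (f t₁) Bm ≤ Q := by
    refine hminle.trans (hQ u ?_ v ?_ f hf t₁ ht₁)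
    · rw [hB]; exact Or.inl hu
    · rw [hB]; exact Or.inr hv
  obtain ⟨p, hp, hpd⟩ := (infDist_lt_iff hBmne).mp (lt_of_le_of_lt hle (lt_add_one Q))
  obtain ⟨q, hq, hqd⟩ := (infDist_lt_iff hBpne).mp
    (lt_of_le_of_lt (heq ▸ hle) (lt_add_one Q))
  have hpq : dist p q ≤ 2 * Q + 2 := by
    have h3 := dist_triangle p (f t₁) q
    rw [dist_comm p (f t₁)] at h3
    linarith
  obtain ⟨z, hz, hpz, _⟩ := hK₁ p hp q hq hpq
  refine ⟨t₁, ht₁, ?_⟩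
  calc infDist (f t₁) r ≤ dist (f t₁) z := infDist_le_dist_of_mem hz
    _ ≤ dist (f t₁) p + dist p z := dist_triangle _ _ _
    _ ≤ Q + 1 + K₁ := by linarith
end
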